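/- arXiv:2311.14623 — 10 statements merged into one kernel-verified Lean document; each statement's English description precedes it below -/
import Mathlib

section
/- Let n be a natural number and let a, b be integers with gcd(a,b) = 1, a + b ≠ 0, and a + b ≠ ±1. Define B(2n,2,a,b) = ∑_{k=0}^{2n} (C(2n,k))^2 · a^{2n-k} · b^k. Then B(2n,2,a,b) ≠ 0, and the largest natural number e such that (a+b)^e divides B(2n,2,a,b) is equal to the largest natural number e such that (a+b)^e divides the central binomial coefficient C(2n,n). -/
open Finset Polynomial

lemma coeff_linear_pow (a b : ℤ) (m j : ℕ) :
    ((C a + C b * X) ^ m).coeff j =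
      if j ≤ m then a ^ (m - j) * b ^ j * (m.choose j) else 0 := by
  rw [add_pow]
  rw [Polynomial.finset_sum_coeff]
  have hterm : ∀ k ∈ range (m+1),
      ((C a) ^ k * (C b * X) ^ (m - k) * (m.choose k : ℤ[X])).coeff j
        = if m - k = j then a ^ k * b ^ (m-k) * (m.choose k) else 0 := by
    intro k hk
    rw [mul_pow, ← C_pow, ← C_pow, ← C_eq_natCast]
    rw [show C (a^k) * (C (b^(m-k)) * X^(m-k)) * C ((m.choose k : ℤ))
        = C (a^k * b^(m-k) * (m.choose k : ℤ)) * X^(m-k) by rw [C_mul, C_mul]; ring]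
    rw [coeff_C_mul, coeff_X_pow]
    by_cases h : j = m - k <;> simp [h, eq_comm]
  rw [Finset.sum_congr rfl hterm]
  by_cases hj : j ≤ m
  · rw [Finset.sum_eq_single (m - j)]
    · simp [Nat.sub_sub_self hj, Nat.choose_symm hj, hj]
    · intro k hk hne
      rw [if_neg]
      simp only [mem_range, Nat.lt_succ_iff] at hk
      omega
    · intro h
      exact absurd (Finset.mem_range.2 (Nat.lt_succ_of_le (Nat.sub_le m j))) h
  · rw [if_neg hj, Finset.sum_eq_zero]
    intro k hk
    rw [if_neg]
    simp only [mem_range, Nat.lt_succ_iff] at hk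
    omega

lemma coeff_quad_pow (a b : ℤ) (m j : ℕ) :
    ((C a + C b * X ^ 2) ^ m).coeff j =
      if 2 ∣ j then (if j / 2 ≤ m then a ^ (m - j/2) * b ^ (j/2) * (m.choose (j/2)) else 0)
      else 0 := by
  have h : (C a + C b * X ^ 2) ^ m = Polynomial.expand ℤ 2 ((C a + C b * X) ^ m) := by
    rw [map_pow, map_add, map_mul, Polynomial.expand_C, Polynomial.expand_C,
      Polynomial.expand_X]
  rw [h, Polynomial.coeff_expand (by norm_num)]
  by_cases h2 : 2 ∣ j
  · rw [if_pos h2, if_pos h2, coeff_linear_pow]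
  · rw [if_neg h2, if_neg h2]

lemma sum_even_reindex (n : ℕ) (f : ℕ → ℤ) :
    ∑ i ∈ range (2*n+1), (if 2 ∣ i then f i else 0) = ∑ k ∈ range (n+1), f (2*k) := by
  have h1 : ∑ k ∈ range (n+1), f (2*k) = ∑ i ∈ (range (n+1)).image (2*·), f i :=
    (Finset.sum_image (by intros x _ y _ h; omega)).symm
  have hsub : (range (n+1)).image (2*·) ⊆ range (2*n+1) := by
    intro i hi
    simp only [Finset.mem_image, mem_range] at hi ⊢
    obtain ⟨k, hk, rfl⟩ := hi
    omega
  rw [h1]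
  have h2 : ∑ i ∈ (range (n+1)).image (2*·), f i
      = ∑ i ∈ (range (n+1)).image (2*·), (if 2 ∣ i then f i else 0) := by
    apply Finset.sum_congr rfl
    intro i hi
    simp only [Finset.mem_image] at hi
    obtain ⟨k, _, rfl⟩ := hi
    simp [Dvd.intro k rfl]
  rw [h2]
  apply (Finset.sum_subset hsub ?_).symm
  intro i hi hni
  rw [if_neg]
  intro ⟨k, hk⟩
  apply hni
  simp only [Finset.mem_image, mem_range] at hi ⊢
  exact ⟨k, by omega, by omega⟩

lemma main_identity (n : ℕ) (a b : ℤ) :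
    (∑ k ∈ range (2 * n + 1), ((2 * n).choose k : ℤ) ^ 2 * a ^ (2 * n - k) * b ^ k)
    = ∑ k ∈ range (n + 1),
        (((2*n).choose (2*k) : ℤ) * ((2*k).choose k : ℤ)) * (a*b)^k * (a+b)^(2*(n-k)) := by
  have key : ((C 1 + C 1 * X) ^ (2*n) * (C a + C b * X) ^ (2*n)).coeff (2*n)
      = ((C a + C (a+b) * X + C b * X^2) ^ (2*n)).coeff (2*n) := by
    rw [← mul_pow]
    congr 2
    rw [C_add, C_1]
    ring
  -- LHS computation
  have hL : ((C 1 + C 1 * X) ^ (2*n) * (C a + C b * X) ^ (2*n)).coeff (2*n)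
      = ∑ k ∈ range (2 * n + 1), ((2 * n).choose k : ℤ) ^ 2 * a ^ (2 * n - k) * b ^ k := by
    rw [Polynomial.coeff_mul, Finset.Nat.sum_antidiagonal_eq_sum_range_succ_mk]
    conv_rhs => rw [← Finset.sum_range_reflect]
    apply Finset.sum_congr rfl
    intro k hk
    simp only [mem_range, Nat.lt_succ_iff] at hk
    rw [coeff_linear_pow, coeff_linear_pow]
    have e1 : 2*n+1-1-k = 2*n-k := by omega
    rw [e1, if_pos hk, if_pos (Nat.sub_le (2*n) k)]
    have h2 : 2*n - (2*n - k) = k := by omega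
    rw [h2, Nat.choose_symm hk]
    push_cast
    ring
  have hR : ((C a + C (a+b) * X + C b * X^2) ^ (2*n)).coeff (2*n)
      = ∑ k ∈ range (n + 1),
        (((2*n).choose (2*k) : ℤ) * ((2*k).choose k : ℤ)) * (a*b)^k * (a+b)^(2*(n-k)) := by
    have hq : (C a + C (a+b) * X + C b * X^2) ^ (2*n)
        = ∑ i ∈ range (2*n+1), C ((a+b)^(2*n-i) * ((2*n).choose i : ℤ))
            * ((C a + C b * X^2) ^ i * X^(2*n-i)) := by
      rw [show C a + C (a+b) * X + C b * X^2 = (C a + C b * X^2) + C (a+b) * X by ring]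
      rw [add_pow]
      apply Finset.sum_congr rfl
      intro i hi
      rw [mul_pow, ← C_pow, ← C_eq_natCast, C_mul]
      ring
    rw [hq, Polynomial.finset_sum_coeff]
    have hterm : ∀ i ∈ range (2*n+1),
        (C ((a+b)^(2*n-i) * ((2*n).choose i:ℤ)) * ((C a + C b * X^2)^i * X^(2*n-i))).coeff (2*n)
        = (if 2 ∣ i then ((2*n).choose i : ℤ) * ((i.choose (i/2)) : ℤ)
            * (a*b)^(i/2) * (a+b)^(2*n-i) else 0) := by
      intro i hi
      simp only [mem_range, Nat.lt_succ_iff] at hi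
      rw [coeff_C_mul, Polynomial.coeff_mul_X_pow', if_pos (by omega : 2*n - i ≤ 2*n)]
      have e : 2*n - (2*n - i) = i := by omega
      rw [e, coeff_quad_pow]
      by_cases h2 : 2 ∣ i
      · rw [if_pos h2, if_pos h2, if_pos (Nat.div_le_self i 2)]
        have hii : i - i/2 = i/2 := by omega
        rw [hii]
        ring
      · rw [if_neg h2, if_neg h2, mul_zero]
    rw [Finset.sum_congr rfl hterm, sum_even_reindex]
    apply Finset.sum_congr rfl
    intro k hk
    simp only [mem_range, Nat.lt_succ_iff] at hk
    have hd : 2*k/2 = k := by omega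
    have e2 : 2*n - 2*k = 2*(n-k) := by omega
    rw [hd, e2]
  rw [← hL, key, hR]

lemma choose_identity (n k : ℕ) (hk : k ≤ n) :
    (2*n).choose (2*k) * ((2*k).choose k) * ((2*(n-k)).choose (n-k))
    = (2*n).choose n * (n.choose k)^2 := by
  have hA := Nat.choose_mul_factorial_mul_factorial (show 2*k ≤ 2*n by omega)
  have hB := Nat.choose_mul_factorial_mul_factorial (show k ≤ 2*k by omega)
  have hC := Nat.choose_mul_factorial_mul_factorial (show n-k ≤ 2*(n-k) by omega)
  have hD := Nat.choose_mul_factorial_mul_factorial (show n ≤ 2*n by omega)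
  have hE := Nat.choose_mul_factorial_mul_factorial hk
  have e1 : 2*k - k = k := by omega
  have e2 : 2*(n-k) - (n-k) = n-k := by omega
  have e3 : 2*n - 2*k = 2*(n-k) := by omega
  have e4 : 2*n - n = n := by omega
  rw [e1] at hB; rw [e2] at hC; rw [e3] at hA; rw [e4] at hD
  have key : ((2*n).choose (2*k) * ((2*k).choose k) * ((2*(n-k)).choose (n-k)))
        * (k.factorial * k.factorial * ((n-k).factorial * (n-k).factorial))
      = ((2*n).choose n * (n.choose k)^2)
        * (k.factorial * k.factorial * ((n-k).factorial * (n-k).factorial)) := by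
    zify at hA hB hC hD hE ⊢
    linear_combination (((2*n).choose (2*k) : ℤ) * ((2*(n-k)).choose (n-k))
        * (n-k).factorial * (n-k).factorial) * hB
      + (((2*n).choose (2*k) : ℤ) * ((2*k).factorial)) * hC
      + hA - hD
      - (((2*n).choose n : ℤ) * ((n.choose k) * k.factorial * (n-k).factorial
          + n.factorial)) * hE
  exact Nat.eq_of_mul_eq_mul_right (by positivity) key

lemma prime_valuation (n : ℕ) (a b : ℤ) (hab : Int.gcd a b = 1) (p : ℕ) (hp : p.Prime)
    (hpt : (p:ℤ) ∣ (a+b)) :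
    ((p:ℤ)^(((2*n).choose n).factorization p) ∣
        ∑ k ∈ range (2 * n + 1), ((2 * n).choose k : ℤ) ^ 2 * a ^ (2 * n - k) * b ^ k) ∧
    ¬ ((p:ℤ)^(((2*n).choose n).factorization p + 1) ∣
        ∑ k ∈ range (2 * n + 1), ((2 * n).choose k : ℤ) ^ 2 * a ^ (2 * n - k) * b ^ k) := by
  set v := ((2*n).choose n).factorization p with hv
  have hM0 : (2*n).choose n ≠ 0 := (Nat.choose_pos (by omega)).ne'
  have hppz : Prime (p:ℤ) := Int.prime_iff_natAbs_prime.2 (by simpa using hp)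
  have hpa : ¬ (p:ℤ) ∣ a := by
    intro h
    have hb : (p:ℤ) ∣ b := by
      have := dvd_sub hpt h
      simpa using this
    have hg : (p:ℤ) ∣ (Int.gcd a b : ℤ) := Int.dvd_coe_gcd h hb
    rw [hab] at hg
    have h1 : (p:ℤ) ≤ 1 := Int.le_of_dvd one_pos hg
    have h2 : (2:ℤ) ≤ (p:ℤ) := by exact_mod_cast hp.two_le
    omega
  have hpb : ¬ (p:ℤ) ∣ b := by
    intro h
    have ha : (p:ℤ) ∣ a := by
      have := dvd_sub hpt h
      simpa [add_sub_cancel_right] using this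
    exact hpa ha
  rw [main_identity]
  rw [Finset.sum_range_succ]
  set T : ℤ := (((2*n).choose (2*n) : ℤ) * ((2*n).choose n : ℤ)) * (a*b)^n * (a+b)^(2*(n-n))
    with hT
  have hTeq : T = ((2*n).choose n : ℤ) * (a*b)^n := by
    rw [hT, Nat.choose_self]
    simp
  set R : ℤ := ∑ k ∈ range n,
      (((2*n).choose (2*k) : ℤ) * ((2*k).choose k : ℤ)) * (a*b)^k * (a+b)^(2*(n-k)) with hR
  -- p^(v+1) divides R
  have hdivR : (p:ℤ)^(v+1) ∣ R := by
    apply Finset.dvd_sum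
    intro k hk
    simp only [mem_range] at hk
    -- factorization bookkeeping
    have hck := choose_identity n k hk.le
    have hc1 : (2*n).choose (2*k) ≠ 0 := (Nat.choose_pos (by omega)).ne'
    have hc2 : (2*k).choose k ≠ 0 := (Nat.choose_pos (by omega)).ne'
    have hc3 : (2*(n-k)).choose (n-k) ≠ 0 := (Nat.choose_pos (by omega)).ne'
    have hc5 : n.choose k ≠ 0 := (Nat.choose_pos hk.le).ne'
    have hfac : ((2*n).choose (2*k) * ((2*k).choose k)).factorization p
        + ((2*(n-k)).choose (n-k)).factorization p
        = v + 2 * (n.choose k).factorization p := by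
      have h := congrArg (fun f => f p) (congrArg Nat.factorization hck)
      rw [Nat.factorization_mul (Nat.mul_ne_zero hc1 hc2) hc3,
        Nat.factorization_mul hM0 (pow_ne_zero 2 hc5), Nat.factorization_pow] at h
      simp only [Finsupp.add_apply, Finsupp.smul_apply, smul_eq_mul] at h
      omega
    have hbound : ((2*(n-k)).choose (n-k)).factorization p ≤ 2*(n-k) - 1 := by
      have h1 : p ^ ((2*(n-k)).choose (n-k)).factorization p ≤ 2*(n-k) :=
        Nat.pow_factorization_choose_le (by omega)
      by_contra hcon
      push_neg at hcon
      have h2 : 2*(n-k) < 2^(2*(n-k)) := Nat.lt_two_pow_self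
      have h3 : (2:ℕ)^(2*(n-k)) ≤ p^(2*(n-k)) := Nat.pow_le_pow_left hp.two_le _
      have h4 : p^(2*(n-k)) ≤ p^(((2*(n-k)).choose (n-k)).factorization p) :=
        Nat.pow_le_pow_right hp.pos (by omega)
      omega
    have hle : v + 1 ≤ ((2*n).choose (2*k) * ((2*k).choose k)).factorization p + 2*(n-k) := by
      omega
    have d1 : (p:ℤ)^(((2*n).choose (2*k) * ((2*k).choose k)).factorization p)
        ∣ (((2*n).choose (2*k) : ℤ) * ((2*k).choose k : ℤ)) := by
      have := Nat.ordProj_dvd ((2*n).choose (2*k) * ((2*k).choose k)) p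
      exact_mod_cast Int.natCast_dvd_natCast.2 this
    have d2 : (p:ℤ)^(2*(n-k)) ∣ (a+b)^(2*(n-k)) := pow_dvd_pow_of_dvd hpt _
    calc (p:ℤ)^(v+1)
        ∣ (p:ℤ)^(((2*n).choose (2*k) * ((2*k).choose k)).factorization p + 2*(n-k)) :=
          pow_dvd_pow _ hle
      _ ∣ (((2*n).choose (2*k) : ℤ) * ((2*k).choose k : ℤ)) * (a+b)^(2*(n-k)) := by
          rw [pow_add]; exact mul_dvd_mul d1 d2
      _ ∣ (((2*n).choose (2*k) : ℤ) * ((2*k).choose k : ℤ)) * (a*b)^k * (a+b)^(2*(n-k)) :=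
          ⟨(a*b)^k, by ring⟩
  -- T behavior
  have hdivT : (p:ℤ)^v ∣ T := by
    rw [hTeq]
    apply Dvd.dvd.mul_right
    exact_mod_cast Int.natCast_dvd_natCast.2 (Nat.ordProj_dvd ((2*n).choose n) p)
  have hndivT : ¬ (p:ℤ)^(v+1) ∣ T := by
    rw [hTeq]
    intro h
    have hcop : IsCoprime ((p:ℤ)^(v+1)) ((a*b)^n) := by
      apply IsCoprime.pow
      exact (hppz.coprime_iff_not_dvd.2 (by
        intro hd
        rcases hppz.dvd_mul.1 hd with h' | h'
        exacts [hpa h', hpb h']))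
    have hdM : (p:ℤ)^(v+1) ∣ ((2*n).choose n : ℤ) := hcop.dvd_of_dvd_mul_right h
    have : p^(v+1) ∣ (2*n).choose n := by exact_mod_cast Int.natCast_dvd_natCast.1 (by exact_mod_cast hdM)
    exact Nat.pow_succ_factorization_not_dvd hM0 hp this
  constructor
  · exact dvd_add ((pow_dvd_pow _ (Nat.le_succ v)).trans hdivR) hdivT
  · intro h
    apply hndivT
    have := dvd_sub h hdivR
    simpa using this

/-- Theorem 1, Eq. (14): for coprime `a b` with `a + b ∉ {0, 1, -1}`, the sum
`B(2n,2,a,b) = ∑_{k=0}^{2n} C(2n,k)^2 a^{2n-k} b^k` is nonzero and the largest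
power of `a + b` dividing it equals the largest power of `a + b` dividing `C(2n,n)`. -/
theorem stmt_0 (n : ℕ) (a b : ℤ) (hab : Int.gcd a b = 1)
    (h0 : a + b ≠ 0) (h1 : a + b ≠ 1) (h2 : a + b ≠ -1) :
    (∑ k ∈ range (2 * n + 1), ((2 * n).choose k : ℤ) ^ 2 * a ^ (2 * n - k) * b ^ k) ≠ 0 ∧
    ∃ E : ℕ,
      IsGreatest {e : ℕ | (a + b) ^ e ∣
        ∑ k ∈ range (2 * n + 1), ((2 * n).choose k : ℤ) ^ 2 * a ^ (2 * n - k) * b ^ k} E ∧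
      IsGreatest {e : ℕ | (a + b) ^ e ∣ ((2 * n).choose n : ℤ)} E := by
  classical
  set Bs : ℤ := ∑ k ∈ range (2 * n + 1), ((2 * n).choose k : ℤ) ^ 2 * a ^ (2 * n - k) * b ^ k
    with hBs
  set t : ℤ := a + b with ht
  set M : ℕ := (2*n).choose n with hM
  have hM0 : M ≠ 0 := (Nat.choose_pos (by omega)).ne'
  have htab : 2 ≤ t.natAbs := by
    rcases Int.natAbs_eq t with h | h <;> omega
  obtain ⟨p, hp, hpt⟩ := Nat.exists_prime_and_dvd (show t.natAbs ≠ 1 by omega)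
  have hptz : (p:ℤ) ∣ t := (Int.natCast_dvd_natCast.2 hpt).trans (Int.natAbs_dvd.2 dvd_rfl)
  have hval := prime_valuation n a b hab p hp hptz
  rw [← hBs] at hval
  have hBne : Bs ≠ 0 := by
    intro hz
    exact hval.2 (hz ▸ dvd_zero _)
  have hBabs : Bs.natAbs ≠ 0 := Int.natAbs_ne_zero.2 hBne
  -- the factorizations of |Bs| and M agree at every prime dividing t
  have hsame : ∀ q : ℕ, q.Prime → q ∣ t.natAbs →
      (Bs.natAbs).factorization q = M.factorization q := by
    intro q hq hqt
    have hqtz : (q:ℤ) ∣ t := (Int.natCast_dvd_natCast.2 hqt).trans (Int.natAbs_dvd.2 dvd_rfl)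
    have hval2 := prime_valuation n a b hab q hq hqtz
    rw [← hBs] at hval2
    have h1 : M.factorization q ≤ (Bs.natAbs).factorization q := by
      rw [← Nat.Prime.pow_dvd_iff_le_factorization hq hBabs]
      have := hval2.1
      rw [← Int.natAbs_dvd_natAbs] at this
      simpa [Int.natAbs_pow] using this
    have h2 : ¬ (M.factorization q + 1 ≤ (Bs.natAbs).factorization q) := by
      rw [← Nat.Prime.pow_dvd_iff_le_factorization hq hBabs]
      intro hc
      apply hval2.2
      rw [← Int.natAbs_dvd_natAbs]
      simpa [Int.natAbs_pow] using hc
    omega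
  -- the divisibility sets coincide
  have hiff : ∀ e : ℕ, (t^e ∣ Bs ↔ t^e ∣ (M : ℤ)) := by
    intro e
    rw [← Int.natAbs_dvd_natAbs, ← Int.natAbs_dvd_natAbs (b := (M:ℤ)), Int.natAbs_pow,
      Int.natAbs_natCast,
      ← Nat.factorization_le_iff_dvd (pow_ne_zero _ (by omega)) hBabs,
      ← Nat.factorization_le_iff_dvd (pow_ne_zero _ (by omega)) hM0,
      Nat.factorization_pow]
    constructor <;> intro h <;> rw [Finsupp.le_def] at h ⊢ <;> intro q <;>
        have hq := h q <;>
        simp only [Finsupp.smul_apply, smul_eq_mul] at hq ⊢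
    · by_cases hz : (t.natAbs).factorization q = 0
      · simp [hz]
      · have hqp : q.Prime := Nat.prime_of_mem_primeFactors
          (by rw [← Nat.support_factorization]; exact Finsupp.mem_support_iff.2 hz)
        have hqd : q ∣ t.natAbs := Nat.dvd_of_mem_primeFactors
          (by rw [← Nat.support_factorization]; exact Finsupp.mem_support_iff.2 hz)
        rw [← hsame q hqp hqd]
        exact hq
    · by_cases hz : (t.natAbs).factorization q = 0
      · simp [hz]
      · have hqp : q.Prime := Nat.prime_of_mem_primeFactors
          (by rw [← Nat.support_factorization]; exact Finsupp.mem_support_iff.2 hz)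
        have hqd : q ∣ t.natAbs := Nat.dvd_of_mem_primeFactors
          (by rw [← Nat.support_factorization]; exact Finsupp.mem_support_iff.2 hz)
        rw [hsame q hqp hqd]
        exact hq
  refine ⟨hBne, ?_⟩
  have hsetseq : {e : ℕ | t ^ e ∣ Bs} = {e : ℕ | t ^ e ∣ (M : ℤ)} :=
    Set.ext fun e => hiff e
  have hbound : ∀ e : ℕ, t^e ∣ (M:ℤ) → e ≤ M := by
    intro e he
    have h1 : t.natAbs ^ e ∣ M := by
      rw [← Int.natAbs_pow]
      have := Int.natAbs_dvd_natAbs.2 he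
      simpa using this
    have h2 : t.natAbs ^ e ≤ M := Nat.le_of_dvd (Nat.pos_of_ne_zero hM0) h1
    have h3 : 2^e ≤ t.natAbs^e := Nat.pow_le_pow_left htab e
    have h4 : e < 2^e := Nat.lt_two_pow_self
    omega
  set E : ℕ := Nat.findGreatest (fun e => t^e ∣ (M:ℤ)) M with hE
  have hgM : IsGreatest {e : ℕ | t ^ e ∣ (M : ℤ)} E := by
    constructor
    · exact Nat.findGreatest_spec (Nat.zero_le M) (by simp)
    · intro e he
      exact Nat.le_findGreatest (hbound e he) he
  exact ⟨E, by rw [hsetseq]; exact hgM, hgM⟩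
end

section
/- Let n be a natural number and let a, b be integers with gcd(a,b) = 1, a + b ≠ 0, and a + b ≠ ±1. Define B(2n+1,2,a,b) = ∑_{k=0}^{2n+1} (C(2n+1,k))^2 · a^{2n+1-k} · b^k. Then B(2n+1,2,a,b) ≠ 0, and the largest natural number e such that (a+b)^e divides B(2n+1,2,a,b) is equal to 1 plus the largest natural number e such that (a+b)^e divides the integer (2n+1)·C(2n,n). -/
open Finset

private lemma aux_ident (n : ℕ) (a b : ℤ) :
    (∑ k ∈ range (2 * n + 1 + 1), ((2 * n + 1).choose k : ℤ) ^ 2 * a ^ (2 * n + 1 - k) * b ^ k)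
    = ∑ j ∈ range (n + 1),
        (((2*n+1).choose j * (2*n+1-j).choose j : ℕ) : ℤ) * (a*b)^j * (a+b)^(2*(n-j)+1) := by
  classical
  open Polynomial in
  set m := 2 * n + 1 with hm
  have h1 : (((X + C a) ^ m * (X + C b) ^ m : ℤ[X])).coeff m
      = ∑ k ∈ range (m + 1), ((m.choose k : ℤ)) ^ 2 * a ^ (m - k) * b ^ k := by
    rw [coeff_mul, Finset.Nat.sum_antidiagonal_eq_sum_range_succ_mk]
    refine Finset.sum_congr rfl fun k hk => ?_
    have hk' : k ≤ m := by simpa using Nat.lt_succ_iff.mp (Finset.mem_range.mp hk)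
    rw [coeff_X_add_C_pow, coeff_X_add_C_pow, Nat.sub_sub_self hk', Nat.choose_symm hk']
    push_cast
    ring
  have h2 : ((X + C a) ^ m * (X + C b) ^ m : ℤ[X])
      = (C (a*b) + (X + C (a+b)) * X) ^ m := by
    rw [← mul_pow]
    congr 1
    simp only [C_add, C_mul]
    ring
  have h3 : ((C (a*b) + (X + C (a+b)) * X : ℤ[X]) ^ m).coeff m
      = ∑ k ∈ range (m + 1),
          (a*b)^k * ((a+b) ^ ((m-k) - k) * ((m-k).choose k : ℤ)) * (m.choose k : ℤ) := by
    rw [add_pow, finset_sum_coeff]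
    refine Finset.sum_congr rfl fun k hk => ?_
    have hk' : k ≤ m := by simpa using Nat.lt_succ_iff.mp (Finset.mem_range.mp hk)
    rw [mul_pow, ← C_pow, ← C_eq_natCast]
    rw [show (C ((a*b)^k) * ((X + C (a+b))^(m-k) * X^(m-k)) * C (((m.choose k : ℤ))) : ℤ[X])
        = C ((a*b)^k) * (C ((m.choose k:ℤ)) * ((X + C (a+b))^(m-k) * X^(m-k))) from by ring]
    rw [coeff_C_mul, coeff_C_mul, coeff_mul_X_pow', if_pos (Nat.sub_le m k),
      Nat.sub_sub_self hk', coeff_X_add_C_pow]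
    ring
  rw [h2, h3] at h1
  rw [← h1]
  rw [show m + 1 = (n+1) + (n+1) by omega, Finset.sum_range_add]
  have hz : ∀ i ∈ range (n+1), (a*b)^((n+1)+i) * ((a+b) ^ ((m-((n+1)+i)) - ((n+1)+i)) * ((m-((n+1)+i)).choose ((n+1)+i) : ℤ)) * (m.choose ((n+1)+i) : ℤ) = 0 := by
    intro i hi
    have : m - ((n+1)+i) < (n+1)+i := by omega
    rw [Nat.choose_eq_zero_of_lt this]
    push_cast; ring
  rw [Finset.sum_congr rfl hz, Finset.sum_const_zero, add_zero]
  refine Finset.sum_congr rfl fun k hk => ?_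
  have hk' : k ≤ n := Nat.lt_succ_iff.mp (Finset.mem_range.mp hk)
  have he : m - k - k = 2*(n-k)+1 := by omega
  rw [he]
  push_cast
  ring

private lemma aux_L3 (n : ℕ) :
    (2*n+1) * (2*n).choose n = (2*n+1).choose n * (2*n+1-n).choose n := by
  have h : 2*n+1-n = n+1 := by omega
  rw [h, Nat.choose_succ_self_right]
  have h3 := Nat.add_one_mul_choose_eq (2*n) n
  have h2 : (2*n+1).choose (n+1) = (2*n+1).choose n := by
    rw [← Nat.choose_symm (by omega : n+1 ≤ 2*n+1)]
    congr 1; omega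
  rw [← h2]
  omega

private lemma aux_L1 (n j : ℕ) (hj : j ≤ n) :
    (2*n+1) * (2*n).choose n * (n.descFactorial (n-j))^2
    = (2*n+1).choose j * (2*n+1-j).choose j * (2*(n-j)+1).factorial := by
  have h1 : j ≤ 2*n+1 := by omega
  have h2 : j ≤ 2*n+1-j := by omega
  have dj : n.descFactorial (n-j) * j.factorial = n.factorial := by
    have h := Nat.factorial_mul_descFactorial (show n - j ≤ n by omega)
    rw [show n-(n-j) = j by omega] at h
    rw [mul_comm]; exact h
  have c1 : (2*n).choose n * (n.factorial * n.factorial) = (2*n).factorial := by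
    have := Nat.choose_mul_factorial_mul_factorial (show n ≤ 2*n by omega)
    rw [show 2*n-n = n by omega] at this
    rw [← this]; ring
  have c2 : (2*n+1).choose j * j.factorial * (2*n+1-j).factorial = (2*n+1).factorial :=
    Nat.choose_mul_factorial_mul_factorial h1
  have c3 : (2*n+1-j).choose j * j.factorial * (2*(n-j)+1).factorial = (2*n+1-j).factorial := by
    have := Nat.choose_mul_factorial_mul_factorial h2
    rw [show 2*n+1-j-j = 2*(n-j)+1 by omega] at this
    exact this
  refine Nat.eq_of_mul_eq_mul_right (show 0 < j.factorial * j.factorial by positivity) ?_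
  calc (2*n+1) * (2*n).choose n * (n.descFactorial (n-j))^2 * (j.factorial * j.factorial)
      = (2*n+1) * ((2*n).choose n * ((n.descFactorial (n-j) * j.factorial) * (n.descFactorial (n-j) * j.factorial))) := by ring
    _ = (2*n+1) * ((2*n).choose n * (n.factorial * n.factorial)) := by rw [dj]
    _ = (2*n+1) * (2*n).factorial := by rw [c1]
    _ = (2*n+1).factorial := (Nat.factorial_succ (2*n)).symm
    _ = (2*n+1).choose j * j.factorial * (2*n+1-j).factorial := c2.symm
    _ = (2*n+1).choose j * j.factorial * ((2*n+1-j).choose j * j.factorial * (2*(n-j)+1).factorial) := by rw [c3]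
    _ = (2*n+1).choose j * (2*n+1-j).choose j * (2*(n-j)+1).factorial * (j.factorial * j.factorial) := by ring

private lemma aux_L2 (p d : ℕ) (hp : p.Prime) (hd : 1 ≤ d) :
    ((2*d+1).factorial).factorization p ≤ 2*d - 1 := by
  haveI : Fact p.Prime := ⟨hp⟩
  rw [Nat.factorization_def _ hp]
  by_cases hp2 : p = 2
  · subst hp2
    have hfs : (2*d+1).factorial = (2*d+1) * (2*d).factorial := Nat.factorial_succ (2*d)
    rw [hfs, padicValNat.mul (by omega) (Nat.factorial_pos _).ne']
    have hodd : ¬ (2 ∣ (2*d+1)) := by omega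
    rw [padicValNat.eq_zero_of_not_dvd hodd, zero_add]
    have hlt := Nat.emultiplicity_two_factorial_lt (show 2*d ≠ 0 by omega)
    rw [← padicValNat_eq_emultiplicity (p := 2) (Nat.factorial_ne_zero _)] at hlt
    have : padicValNat 2 (2*d).factorial < 2*d := by exact_mod_cast hlt
    omega
  · have hp3 : 3 ≤ p := by
      have := hp.two_le
      omega
    have hle := Nat.Prime.emultiplicity_factorial_le_div_pred hp (2*d+1)
    rw [← padicValNat_eq_emultiplicity (p := p) (Nat.factorial_ne_zero _)] at hle
    have h1 : padicValNat p (2*d+1).factorial ≤ (2*d+1)/(p-1) := by exact_mod_cast hle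
    have h2 : (2*d+1)/(p-1) ≤ (2*d+1)/2 := by
      apply Nat.div_le_div_left (by omega) (by omega)
    have h3 : (2*d+1)/2 = d := by omega
    omega

/-- Theorem 1, Eq. (15): for coprime `a b` with `a + b ∉ {0, 1, -1}`, the sum
`B(2n+1,2,a,b)` is nonzero and the largest power of `a + b` dividing it equals
`1` plus the largest power of `a + b` dividing `(2n+1)·C(2n,n)`. -/
theorem stmt_1 (n : ℕ) (a b : ℤ) (hab : Int.gcd a b = 1)
    (h0 : a + b ≠ 0) (h1 : a + b ≠ 1) (h2 : a + b ≠ -1) :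
    (∑ k ∈ range (2 * n + 1 + 1), ((2 * n + 1).choose k : ℤ) ^ 2 * a ^ (2 * n + 1 - k) * b ^ k) ≠ 0 ∧
    ∃ E : ℕ,
      IsGreatest {e : ℕ | (a + b) ^ e ∣ ((2 * n + 1 : ℕ) * (2 * n).choose n : ℤ)} E ∧
      IsGreatest {e : ℕ | (a + b) ^ e ∣
        ∑ k ∈ range (2 * n + 1 + 1), ((2 * n + 1).choose k : ℤ) ^ 2 * a ^ (2 * n + 1 - k) * b ^ k}
        (1 + E) := by
  classical
  -- a and b are nonzero
  have ha : a ≠ 0 := by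
    rintro rfl
    rw [Int.gcd_zero_left] at hab
    rcases Int.natAbs_eq_iff.mp hab with h | h
    · exact h1 (by simpa using h)
    · exact h2 (by simpa using h)
  have hb : b ≠ 0 := by
    rintro rfl
    rw [Int.gcd_zero_right] at hab
    rcases Int.natAbs_eq_iff.mp hab with h | h
    · exact h1 (by simpa using h)
    · exact h2 (by simpa using h)
  have hab0 : a * b ≠ 0 := mul_ne_zero ha hb
  set S : ℕ := (a + b).natAbs with hS_def
  have hS0 : S ≠ 0 := Int.natAbs_ne_zero.mpr h0
  have hS2 : 2 ≤ S := by
    have e1 : S ≠ 1 := by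
      intro h
      rcases Int.natAbs_eq_iff.mp h with h' | h'
      · exact h1 (by simpa using h')
      · exact h2 (by simpa using h')
    omega
  set M : ℕ := (2*n+1) * (2*n).choose n with hM_def
  have hM0 : 0 < M := Nat.mul_pos (by omega) (Nat.choose_pos (by omega))
  set T : ℕ → ℕ := fun j => (2*n+1).choose j * (2*n+1-j).choose j with hT_def
  have hT0 : ∀ j, j ≤ n → 0 < T j := fun j hj =>
    Nat.mul_pos (Nat.choose_pos (by omega)) (Nat.choose_pos (by omega))
  have hTn : T n = M := by
    rw [hT_def, hM_def]
    exact (aux_L3 n).symm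
  set E := Nat.findGreatest (fun e => S ^ e ∣ M) M with hE_def
  have hEdvd : S ^ E ∣ M :=
    Nat.findGreatest_spec (P := fun e => S ^ e ∣ M) (Nat.zero_le M) (by simp)
  have hEub : ∀ e : ℕ, S ^ e ∣ M → e ≤ E := by
    intro e he
    refine Nat.le_findGreatest ?_ he
    calc e ≤ 2 ^ e - 1 := by have := Nat.lt_two_pow_self (n := e); omega
      _ ≤ S ^ e - 1 := by have := Nat.pow_le_pow_left hS2 e; omega
      _ ≤ M := by have := Nat.le_of_dvd hM0 he; omega
  have hEnot : ¬ S ^ (E+1) ∣ M := fun h => by have := hEub (E+1) h; omega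
  -- divisor transfer
  have dvd_iff : ∀ (e : ℕ) (x : ℤ), ((a+b) ^ e ∣ x) ↔ (S ^ e ∣ x.natAbs) := by
    intro e x
    rw [← Int.natAbs_dvd_natAbs, Int.natAbs_pow]
  -- the identity
  have hBid := aux_ident n a b
  set B : ℤ := ∑ k ∈ range (2 * n + 1 + 1),
      ((2 * n + 1).choose k : ℤ) ^ 2 * a ^ (2 * n + 1 - k) * b ^ k with hB_def
  -- key valuation inequality
  have hkey : ∀ j, j < n → ∀ p : ℕ, p.Prime →
      M.factorization p ≤ (T j).factorization p + (2*(n-j) - 1) := by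
    intro j hj p pp
    have hL1 := aux_L1 n j hj.le
    rw [← hM_def] at hL1
    have hTj0 : T j ≠ 0 := (hT0 j hj.le).ne'
    have hX0 : n.descFactorial (n-j) ≠ 0 := by
      rw [Ne, Nat.descFactorial_eq_zero_iff_lt]
      omega
    have hcong := congrArg (fun t : ℕ => t.factorization p) hL1
    simp only [Nat.factorization_mul hM0.ne' (pow_ne_zero 2 hX0),
      Nat.factorization_mul (mul_ne_zero (Nat.choose_pos (show j ≤ 2*n+1 by omega)).ne'
        (Nat.choose_pos (show j ≤ 2*n+1-j by omega)).ne') (Nat.factorial_ne_zero _),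
      Nat.factorization_pow, Finsupp.coe_add, Finsupp.coe_smul, Pi.add_apply, Pi.smul_apply,
      smul_eq_mul] at hcong
    have hfac := aux_L2 p (n-j) pp (by omega)
    have hTj : ((2*n+1).choose j * (2*n+1-j).choose j).factorization p = (T j).factorization p := by
      rw [hT_def]
    omega
  -- Claim A : divisibility
  have hA : (a+b) ^ (E+1) ∣ B := by
    rw [hBid]
    apply Finset.dvd_sum
    intro j hj
    have hj' : j ≤ n := Nat.lt_succ_iff.mp (Finset.mem_range.mp hj)
    rcases eq_or_lt_of_le hj' with rfl | hjn
    · rw [show 2*(j-j)+1 = 1 by omega, pow_one, pow_succ]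
      refine mul_dvd_mul (Dvd.dvd.mul_right ?_ _) dvd_rfl
      rw [dvd_iff, Int.natAbs_natCast, ← aux_L3 j, ← hM_def]
      exact hEdvd
    · have hmain : (a+b)^(E+1) ∣ ((T j : ℕ) : ℤ) * (a+b)^(2*(n-j)+1) := by
        rw [dvd_iff, Int.natAbs_mul, Int.natAbs_pow, Int.natAbs_natCast]
        have hTj0 : T j ≠ 0 := (hT0 j hj').ne'
        rw [← Nat.factorization_le_iff_dvd (pow_ne_zero _ hS0)
          (mul_ne_zero hTj0 (pow_ne_zero _ hS0))]
        intro p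
        by_cases pp : p.Prime
        · rw [Nat.factorization_mul hTj0 (pow_ne_zero _ hS0)]
          simp only [Nat.factorization_pow, Finsupp.coe_add, Finsupp.coe_smul, Pi.add_apply,
            Pi.smul_apply, smul_eq_mul]
          by_cases hvS : S.factorization p = 0
          · simp [hvS]
          · have hvS1 : 1 ≤ S.factorization p := by omega
            have h1 : E * S.factorization p ≤ M.factorization p := by
              have := (Nat.factorization_le_iff_dvd (pow_ne_zero _ hS0) hM0.ne').mpr hEdvd
              have := this p
              simpa [Nat.factorization_pow] using this
            have h2 := hkey j hjn p pp
            have h4 : 2*(n-j) ≤ 2*(n-j) * S.factorization p :=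
              Nat.le_mul_of_pos_right _ (by omega)
            calc (E+1) * S.factorization p
                = E * S.factorization p + S.factorization p := by ring
              _ ≤ M.factorization p + S.factorization p := by omega
              _ ≤ ((T j).factorization p + (2*(n-j) - 1)) + S.factorization p := by omega
              _ ≤ (T j).factorization p + (2*(n-j)+1) * S.factorization p := by
                  have : (2*(n-j)+1) * S.factorization p
                      = 2*(n-j) * S.factorization p + S.factorization p := by ring
                  omega
        · simp [Nat.factorization_eq_zero_of_not_prime _ pp]
      have : ((T j : ℕ) : ℤ) * (a*b)^j * (a+b)^(2*(n-j)+1)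
          = (a*b)^j * (((T j : ℕ) : ℤ) * (a+b)^(2*(n-j)+1)) := by ring
      rw [this]
      exact hmain.mul_left _
  -- critical prime
  obtain ⟨p, pp, hplt⟩ : ∃ p : ℕ, p.Prime ∧ M.factorization p < (E+1) * S.factorization p := by
    by_contra hc
    push_neg at hc
    apply hEnot
    rw [← Nat.factorization_le_iff_dvd (pow_ne_zero _ hS0) hM0.ne']
    intro p
    by_cases pp : p.Prime
    · simpa [Nat.factorization_pow] using hc p pp
    · simp [Nat.factorization_eq_zero_of_not_prime _ pp]
  have hvS1 : 1 ≤ S.factorization p := by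
    rcases Nat.eq_zero_or_pos (S.factorization p) with h | h
    · rw [h, Nat.mul_zero] at hplt; omega
    · omega
  have hpS : p ∣ S := Nat.dvd_of_factorization_pos (by omega)
  have hpZ : Prime (p : ℤ) := Int.prime_iff_natAbs_prime.mpr (by simpa using pp)
  have hpsZ : (p : ℤ) ∣ (a + b) := by
    rw [← Int.natAbs_dvd_natAbs]
    simpa using hpS
  have hpa : ¬ (p:ℤ) ∣ a := by
    intro h
    have hpb : (p:ℤ) ∣ b := by
      have := dvd_sub hpsZ h
      simpa using this
    have : (p:ℤ) ∣ (Int.gcd a b : ℤ) := Int.dvd_coe_gcd h hpb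
    rw [hab] at this
    exact hpZ.not_dvd_one (by simpa using this)
  have hpb : ¬ (p:ℤ) ∣ b := by
    intro h
    have hpa' : (p:ℤ) ∣ a := by
      have := dvd_sub hpsZ h
      simpa using this
    exact hpa hpa'
  have habp : ¬ p ∣ (a*b).natAbs := by
    intro h
    have : (p:ℤ) ∣ a*b := by
      rw [← Int.natAbs_dvd_natAbs]
      simpa using h
    rcases hpZ.dvd_mul.mp this with h' | h'
    · exact hpa h'
    · exact hpb h'
  set W : ℕ := M.factorization p + S.factorization p + 1 with hW_def
  set main : ℤ := ((M : ℕ) : ℤ) * (a*b)^n * (a+b) with hmain_def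
  have hmain0 : main ≠ 0 := mul_ne_zero (mul_ne_zero (by exact_mod_cast hM0.ne') (pow_ne_zero _ hab0)) h0
  have hmainv : (main.natAbs).factorization p = M.factorization p + S.factorization p := by
    rw [hmain_def, Int.natAbs_mul, Int.natAbs_mul, Int.natAbs_pow, Int.natAbs_natCast]
    rw [Nat.factorization_mul (mul_ne_zero (by exact_mod_cast hM0.ne')
      (pow_ne_zero _ (Int.natAbs_ne_zero.mpr hab0))) hS0,
      Nat.factorization_mul (by exact_mod_cast hM0.ne') (pow_ne_zero _ (Int.natAbs_ne_zero.mpr hab0)),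
      Nat.factorization_pow]
    simp only [Finsupp.coe_add, Finsupp.coe_smul, Pi.add_apply, Pi.smul_apply, smul_eq_mul]
    rw [Nat.factorization_eq_zero_of_not_dvd habp]
    ring
  have hWmain : ¬ (p:ℤ)^W ∣ main := by
    intro h
    rw [← Int.natAbs_dvd_natAbs, Int.natAbs_pow, Int.natAbs_natCast] at h
    have := (Nat.Prime.pow_dvd_iff_le_factorization pp (Int.natAbs_ne_zero.mpr hmain0)).mp h
    omega
  have hWR : (p:ℤ)^W ∣ (B - main) := by
    have hsplit : B - main = ∑ j ∈ range n,
        (((2*n+1).choose j * (2*n+1-j).choose j : ℕ) : ℤ) * (a*b)^j * (a+b)^(2*(n-j)+1) := by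
      rw [hBid, Finset.sum_range_succ]
      rw [show 2*(n-n)+1 = 1 by omega, pow_one]
      rw [hmain_def, ← hTn]
      rw [hT_def]
      ring
    rw [hsplit]
    apply Finset.dvd_sum
    intro j hj
    have hjn : j < n := Finset.mem_range.mp hj
    have hTj0 : T j ≠ 0 := (hT0 j hjn.le).ne'
    have hdvd : (p:ℤ)^W ∣ ((T j : ℕ) : ℤ) * (a+b)^(2*(n-j)+1) := by
      rw [← Int.natAbs_dvd_natAbs, Int.natAbs_pow, Int.natAbs_natCast, Int.natAbs_mul,
        Int.natAbs_pow, Int.natAbs_natCast]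
      apply (Nat.Prime.pow_dvd_iff_le_factorization pp
        (mul_ne_zero hTj0 (pow_ne_zero _ hS0))).mpr
      rw [Nat.factorization_mul hTj0 (pow_ne_zero _ hS0)]
      simp only [Nat.factorization_pow, Finsupp.coe_add, Finsupp.coe_smul, Pi.add_apply,
        Pi.smul_apply, smul_eq_mul]
      have h2 := hkey j hjn p pp
      have h4 : 2*(n-j) ≤ 2*(n-j) * S.factorization p :=
        Nat.le_mul_of_pos_right _ (by omega)
      have h5 : (2*(n-j)+1) * S.factorization p
          = 2*(n-j) * S.factorization p + S.factorization p := by ring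
      omega
    have : (((2*n+1).choose j * (2*n+1-j).choose j : ℕ) : ℤ) * (a*b)^j * (a+b)^(2*(n-j)+1)
        = (a*b)^j * (((T j : ℕ) : ℤ) * (a+b)^(2*(n-j)+1)) := by
      rw [hT_def]; push_cast; ring
    rw [this]
    exact hdvd.mul_left _
  have hWB : ¬ (p:ℤ)^W ∣ B := by
    intro h
    apply hWmain
    have := dvd_sub h hWR
    simpa using this
  have hBne : B ≠ 0 := by
    rintro hB0
    apply hWmain
    have := hWR
    rw [hB0, zero_sub] at this
    exact (dvd_neg.mp this)
  have hnotE2 : ¬ (a+b)^(E+2) ∣ B := by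
    intro h
    apply hWB
    refine dvd_trans ?_ h
    have h1 : p ^ (S.factorization p) ∣ S := Nat.ordProj_dvd S p
    have h2 : p ^ ((E+2) * S.factorization p) ∣ S^(E+2) := by
      rw [mul_comm, pow_mul]
      exact pow_dvd_pow_of_dvd h1 _
    have h3 : W ≤ (E+2) * S.factorization p := by
      have : (E+2) * S.factorization p = (E+1) * S.factorization p + S.factorization p := by ring
      omega
    have h4 : p ^ W ∣ S ^ (E+2) := dvd_trans (pow_dvd_pow p h3) h2
    rw [← Int.natAbs_dvd_natAbs, Int.natAbs_pow, Int.natAbs_natCast, Int.natAbs_pow]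
    exact h4
  refine ⟨hBne, E, ⟨?_, ?_⟩, ⟨?_, ?_⟩⟩
  · show (a+b)^E ∣ _
    have hcast : ((2 * n + 1 : ℕ) * (2 * n).choose n : ℤ) = ((M : ℕ) : ℤ) := by
      rw [hM_def]; push_cast; ring
    rw [hcast, dvd_iff, Int.natAbs_natCast]
    exact hEdvd
  · intro e he
    have he' : (a+b)^e ∣ ((2 * n + 1 : ℕ) * (2 * n).choose n : ℤ) := he
    have hcast : ((2 * n + 1 : ℕ) * (2 * n).choose n : ℤ) = ((M : ℕ) : ℤ) := by
      rw [hM_def]; push_cast; ring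
    rw [hcast, dvd_iff, Int.natAbs_natCast] at he'
    exact hEub e he'
  · show (a+b)^(1+E) ∣ B
    rw [add_comm 1 E]
    exact hA
  · intro e he
    have he' : (a+b)^e ∣ B := he
    by_contra hlt
    push_neg at hlt
    have : (a+b)^(E+2) ∣ B := dvd_trans (pow_dvd_pow _ (by omega)) he'
    exact hnotE2 this
end

section
/- Let n be a natural number and let f_n = ∑_{k=0}^{n} (C(n,k))^3 denote the n-th Franel number. Then 2^(v_2(C(2n,n))) divides f_{2n}, and 2^(1 + v_2(C(2n,n))) divides f_{2n+1}. -/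
open Finset

/-! Auxiliary lemmas -/

/-- Subset-of-subset identity for binomial coefficients. -/
lemma aux_choose_mul_choose {N m k : ℕ} (hk : k ≤ m) (hm : m ≤ N) :
    N.choose m * m.choose k = N.choose k * (N - k).choose (m - k) := by
  have h1 := Nat.choose_mul_factorial_mul_factorial hm
  have h2 := Nat.choose_mul_factorial_mul_factorial hk
  have h3 := Nat.choose_mul_factorial_mul_factorial (hk.trans hm)
  have h4 := Nat.choose_mul_factorial_mul_factorial (Nat.sub_le_sub_right hm k)
  have h5 : N - k - (m - k) = N - m := by omega
  rw [h5] at h4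
  have hpos : 0 < Nat.factorial k * Nat.factorial (m - k) * Nat.factorial (N - m) :=
    Nat.mul_pos (Nat.mul_pos (Nat.factorial_pos _) (Nat.factorial_pos _)) (Nat.factorial_pos _)
  apply Nat.eq_of_mul_eq_mul_right hpos
  calc N.choose m * m.choose k *
        (Nat.factorial k * Nat.factorial (m - k) * Nat.factorial (N - m))
      = (m.choose k * Nat.factorial k * Nat.factorial (m - k)) * N.choose m *
          Nat.factorial (N - m) := by ring
    _ = Nat.factorial m * N.choose m * Nat.factorial (N - m) := by rw [h2]
    _ = N.choose m * Nat.factorial m * Nat.factorial (N - m) := by ring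
    _ = Nat.factorial N := h1
    _ = N.choose k * Nat.factorial k * Nat.factorial (N - k) := h3.symm
    _ = (N.choose k * Nat.factorial k) *
          ((N - k).choose (m - k) * Nat.factorial (m - k) * Nat.factorial (N - m)) := by
        rw [h4]
    _ = N.choose k * (N - k).choose (m - k) *
          (Nat.factorial k * Nat.factorial (m - k) * Nat.factorial (N - m)) := by ring

/-- Inner sum evaluation for Strehl's identity. -/
lemma aux_inner_sum {m i j : ℕ} (hm : i + j = m) (hj : j ≤ i) :
    ∑ k ∈ range (m + 1), m.choose k ^ 2 * (k.choose i * k.choose j) = m.choose i ^ 3 := by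
  have hi : i ≤ m := by omega
  rw [range_eq_Ico, ← Finset.sum_Ico_consecutive _ (Nat.zero_le i) (by omega : i ≤ m + 1)]
  have h0 : ∑ k ∈ Ico 0 i, m.choose k ^ 2 * (k.choose i * k.choose j) = 0 := by
    apply Finset.sum_eq_zero
    intro k hk
    rw [mem_Ico] at hk
    simp [Nat.choose_eq_zero_of_lt hk.2]
  rw [h0, zero_add, Finset.sum_Ico_eq_sum_range]
  have hlen : m + 1 - i = j + 1 := by omega
  rw [hlen]
  have step : ∀ t ∈ range (j + 1),
      m.choose (i + t) ^ 2 * ((i + t).choose i * (i + t).choose j)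
        = (m.choose i * m.choose j) * (j.choose t * i.choose (j - t)) := by
    intro t ht
    have ht' : t ≤ j := Nat.lt_succ_iff.mp (mem_range.mp ht)
    have hkm : i + t ≤ m := by omega
    have e1 : m.choose (i + t) * (i + t).choose i = m.choose i * j.choose t := by
      rw [aux_choose_mul_choose (Nat.le_add_right i t) hkm, Nat.add_sub_cancel_left]
      have : m - i = j := by omega
      rw [this]
    have e2 : m.choose (i + t) * (i + t).choose j = m.choose j * i.choose (j - t) := by
      rw [aux_choose_mul_choose (by omega : j ≤ i + t) hkm]
      have h1 : m - j = i := by omega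
      have h2 : i + t - j = i - (j - t) := by omega
      rw [h1, h2, Nat.choose_symm (by omega : j - t ≤ i)]
    calc m.choose (i + t) ^ 2 * ((i + t).choose i * (i + t).choose j)
        = (m.choose (i + t) * (i + t).choose i) * (m.choose (i + t) * (i + t).choose j) := by
          ring
      _ = (m.choose i * j.choose t) * (m.choose j * i.choose (j - t)) := by rw [e1, e2]
      _ = (m.choose i * m.choose j) * (j.choose t * i.choose (j - t)) := by ring
  rw [Finset.sum_congr rfl step, ← Finset.mul_sum]
  have vdm : ∑ t ∈ range (j + 1), j.choose t * i.choose (j - t) = m.choose j := by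
    have h := Nat.add_choose_eq j i j
    rw [Finset.Nat.sum_antidiagonal_eq_sum_range_succ_mk] at h
    rw [← h]
    congr 1
    omega
  rw [vdm]
  have hsym : m.choose j = m.choose i := by
    have : j = m - i := by omega
    rw [this, Nat.choose_symm hi]
  rw [hsym]
  ring

/-- Strehl's identity. -/
lemma aux_strehl (m : ℕ) :
    ∑ k ∈ range (m + 1), m.choose k ^ 3
      = ∑ k ∈ range (m + 1), m.choose k ^ 2 * (2 * k).choose m := by
  have h1 : ∑ k ∈ range (m + 1), m.choose k ^ 2 * (2 * k).choose m
      = ∑ p ∈ Finset.HasAntidiagonal.antidiagonal m, ∑ k ∈ range (m + 1),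
          m.choose k ^ 2 * (k.choose p.1 * k.choose p.2) := by
    rw [← Finset.sum_comm]
    refine Finset.sum_congr rfl fun k _ => ?_
    rw [two_mul, Nat.add_choose_eq, Finset.mul_sum]
  have h2 : ∀ p ∈ Finset.HasAntidiagonal.antidiagonal m,
      (∑ k ∈ range (m + 1), m.choose k ^ 2 * (k.choose p.1 * k.choose p.2))
        = m.choose p.1 ^ 3 := by
    rintro ⟨i, j⟩ hp
    rw [Finset.HasAntidiagonal.mem_antidiagonal] at hp
    rcases le_total j i with h | h
    · exact aux_inner_sum hp h
    · have hswap : ∑ k ∈ range (m + 1), m.choose k ^ 2 * (k.choose i * k.choose j)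
          = m.choose j ^ 3 := by
        rw [Finset.sum_congr rfl fun k _ => by rw [mul_comm (k.choose i)]]
        exact aux_inner_sum (by omega) h
      rw [hswap]
      have hj : j = m - i := by omega
      rw [hj, Nat.choose_symm (by omega : i ≤ m)]
  rw [h1, Finset.sum_congr rfl h2, Finset.Nat.sum_antidiagonal_eq_sum_range_succ_mk]

/-- Binary digit sum. -/
def auxS (x : ℕ) : ℕ := (Nat.digits 2 x).sum

lemma aux_val_add (a b : ℕ) :
    auxS a + auxS b = auxS (a + b) + padicValNat 2 ((a + b).choose a) := by
  have key := Nat.add_choose_mul_factorial_mul_factorial b a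
  rw [add_comm b a] at key
  have hc : (a + b).choose a ≠ 0 := (Nat.choose_pos (Nat.le_add_right a b)).ne'
  have h2 : padicValNat 2 ((a + b).choose a) + padicValNat 2 (Nat.factorial b)
      + padicValNat 2 (Nat.factorial a) = padicValNat 2 (Nat.factorial (a + b)) := by
    have h := congrArg (padicValNat 2) key
    rwa [padicValNat.mul (mul_ne_zero hc (Nat.factorial_ne_zero b)) (Nat.factorial_ne_zero a),
      padicValNat.mul hc (Nat.factorial_ne_zero b)] at h
  have leg : ∀ x : ℕ, padicValNat 2 (Nat.factorial x) = x - auxS x := by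
    intro x
    have := sub_one_mul_padicValNat_factorial (p := 2) x
    simpa [auxS] using this
  have dig : ∀ x : ℕ, auxS x ≤ x := fun x => Nat.digit_sum_le 2 x
  have la := leg a; have lb := leg b; have lab := leg (a + b)
  have da := dig a; have db := dig b; have dab := dig (a + b)
  omega

lemma aux_S_subadd (a b : ℕ) : auxS (a + b) ≤ auxS a + auxS b := by
  have := aux_val_add a b
  omega

lemma aux_S_two_mul (x : ℕ) : auxS (2 * x) = auxS x := by
  rcases Nat.eq_zero_or_pos x with hx | hx
  · simp [hx]
  · unfold auxS
    rw [Nat.digits_def' (by norm_num : (1:ℕ) < 2) (by omega : 0 < 2 * x)]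
    simp [Nat.mul_mod_right, Nat.mul_div_cancel_left _ (by norm_num : (0:ℕ) < 2)]

lemma aux_S_two_mul_add_one (x : ℕ) : auxS (2 * x + 1) = auxS x + 1 := by
  unfold auxS
  rw [Nat.digits_def' (by norm_num : (1:ℕ) < 2) (by omega : 0 < 2 * x + 1)]
  have h1 : (2 * x + 1) % 2 = 1 := by omega
  have h2 : (2 * x + 1) / 2 = x := by omega
  rw [h1, h2]
  simp [add_comm]

/-- Each Strehl summand for `f_{2n}` is divisible by `2^{S(n)}`. -/
lemma aux_even_term (n k : ℕ) (hk : k ≤ 2 * n) :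
    2 ^ auxS n ∣ (2 * n).choose k ^ 2 * (2 * k).choose (2 * n) := by
  rcases lt_or_ge k n with h | h
  · have hz : (2 * k).choose (2 * n) = 0 := Nat.choose_eq_zero_of_lt (by omega)
    simp [hz]
  · have hid : (2 * k).choose (2 * n) * (2 * n).choose k
        = (2 * k).choose k * k.choose (2 * n - k) := by
      rw [aux_choose_mul_choose hk (by omega : 2 * n ≤ 2 * k)]
      congr 2
      omega
    have key : (2 * n).choose k ^ 2 * (2 * k).choose (2 * n)
        = (2 * n).choose k * ((2 * k).choose k * k.choose (2 * n - k)) := by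
      rw [← hid]; ring
    rw [key]
    refine Dvd.dvd.mul_left ?_ _
    have hv : auxS n ≤ padicValNat 2 ((2 * k).choose k)
        + padicValNat 2 (k.choose (2 * n - k)) := by
      have h2 : auxS k + auxS k = auxS (2 * k) + padicValNat 2 ((2 * k).choose k) := by
        rw [two_mul]; exact aux_val_add k k
      have h3 := aux_val_add (2 * n - k) (2 * (k - n))
      have harg : (2 * n - k) + 2 * (k - n) = k := by omega
      rw [harg] at h3
      have hs1 := aux_S_two_mul k
      have hs2 := aux_S_two_mul (k - n)
      have hsub := aux_S_subadd (2 * n - k) (k - n)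
      have harg2 : (2 * n - k) + (k - n) = n := by omega
      rw [harg2] at hsub
      omega
    calc 2 ^ auxS n ∣ 2 ^ (padicValNat 2 ((2 * k).choose k)
          + padicValNat 2 (k.choose (2 * n - k))) := pow_dvd_pow 2 hv
      _ ∣ (2 * k).choose k * k.choose (2 * n - k) := by
          rw [pow_add]
          exact mul_dvd_mul pow_padicValNat_dvd pow_padicValNat_dvd

/-- Each Strehl summand for `f_{2n+1}` is divisible by `2^{S(n)+1}`. -/
lemma aux_odd_term (n k : ℕ) (hk : k ≤ 2 * n + 1) :
    2 ^ (auxS n + 1) ∣ (2 * n + 1).choose k ^ 2 * (2 * k).choose (2 * n + 1) := by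
  rcases lt_or_ge k (n + 1) with h | h
  · have hz : (2 * k).choose (2 * n + 1) = 0 := Nat.choose_eq_zero_of_lt (by omega)
    simp [hz]
  · have hid : (2 * k).choose (2 * n + 1) * (2 * n + 1).choose k
        = (2 * k).choose k * k.choose (2 * n + 1 - k) := by
      rw [aux_choose_mul_choose hk (by omega : 2 * n + 1 ≤ 2 * k)]
      congr 2
      omega
    have key : (2 * n + 1).choose k ^ 2 * (2 * k).choose (2 * n + 1)
        = (2 * n + 1).choose k * (2 * k).choose k * k.choose (2 * n + 1 - k) := by
      rw [show (2 * n + 1).choose k * (2 * k).choose k * k.choose (2 * n + 1 - k)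
          = (2 * n + 1).choose k * ((2 * k).choose k * k.choose (2 * n + 1 - k)) from by ring,
        ← hid]
      ring
    rw [key]
    have h1 := aux_val_add k (2 * n + 1 - k)
    have harg1 : k + (2 * n + 1 - k) = 2 * n + 1 := by omega
    rw [harg1] at h1
    have h2 : auxS k + auxS k = auxS (2 * k) + padicValNat 2 ((2 * k).choose k) := by
      rw [two_mul]; exact aux_val_add k k
    have h3 := aux_val_add (2 * n + 1 - k) (2 * (k - n - 1) + 1)
    have harg3 : (2 * n + 1 - k) + (2 * (k - n - 1) + 1) = k := by omega
    rw [harg3] at h3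
    have hs0 := aux_S_two_mul_add_one n
    have hs1 := aux_S_two_mul k
    have hs2 := aux_S_two_mul_add_one (k - n - 1)
    have hsub := aux_S_subadd (2 * n + 1 - k) (k - n - 1)
    have harg2 : (2 * n + 1 - k) + (k - n - 1) = n := by omega
    rw [harg2] at hsub
    have hv : auxS n + 1 ≤ padicValNat 2 ((2 * n + 1).choose k)
        + padicValNat 2 ((2 * k).choose k) + padicValNat 2 (k.choose (2 * n + 1 - k)) := by
      omega
    calc 2 ^ (auxS n + 1)
        ∣ 2 ^ (padicValNat 2 ((2 * n + 1).choose k) + padicValNat 2 ((2 * k).choose k)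
            + padicValNat 2 (k.choose (2 * n + 1 - k))) := pow_dvd_pow 2 hv
      _ ∣ (2 * n + 1).choose k * (2 * k).choose k * k.choose (2 * n + 1 - k) := by
          rw [pow_add, pow_add]
          exact mul_dvd_mul (mul_dvd_mul pow_padicValNat_dvd pow_padicValNat_dvd)
            pow_padicValNat_dvd

lemma aux_V_eq (n : ℕ) : padicValNat 2 ((2 * n).choose n) = auxS n := by
  have h : auxS n + auxS n = auxS (2 * n) + padicValNat 2 ((2 * n).choose n) := by
    rw [two_mul]; exact aux_val_add n n
  have := aux_S_two_mul n
  omega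

/-- Corollary 2: with `f_n = ∑_{k=0}^{n} C(n,k)^3` the `n`-th Franel number,
`2^(v_2(C(2n,n)))` divides `f_{2n}` and `2^(1 + v_2(C(2n,n)))` divides `f_{2n+1}`. -/
theorem stmt_5 (n : ℕ) :
    2 ^ padicValNat 2 ((2 * n).choose n) ∣
      ∑ k ∈ range (2 * n + 1), (2 * n).choose k ^ 3 ∧
    2 ^ (1 + padicValNat 2 ((2 * n).choose n)) ∣
      ∑ k ∈ range (2 * n + 1 + 1), (2 * n + 1).choose k ^ 3 := by
  rw [aux_V_eq n]
  constructor
  · rw [aux_strehl (2 * n)]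
    exact Finset.dvd_sum fun k hk =>
      aux_even_term n k (by have := mem_range.mp hk; omega)
  · rw [show 1 + auxS n = auxS n + 1 from add_comm 1 _]
    rw [show (2 * n + 1 + 1) = (2 * n + 1) + 1 from rfl, aux_strehl (2 * n + 1)]
    exact Finset.dvd_sum fun k hk =>
      aux_odd_term n k (by have := mem_range.mp hk; omega)
end

section
/- Let n be a natural number and let D_n = ∑_{k=0}^{n} (C(n,k))^2 · 2^k denote the n-th central Delannoy number. Then the 3-adic valuation of D_{2n} equals the 3-adic valuation of the central binomial coefficient C(2n,n): v_3(D_{2n}) = v_3(C(2n,n)). -/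
open Finset

/-- Unconditional subset-of-subset identity. -/
private lemma chooseI (m a b : ℕ) :
    m.choose (a + b) * (a + b).choose a = m.choose a * (m - a).choose b := by
  rcases le_or_gt (a + b) m with h | h
  · simpa using Nat.choose_mul (n := m) (Nat.le_add_right a b)
  · rw [Nat.choose_eq_zero_of_lt h, Nat.zero_mul]
    rcases le_or_gt a m with ha | ha
    · rw [Nat.choose_eq_zero_of_lt (by omega : m - a < b), Nat.mul_zero]
    · rw [Nat.choose_eq_zero_of_lt ha, Nat.zero_mul]

private lemma key1 {m k j : ℕ} (hjk : j ≤ k) :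
    m.choose (2*j) * (2*j).choose j * (m - 2*j).choose (k - j)
      = m.choose k * (k.choose j * (m - k).choose j) := by
  have h1 : m.choose (2*j) * (2*j).choose j = m.choose j * (m - j).choose j := by
    rw [two_mul]; exact chooseI m j j
  have h2 : (m - j).choose j * (m - 2*j).choose (k - j)
      = (m - j).choose k * k.choose j := by
    have h := chooseI (m - j) j (k - j)
    rw [show j + (k - j) = k by omega, show m - j - j = m - 2*j by omega] at h
    exact h.symm
  have h3 : m.choose j * (m - j).choose k = m.choose (j + k) * (j + k).choose j :=
    (chooseI m j k).symm
  have h4 : m.choose k * (m - k).choose j = m.choose (k + j) * (k + j).choose k :=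
    (chooseI m k j).symm
  have h5 : (j + k).choose j = (j + k).choose k := by
    rw [← Nat.choose_symm (by omega : j ≤ j + k), Nat.add_sub_cancel_left]
  calc m.choose (2*j) * (2*j).choose j * (m - 2*j).choose (k - j)
      = m.choose j * ((m - j).choose j * (m - 2*j).choose (k - j)) := by
        rw [h1, mul_assoc]
    _ = m.choose j * ((m - j).choose k * k.choose j) := by rw [h2]
    _ = m.choose j * (m - j).choose k * k.choose j := by ring
    _ = m.choose (j + k) * (j + k).choose j * k.choose j := by rw [h3]
    _ = m.choose (k + j) * (k + j).choose k * k.choose j := by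
        rw [h5, add_comm j k]
    _ = m.choose k * (m - k).choose j * k.choose j := by rw [← h4]
    _ = m.choose k * (k.choose j * (m - k).choose j) := by ring

private lemma vand {m k : ℕ} (h : k ≤ m) :
    ∑ j ∈ range (k+1), k.choose j * (m - k).choose j = m.choose k := by
  have h1 := Nat.add_choose_eq k (m - k) k
  rw [show k + (m - k) = m by omega,
    Finset.Nat.sum_antidiagonal_eq_sum_range_succ_mk] at h1
  rw [h1]
  conv_rhs => rw [← Finset.sum_range_reflect]
  apply Finset.sum_congr rfl
  intro j hj
  simp only [mem_range] at hj
  have hj' : j ≤ k := by omega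
  simp only
  rw [show k + 1 - 1 - j = k - j by omega, show k - (k - j) = j by omega,
    Nat.choose_symm hj']

private lemma sq_eq {m k : ℕ} (h : k ≤ m) :
    m.choose k ^ 2
      = ∑ j ∈ range (k+1), m.choose (2*j) * (2*j).choose j * (m - 2*j).choose (k - j) := by
  rw [Finset.sum_congr rfl
    (fun j hj => key1 (by simpa using Nat.lt_succ_iff.mp (mem_range.mp hj))),
    ← Finset.mul_sum, vand h, sq]

private lemma ident (m : ℕ) :
    ∑ k ∈ range (m+1), m.choose k ^ 2 * 2 ^ k
      = ∑ j ∈ range (m+1), m.choose (2*j) * (2*j).choose j * 2^j * 3^(m - 2*j) := by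
  have step1 : ∀ k ∈ range (m+1),
      m.choose k ^ 2 * 2 ^ k
        = ∑ j ∈ range (k+1),
            m.choose (2*j) * (2*j).choose j * (m - 2*j).choose (k - j) * 2^k := by
    intro k hk
    rw [sq_eq (Nat.lt_succ_iff.mp (mem_range.mp hk)), Finset.sum_mul]
  rw [Finset.sum_congr rfl step1]
  have swap :
      ∑ k ∈ range (m+1), ∑ j ∈ range (k+1),
          m.choose (2*j) * (2*j).choose j * (m - 2*j).choose (k - j) * 2^k
        = ∑ j ∈ range (m+1), ∑ k ∈ Ico j (m+1),
            m.choose (2*j) * (2*j).choose j * (m - 2*j).choose (k - j) * 2^k := by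
    simp_rw [Finset.range_eq_Ico]
    exact (Finset.sum_Ico_Ico_comm 0 (m+1)
      (fun j k => m.choose (2*j) * (2*j).choose j * (m - 2*j).choose (k - j) * 2^k)).symm
  rw [swap]
  apply Finset.sum_congr rfl
  intro j hj
  simp only [mem_range] at hj
  rcases le_or_gt (2*j) m with h2j | h2j
  · rw [Finset.sum_Ico_eq_sum_range]
    have e1 : ∀ i ∈ range (m + 1 - j),
        m.choose (2*j) * (2*j).choose j * (m - 2*j).choose (j + i - j) * 2^(j+i)
          = (m.choose (2*j) * (2*j).choose j * 2^j) * ((m - 2*j).choose i * 2^i) := by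
      intro i hi
      rw [Nat.add_sub_cancel_left, pow_add]
      ring
    rw [Finset.sum_congr rfl e1, ← Finset.mul_sum]
    have trunc : ∑ i ∈ range (m + 1 - j), (m - 2*j).choose i * 2^i
        = ∑ i ∈ range (m - 2*j + 1), (m - 2*j).choose i * 2^i := by
      refine (Finset.sum_subset (Finset.range_subset_range.mpr (by omega)) ?_).symm
      intro x hx hnx
      simp only [mem_range] at hx hnx
      rw [Nat.choose_eq_zero_of_lt (by omega), Nat.zero_mul]
    have pow3 : ∑ i ∈ range (m - 2*j + 1), (m - 2*j).choose i * 2^i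
        = 3 ^ (m - 2*j) := by
      have h := add_pow 2 1 (m - 2*j) (R := ℕ)
      norm_num at h
      rw [h]
      apply Finset.sum_congr rfl
      intro i _
      ring
    rw [trunc, pow3, mul_assoc]
  · rw [Nat.choose_eq_zero_of_lt h2j]
    simp

private lemma key2 {n j : ℕ} (hj : j ≤ n) :
    (2*n).choose (2*j) * (2*j).choose j * (2*(n-j)).choose (n-j)
      = (2*n).choose n * n.choose j ^ 2 := by
  have h := key1 (m := 2*n) (k := n) (j := j) hj
  rw [show 2*n - 2*j = 2*(n-j) by omega, show 2*n - n = n by omega] at h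
  rw [h]; ring

private lemma cbv {d : ℕ} (hd : d ≠ 0) : padicValNat 3 ((2*d).choose d) < 2*d := by
  have h1 : ((2*d).choose d).factorization 3 ≤ Nat.log 3 (2*d) :=
    Nat.factorization_choose_le_log
  rw [Nat.factorization_def _ (by norm_num)] at h1
  have h2 : Nat.log 3 (2*d) < 2*d :=
    Nat.log_lt_of_lt_pow (by omega) (Nat.lt_pow_self (by norm_num))
  omega

private lemma dvd_term {n j : ℕ} (hj : j < n) :
    3 ^ (padicValNat 3 ((2*n).choose n) + 1) ∣
      (2*n).choose (2*j) * (2*j).choose j * 2^j * 3^(2*n - 2*j) := by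
  haveI : Fact (Nat.Prime 3) := ⟨by norm_num⟩
  set v := padicValNat 3 ((2*n).choose n) with hv
  set d := n - j with hdd
  have hd0 : d ≠ 0 := by omega
  have h2d : 2*n - 2*j = 2*d := by omega
  rcases le_or_gt (v+1) (2*d) with h | h
  · apply dvd_mul_of_dvd_right
    rw [h2d]
    exact pow_dvd_pow 3 h
  · -- 2*d ≤ v
    have hApos : (2*n).choose (2*j) * (2*j).choose j ≠ 0 := by
      have := Nat.choose_pos (show 2*j ≤ 2*n by omega)
      have := Nat.choose_pos (show j ≤ 2*j by omega)
      positivity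
    have hBpos : (2*d).choose d ≠ 0 := (Nat.choose_pos (by omega)).ne'
    have hCpos : (2*n).choose n ≠ 0 := (Nat.choose_pos (by omega)).ne'
    have hnjpos : n.choose j ≠ 0 := (Nat.choose_pos (by omega)).ne'
    have hk := key2 hj.le
    have hval := congrArg (padicValNat 3) hk
    rw [padicValNat.mul hApos hBpos, padicValNat.mul hCpos (by positivity),
      padicValNat.pow _ 2] at hval
    have hB : padicValNat 3 ((2*d).choose d) < 2*d := cbv hd0
    have hA : v + 1 - 2*d ≤ padicValNat 3 ((2*n).choose (2*j) * (2*j).choose j) := by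
      omega
    have hdvdA : 3 ^ (v + 1 - 2*d) ∣ (2*n).choose (2*j) * (2*j).choose j :=
      (pow_dvd_pow 3 hA).trans pow_padicValNat_dvd
    have : (3:ℕ) ^ (v + 1) = 3 ^ (v + 1 - 2*d) * 3 ^ (2*d) := by
      rw [← pow_add]; congr 1; omega
    rw [this, h2d]
    calc 3 ^ (v + 1 - 2*d) * 3 ^ (2*d)
        ∣ ((2*n).choose (2*j) * (2*j).choose j) * 3 ^ (2*d) :=
          mul_dvd_mul hdvdA dvd_rfl
      _ ∣ (2*n).choose (2*j) * (2*j).choose j * 2^j * 3^(2*d) :=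
          mul_dvd_mul (dvd_mul_right _ _) dvd_rfl

private lemma top_val (n : ℕ) :
    padicValNat 3 ((2*n).choose n * 2^n) = padicValNat 3 ((2*n).choose n) := by
  haveI : Fact (Nat.Prime 3) := ⟨by norm_num⟩
  have h0 : padicValNat 3 (2^n) = 0 :=
    padicValNat.eq_zero_of_not_dvd (fun h => by
      have := Nat.Prime.dvd_of_dvd_pow (p := 3) (by norm_num) h
      omega)
  rw [padicValNat.mul (Nat.choose_pos (by omega)).ne' (by positivity), h0, add_zero]

/-- Theorem 3, Eq. (23): with `D_n = ∑_{k=0}^{n} C(n,k)^2 2^k` the `n`-th central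
Delannoy number, `v_3(D_{2n}) = v_3(C(2n,n))`. -/
theorem stmt_6 (n : ℕ) :
    padicValNat 3 (∑ k ∈ range (2 * n + 1), (2 * n).choose k ^ 2 * 2 ^ k) =
      padicValNat 3 ((2 * n).choose n) := by
  rcases Nat.eq_zero_or_pos n with rfl | hn
  · norm_num
  haveI : Fact (Nat.Prime 3) := ⟨by norm_num⟩
  have hid : ∑ k ∈ range (2*n+1), (2*n).choose k ^ 2 * 2^k
      = ∑ j ∈ range (n+1), (2*n).choose (2*j) * (2*j).choose j * 2^j * 3^(2*n - 2*j) := by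
    rw [show 2*n+1 = 2*n+1 from rfl, ident (2*n)]
    refine (Finset.sum_subset (Finset.range_subset_range.mpr (by omega)) ?_).symm
    intro x hx hnx
    simp only [mem_range] at hx hnx
    rw [Nat.choose_eq_zero_of_lt (by omega)]
    ring
  rw [hid, Finset.sum_range_succ]
  have htop : (2*n).choose (2*n) * (2*n).choose n * 2^n * 3^(2*n - 2*n)
      = (2*n).choose n * 2^n := by
    rw [Nat.choose_self, Nat.sub_self, pow_zero]
    ring
  rw [show 2*n = 2*n from rfl] at htop
  rw [htop]
  set v := padicValNat 3 ((2*n).choose n) with hv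
  set S := ∑ j ∈ range n, (2*n).choose (2*j) * (2*j).choose j * 2^j * 3^(2*n - 2*j) with hS
  set c := (2*n).choose n * 2^n with hc
  have hSdvd : 3 ^ (v+1) ∣ S :=
    Finset.dvd_sum (fun j hj => dvd_term (mem_range.mp hj))
  have hcpos : c ≠ 0 := by
    have := Nat.choose_pos (show n ≤ 2*n by omega)
    positivity
  have hD0 : S + c ≠ 0 := by omega
  have hcv : padicValNat 3 c = v := top_val n
  have hcd : 3 ^ v ∣ c := by
    rw [← hcv]; exact pow_padicValNat_dvd
  have dvd1 : 3 ^ v ∣ S + c :=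
    dvd_add ((pow_dvd_pow 3 (Nat.le_succ v)).trans hSdvd) hcd
  have nd : ¬ 3 ^ (v+1) ∣ S + c := by
    intro hdd
    have hcd' : 3 ^ (v+1) ∣ c := by
      have := Nat.dvd_sub hdd hSdvd
      rwa [Nat.add_sub_cancel_left] at this
    have := (padicValNat_dvd_iff_le hcpos).mp hcd'
    omega
  have h1 : v ≤ padicValNat 3 (S + c) := (padicValNat_dvd_iff_le hD0).mp dvd1
  have h2 : ¬ (v + 1 ≤ padicValNat 3 (S + c)) := fun hh =>
    nd ((padicValNat_dvd_iff_le hD0).mpr hh)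
  omega
end

section
/- Let n be a natural number and let D_n = ∑_{k=0}^{n} (C(n,k))^2 · 2^k denote the n-th central Delannoy number. Then the 3-adic valuation of D_{2n+1} satisfies v_3(D_{2n+1}) = 1 + v_3(2n+1) + v_3(C(2n,n)). -/
open Finset

namespace Stmt7Aux

open Nat Polynomial

instance : Fact (Nat.Prime 3) := ⟨by norm_num⟩

lemma coeff12 (n k : ℕ) : ((1 + C 2 * X : ℕ[X]) ^ n).coeff k = n.choose k * 2 ^ k := by
  rw [add_comm, add_pow]
  simp only [one_pow, mul_one, mul_pow, ← C_pow, finset_sum_coeff, one_mul,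
    ← C_eq_natCast, ← C_mul, coeff_C_mul, coeff_mul_C, coeff_X_pow,
    mul_ite, mul_one, mul_zero, ite_mul, zero_mul, Nat.cast_id]
  rw [Finset.sum_ite_eq (range (n+1)) k (fun x => 2 ^ x * n.choose x)]
  split_ifs with h
  · ring
  · simp at h
    rw [Nat.choose_eq_zero_of_lt (by omega)]
    ring

lemma coeff122 (n k : ℕ) : ((1 + C 2 * X ^ 2 : ℕ[X]) ^ n).coeff k =
    if 2 ∣ k then n.choose (k / 2) * 2 ^ (k / 2) else 0 := by
  have h : ((1 + C 2 * X ^ 2 : ℕ[X]) ^ n) = expand ℕ 2 ((1 + C 2 * X) ^ n) := by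
    simp [map_pow, expand_C, map_ofNat]
  rw [h, coeff_expand (by norm_num)]
  split_ifs with hd
  · exact coeff12 n (k / 2)
  · rfl


lemma sum_range_double {M : Type*} [AddCommMonoid M] (g : ℕ → M) (n : ℕ) :
    ∑ i ∈ range (2 * n), g i = ∑ j ∈ range n, (g (2 * j) + g (2 * j + 1)) := by
  induction n with
  | zero => simp
  | succ n ih =>
      have h : 2 * (n + 1) = 2 * n + 1 + 1 := by ring
      rw [h, sum_range_succ, sum_range_succ, ih, sum_range_succ, add_assoc]


lemma key_identity (m : ℕ) :
    ∑ k ∈ range (2 * m + 1 + 1), (2 * m + 1).choose k ^ 2 * 2 ^ k =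
      ∑ j ∈ range (m + 1),
        3 ^ (2 * j + 1) * ((2 * m + 1).choose (2 * j + 1)) *
          ((2 * (m - j)).choose (m - j) * 2 ^ (m - j)) := by
  set N := 2 * m + 1 with hN
  have hpoly : ((1 + X) ^ N * (1 + C 2 * X) ^ N : ℕ[X]) =
      (C 3 * X + (1 + C 2 * X ^ 2)) ^ N := by
    rw [← mul_pow]
    have h3 : (C 3 : ℕ[X]) = C 1 + C 2 := by rw [← C_add]
    rw [h3, C_1]
    ring
  -- LHS coefficient
  have hL : (((1 + X) ^ N * (1 + C 2 * X) ^ N : ℕ[X])).coeff N =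
      ∑ k ∈ range (N + 1), N.choose k ^ 2 * 2 ^ k := by
    rw [coeff_mul, Finset.Nat.sum_antidiagonal_eq_sum_range_succ_mk]
    rw [← Finset.sum_range_reflect (fun k => N.choose k ^ 2 * 2 ^ k) (N + 1)]
    refine Finset.sum_congr rfl fun k hk => ?_
    simp only [coeff_one_add_X_pow, coeff12]
    have hkN : k ≤ N := by simp at hk; omega
    have h1 : N + 1 - 1 - k = N - k := by omega
    rw [h1, Nat.choose_symm hkN]
    simp only [Nat.cast_id]
    ring
  -- RHS coefficient
  have hR : ((C 3 * X + (1 + C 2 * X ^ 2)) ^ N : ℕ[X]).coeff N =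
      ∑ j ∈ range (m + 1),
        3 ^ (2 * j + 1) * (N.choose (2 * j + 1)) *
          ((2 * (m - j)).choose (m - j) * 2 ^ (m - j)) := by
    rw [add_pow, finset_sum_coeff]
    have hterm : ∀ i ∈ range (N + 1),
        ((C 3 * X) ^ i * (1 + C 2 * X ^ 2) ^ (N - i) * ((N.choose i : ℕ) : ℕ[X])).coeff N =
        3 ^ i * N.choose i *
          (if 2 ∣ (N - i) then (N - i).choose ((N - i) / 2) * 2 ^ ((N - i) / 2) else 0) := by
      intro i hi
      have hiN : i ≤ N := by simp at hi; omega
      have hXpow : ∀ (q : ℕ[X]), (X ^ i * q).coeff N = q.coeff (N - i) := by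
        intro q
        conv_lhs => rw [show N = (N - i) + i by omega]
        rw [coeff_X_pow_mul]
      rw [mul_pow, ← C_pow, ← C_eq_natCast, coeff_mul_C, mul_assoc, coeff_C_mul, hXpow, coeff122]
      simp only [Nat.cast_id]
      split_ifs with h
      · ring
      · ring
    rw [Finset.sum_congr rfl hterm]
    have hNN : N + 1 = 2 * (m + 1) := by omega
    rw [hNN, sum_range_double]
    refine Finset.sum_congr rfl fun j hj => ?_
    have hjm : j ≤ m := by simp at hj; omega
    have he : ¬ 2 ∣ (N - 2 * j) := by omega
    have ho : 2 ∣ (N - (2 * j + 1)) := by omega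
    rw [if_neg he, if_pos ho]
    have h2 : N - (2 * j + 1) = 2 * (m - j) := by omega
    have h3 : (2 * (m - j)) / 2 = m - j := by omega
    rw [h2, h3]
    ring
  calc ∑ k ∈ range (N + 1), N.choose k ^ 2 * 2 ^ k
      = (((1 + X) ^ N * (1 + C 2 * X) ^ N : ℕ[X])).coeff N := hL.symm
    _ = ((C 3 * X + (1 + C 2 * X ^ 2)) ^ N : ℕ[X]).coeff N := by rw [hpoly]
    _ = _ := hR


lemma F_mono {a b : ℕ} (h : a ≤ b) :
    padicValNat 3 (a !) ≤ padicValNat 3 (b !) := by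
  have hd : (3:ℕ) ^ padicValNat 3 (a !) ∣ b ! :=
    dvd_trans pow_padicValNat_dvd (Nat.factorial_dvd_factorial h)
  exact (padicValNat_dvd_iff_le (Nat.factorial_ne_zero b)).mp hd

lemma F_choose {n k : ℕ} (h : k ≤ n) :
    padicValNat 3 (n.choose k) + padicValNat 3 (k !) + padicValNat 3 ((n - k)!) =
      padicValNat 3 (n !) := by
  have e := Nat.choose_mul_factorial_mul_factorial h
  have h1 : n.choose k ≠ 0 := Nat.ne_of_gt (Nat.choose_pos h)
  rw [← e, padicValNat.mul (by positivity) (Nat.factorial_ne_zero _),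
    padicValNat.mul h1 (Nat.factorial_ne_zero _)]

lemma F_odd_le (j : ℕ) : padicValNat 3 ((2 * j + 1)!) ≤ j := by
  have h := sub_one_mul_padicValNat_factorial (p := 3) (2 * j + 1)
  have h2 : (3 - 1) * padicValNat 3 ((2 * j + 1)!) ≤ 2 * j + 1 := by
    rw [h]; omega
  omega

lemma F_succ (n : ℕ) :
    padicValNat 3 (n + 1) + padicValNat 3 (n !) = padicValNat 3 ((n + 1)!) := by
  rw [Nat.factorial_succ, padicValNat.mul (by omega) (Nat.factorial_ne_zero _)]

/-- the key termwise inequality -/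
lemma key_ineq {m j : ℕ} (hj1 : 1 ≤ j) (hjm : j ≤ m) :
    2 + padicValNat 3 (2 * m + 1) + padicValNat 3 ((2 * m).choose m) ≤
      (2 * j + 1) + padicValNat 3 ((2 * m + 1).choose (2 * j + 1)) +
        padicValNat 3 ((2 * (m - j)).choose (m - j)) := by
  have e1 := F_choose (n := 2 * m + 1) (k := 2 * j + 1) (by omega)
  rw [show 2 * m + 1 - (2 * j + 1) = 2 * (m - j) by omega] at e1
  have e2 := F_choose (n := 2 * (m - j)) (k := m - j) (by omega)
  rw [show 2 * (m - j) - (m - j) = m - j by omega] at e2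
  have e3 := F_choose (n := 2 * m) (k := m) (by omega)
  rw [show 2 * m - m = m by omega] at e3
  have e4 := F_succ (2 * m)
  have i5 := F_mono (a := m - j) (b := m) (by omega)
  have i6 := F_odd_le j
  omega


lemma val_two_pow (k : ℕ) : padicValNat 3 (2 ^ k) = 0 := by
  apply padicValNat.eq_zero_of_not_dvd
  intro h
  have := Nat.Prime.dvd_of_dvd_pow Nat.prime_three h
  norm_num at this


end Stmt7Aux

open Stmt7Aux in
/-- Theorem 3, Eq. (22): with `D_n = ∑_{k=0}^{n} C(n,k)^2 2^k` the `n`-th central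
Delannoy number, `v_3(D_{2n+1}) = 1 + v_3(2n+1) + v_3(C(2n,n))`. -/
theorem stmt_7 (n : ℕ) :
    padicValNat 3 (∑ k ∈ range (2 * n + 1 + 1), (2 * n + 1).choose k ^ 2 * 2 ^ k) =
      1 + padicValNat 3 (2 * n + 1) + padicValNat 3 ((2 * n).choose n) := by
  set V := 1 + padicValNat 3 (2 * n + 1) + padicValNat 3 ((2 * n).choose n) with hV
  set f : ℕ → ℕ := fun j => 3 ^ (2 * j + 1) * ((2 * n + 1).choose (2 * j + 1)) *
          ((2 * (n - j)).choose (n - j) * 2 ^ (n - j)) with hf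
  rw [key_identity n]
  rw [Finset.sum_range_succ' f n]
  -- f 0 value and valuation
  have hf0 : f 0 = 3 * ((2 * n + 1) * ((2 * n).choose n * 2 ^ n)) := by
    simp [hf, Nat.choose_one_right]
    ring
  have hchoose_pos : 0 < (2 * n).choose n := Nat.choose_pos (by omega)
  have hf0ne : f 0 ≠ 0 := by
    rw [hf0]; positivity
  have hval0 : padicValNat 3 (f 0) = V := by
    rw [hf0, padicValNat.mul (by norm_num) (by positivity),
      padicValNat.mul (by omega) (by positivity),
      padicValNat.mul (Nat.ne_of_gt hchoose_pos) (by positivity),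
      padicValNat.self (by norm_num), val_two_pow]
    omega
  -- tail divisibility
  have htail : (3 : ℕ) ^ (V + 1) ∣ ∑ i ∈ range n, f (i + 1) := by
    apply Finset.dvd_sum
    intro i hi
    simp only [Finset.mem_range] at hi
    have hij : 1 ≤ i + 1 := by omega
    have him : i + 1 ≤ n := by omega
    have hd1 : (3:ℕ) ^ padicValNat 3 ((2 * n + 1).choose (2 * (i+1) + 1)) ∣
        (2 * n + 1).choose (2 * (i+1) + 1) := pow_padicValNat_dvd
    have hd2 : (3:ℕ) ^ padicValNat 3 ((2 * (n - (i+1))).choose (n - (i+1))) ∣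
        (2 * (n - (i+1))).choose (n - (i+1)) := pow_padicValNat_dvd
    have hdvd : (3:ℕ) ^ (2 * (i+1) + 1 + padicValNat 3 ((2 * n + 1).choose (2 * (i+1) + 1))
        + padicValNat 3 ((2 * (n - (i+1))).choose (n - (i+1)))) ∣ f (i + 1) := by
      rw [hf]
      simp only [pow_add]
      exact mul_dvd_mul (mul_dvd_mul dvd_rfl hd1) (dvd_mul_of_dvd_left hd2 _)
    refine dvd_trans (pow_dvd_pow 3 ?_) hdvd
    have := key_ineq hij him (m := n)
    omega
  -- S ≠ 0
  have hSne : (∑ i ∈ range n, f (i + 1)) + f 0 ≠ 0 := by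
    intro h
    exact hf0ne (by omega)
  -- 3^V divides S
  have hdvdS : (3:ℕ) ^ V ∣ (∑ i ∈ range n, f (i + 1)) + f 0 := by
    apply dvd_add
    · exact dvd_trans (pow_dvd_pow 3 (by omega)) htail
    · rw [← hval0]; exact pow_padicValNat_dvd
  -- 3^(V+1) does not divide S
  have hnot : ¬ (3:ℕ) ^ (V + 1) ∣ (∑ i ∈ range n, f (i + 1)) + f 0 := by
    intro h
    have h0 : (3:ℕ) ^ (V + 1) ∣ f 0 := by
      have := Nat.dvd_sub h htail
      rwa [Nat.add_sub_cancel_left] at this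
    have := pow_succ_padicValNat_not_dvd (p := 3) hf0ne
    rw [hval0] at this
    exact this h0
  -- conclude
  have hle : V ≤ padicValNat 3 ((∑ i ∈ range n, f (i + 1)) + f 0) :=
    (padicValNat_dvd_iff_le hSne).mp hdvdS
  have hge : padicValNat 3 ((∑ i ∈ range n, f (i + 1)) + f 0) ≤ V := by
    by_contra hc
    push_neg at hc
    exact hnot ((padicValNat_dvd_iff_le hSne).mpr (by omega))
  omega
end

section
/- Let n be a natural number. Define the generalized Motzkin number M_n(a,b) = ∑_{k=0}^{⌊n/2⌋} C(n,2k) · Cat_k · a^k · b^{n-2k}, where Cat_k is the k-th Catalan number; the little Schröder number is s_{n+1} = M_n(2,3) and the large Schröder number is S_{n+1} = 2·M_n(2,3). Then v_3(S_{2n+1}) = v_3(Cat_n), i.e., v_3(2·M_{2n}(2,3)) = v_3(Cat_n), and v_3(S_{2n+2}) = 1 + v_3(2n+1) + v_3(Cat_n), i.e., v_3(2·M_{2n+1}(2,3)) = 1 + v_3(2n+1) + v_3(Cat_n). -/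
open Finset
open scoped Nat

private instance fact3 : Fact (Nat.Prime 3) := ⟨by norm_num⟩

private lemma three_mul_le_pow : ∀ L : ℕ, 3 * L ≤ 3 ^ L := by
  intro L
  induction L with
  | zero => simp
  | succ L ih =>
    rcases Nat.eq_zero_or_pos L with h | h
    · subst h; norm_num
    · have h3 : (3:ℕ) ≤ 3 ^ L := le_trans (by omega) ih
      have : 3 ^ (L+1) = 3 ^ L + (3 ^ L + 3 ^ L) := by ring
      omega

private lemma three_mul_log_le {m : ℕ} (hm : m ≠ 0) : 3 * Nat.log 3 m ≤ m :=
  le_trans (three_mul_le_pow _) (Nat.pow_log_le_self 3 hm)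

private lemma v_le_log {m : ℕ} (hm : m ≠ 0) : padicValNat 3 m ≤ Nat.log 3 m := by
  have h : 3 ^ padicValNat 3 m ≤ m :=
    Nat.le_of_dvd (Nat.pos_of_ne_zero hm) pow_padicValNat_dvd
  exact (Nat.le_log_iff_pow_le (by norm_num) hm).mpr h

private lemma v_choose_le_log (n k : ℕ) : padicValNat 3 (n.choose k) ≤ Nat.log 3 n := by
  have h := Nat.factorization_choose_le_log (p := 3) (n := n) (k := k)
  rwa [Nat.factorization_def _ (by norm_num)] at h

private lemma small_bound {j : ℕ} (hj : 1 ≤ j) :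
    1 + padicValNat 3 ((2*j).choose j) + padicValNat 3 (2*j+1) ≤ 2*j := by
  rcases eq_or_lt_of_le hj with h | h
  · subst h
    have e1 : padicValNat 3 2 = 0 := padicValNat.eq_zero_of_not_dvd (by norm_num)
    have e2 : padicValNat 3 3 = 1 := padicValNat.self (by norm_num)
    norm_num [e1, e2]
  · have a1 := v_choose_le_log (2*j) j
    have a2 := v_le_log (m := 2*j+1) (by omega)
    have b1 := three_mul_log_le (m := 2*j) (by omega)
    have b2 := three_mul_log_le (m := 2*j+1) (by omega)
    omega

private lemma catalan_ne_zero (n : ℕ) : catalan n ≠ 0 := by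
  intro h
  have h1 := succ_mul_catalan_eq_centralBinom n
  rw [h] at h1
  have := Nat.centralBinom_pos n
  omega

private lemma Kp {n j : ℕ} (hjn : j ≤ n) :
    padicValNat 3 (n + 1 - j) ≤ padicValNat 3 (n+1) + padicValNat 3 (n.choose j) := by
  have hid := Nat.add_one_mul_choose_eq n (n - j)
  rw [Nat.choose_symm hjn] at hid
  have h2 : n - j + 1 = n + 1 - j := by omega
  rw [h2] at hid
  have hne : (n+1) * n.choose j ≠ 0 :=
    Nat.mul_ne_zero (by omega) (Nat.choose_pos hjn).ne'
  have hd : (3:ℕ) ^ padicValNat 3 (n+1-j) ∣ (n+1) * n.choose j := by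
    rw [hid]
    exact Dvd.dvd.mul_left pow_padicValNat_dvd _
  rw [padicValNat_dvd_iff_le hne, padicValNat.mul (by omega) (Nat.choose_pos hjn).ne'] at hd
  exact hd

private lemma idI {n j : ℕ} (hj : j ≤ n) :
    (2*n).choose (2*j) * ((2*(n-j)).choose (n-j) * (2*j).choose j)
      = (2*n).choose n * (n.choose j * n.choose j) := by
  have hq : ((2*n).choose (2*j) * ((2*(n-j)).choose (n-j) * (2*j).choose j) : ℚ)
      = ((2*n).choose n * (n.choose j * n.choose j) : ℚ) := by
    have c1 : ((2*n).choose (2*j) : ℚ) = (2*n) ! / ((2*j) ! * (2*n - 2*j) !) :=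
      Nat.cast_choose (K := ℚ) (by omega)
    have c2 : ((2*(n-j)).choose (n-j) : ℚ) = (2*(n-j)) ! / ((n-j) ! * (n-j) !) := by
      have := Nat.cast_choose (K := ℚ) (show n-j ≤ 2*(n-j) by omega)
      rwa [show 2*(n-j) - (n-j) = n-j by omega] at this
    have c3 : ((2*j).choose j : ℚ) = (2*j) ! / (j ! * j !) := by
      have := Nat.cast_choose (K := ℚ) (show j ≤ 2*j by omega)
      rwa [show 2*j - j = j by omega] at this
    have c4 : ((2*n).choose n : ℚ) = (2*n) ! / (n ! * n !) := by
      have := Nat.cast_choose (K := ℚ) (show n ≤ 2*n by omega)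
      rwa [show 2*n - n = n by omega] at this
    have c5 : (n.choose j : ℚ) = n ! / (j ! * (n-j) !) := Nat.cast_choose (K := ℚ) hj
    have e1 : 2*n - 2*j = 2*(n-j) := by omega
    rw [c1, c2, c3, c4, c5, e1]
    have f1 : ((2*(n-j)) ! : ℚ) ≠ 0 := by positivity
    have f2 : ((2*j) ! : ℚ) ≠ 0 := by positivity
    have f3 : ((n-j) ! : ℚ) ≠ 0 := by positivity
    have f4 : (j ! : ℚ) ≠ 0 := by positivity
    have f5 : ((n) ! : ℚ) ≠ 0 := by positivity
    field_simp
  exact_mod_cast hq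

private lemma not_three_dvd_two_pow (k : ℕ) : ¬ (3 ∣ 2^k) := by
  intro hdvd
  have h := Nat.Prime.dvd_of_dvd_pow (p := 3) (by norm_num) hdvd
  omega

private lemma vcentral (m : ℕ) :
    padicValNat 3 ((2*m).choose m) = padicValNat 3 (m+1) + padicValNat 3 (catalan m) := by
  have h : (m+1) * catalan m = (2*m).choose m := succ_mul_catalan_eq_centralBinom m
  rw [← h, padicValNat.mul (by omega) (catalan_ne_zero m)]

private lemma key_ineq {n j : ℕ} (hj1 : 1 ≤ j) (hjn : j ≤ n) :
    padicValNat 3 (catalan n) + 1 + padicValNat 3 (2*j+1) ≤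
      padicValNat 3 ((2*n).choose (2*n - 2*j)) + padicValNat 3 (catalan (n-j)) + 2*j := by
  set k := n - j with hk
  have hsym : (2*n).choose (2*n - 2*j) = (2*n).choose (2*j) :=
    Nat.choose_symm (by omega)
  have hne1 : (2*n).choose (2*j) ≠ 0 := (Nat.choose_pos (by omega)).ne'
  have hne2 : (2*k).choose k ≠ 0 := (Nat.choose_pos (by omega)).ne'
  have hne3 : (2*j).choose j ≠ 0 := (Nat.choose_pos (by omega)).ne'
  have hne4 : (2*n).choose n ≠ 0 := (Nat.choose_pos (by omega)).ne'
  have hne5 : n.choose j ≠ 0 := (Nat.choose_pos hjn).ne'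
  have hIv := congrArg (padicValNat 3) (idI hjn)
  rw [padicValNat.mul hne1 (Nat.mul_ne_zero hne2 hne3),
      padicValNat.mul hne2 hne3,
      padicValNat.mul hne4 (Nat.mul_ne_zero hne5 hne5),
      padicValNat.mul hne5 hne5] at hIv
  have hcn := vcentral n
  have hck := vcentral k
  have hK : padicValNat 3 (k+1) ≤ padicValNat 3 (n+1) + padicValNat 3 (n.choose j) := by
    have h := Kp hjn
    rwa [show n + 1 - j = k+1 by omega] at h
  have hs := small_bound hj1
  rw [hsym]
  omega

private lemma termA {n k : ℕ} (h : k < n) :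
    3^(padicValNat 3 (catalan n) + 1) ∣
      (2*n).choose (2*k) * catalan k * 2^k * 3^(2*n - 2*k) := by
  have hj1 : 1 ≤ n - k := by omega
  have hjn : n - k ≤ n := by omega
  have hne1 : (2*n).choose (2*k) ≠ 0 := (Nat.choose_pos (by omega)).ne'
  have hne2 : (2:ℕ)^k ≠ 0 := pow_ne_zero k (by norm_num)
  have hne3 : (3:ℕ)^(2*n-2*k) ≠ 0 := pow_ne_zero _ (by norm_num)
  have hterm : (2*n).choose (2*k) * catalan k * 2^k * 3^(2*n-2*k) ≠ 0 :=
    Nat.mul_ne_zero (Nat.mul_ne_zero (Nat.mul_ne_zero hne1 (catalan_ne_zero k)) hne2) hne3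
  rw [padicValNat_dvd_iff_le hterm,
      padicValNat.mul (Nat.mul_ne_zero (Nat.mul_ne_zero hne1 (catalan_ne_zero k)) hne2) hne3,
      padicValNat.mul (Nat.mul_ne_zero hne1 (catalan_ne_zero k)) hne2,
      padicValNat.mul hne1 (catalan_ne_zero k),
      padicValNat.prime_pow, padicValNat.eq_zero_of_not_dvd (not_three_dvd_two_pow k)]
  have hki := key_ineq hj1 hjn
  rw [show 2*n - 2*(n-k) = 2*k by omega, show n - (n-k) = k by omega] at hki
  omega

private lemma termB {n k : ℕ} (h : k < n) :
    3^(1 + padicValNat 3 (2*n+1) + padicValNat 3 (catalan n) + 1) ∣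
      (2*n+1).choose (2*k) * catalan k * 2^k * 3^(2*n+1 - 2*k) := by
  have hj1 : 1 ≤ n - k := by omega
  have hjn : n - k ≤ n := by omega
  have hsym : (2*n+1).choose (2*k) = (2*n+1).choose (2*(n-k)+1) := by
    rw [show 2*k = 2*n+1 - (2*(n-k)+1) by omega]
    exact Nat.choose_symm (by omega)
  have hsym2 : (2*n).choose (2*n - 2*(n-k)) = (2*n).choose (2*(n-k)) := by
    rw [show 2*n - 2*(n-k) = 2*k by omega, show 2*(n-k) = 2*n - 2*k by omega]
    exact (Nat.choose_symm (by omega)).symm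
  have hB : (2*n+1) * (2*n).choose (2*(n-k)) = (2*n+1).choose (2*(n-k)+1) * (2*(n-k)+1) := by
    have := Nat.add_one_mul_choose_eq (2*n) (2*(n-k))
    simpa [Nat.succ_eq_add_one] using this
  have hneA : (2*n).choose (2*(n-k)) ≠ 0 := (Nat.choose_pos (by omega)).ne'
  have hneB : (2*n+1).choose (2*(n-k)+1) ≠ 0 := (Nat.choose_pos (by omega)).ne'
  have hBv := congrArg (padicValNat 3) hB
  rw [padicValNat.mul (show (2*n+1) ≠ 0 by omega) hneA, padicValNat.mul hneB (show (2*(n-k)+1) ≠ 0 by omega)] at hBv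
  have hne1 : (2*n+1).choose (2*k) ≠ 0 := (Nat.choose_pos (by omega)).ne'
  have hne2 : (2:ℕ)^k ≠ 0 := pow_ne_zero k (by norm_num)
  have hne3 : (3:ℕ)^(2*n+1-2*k) ≠ 0 := pow_ne_zero _ (by norm_num)
  have hterm : (2*n+1).choose (2*k) * catalan k * 2^k * 3^(2*n+1-2*k) ≠ 0 :=
    Nat.mul_ne_zero (Nat.mul_ne_zero (Nat.mul_ne_zero hne1 (catalan_ne_zero k)) hne2) hne3
  rw [padicValNat_dvd_iff_le hterm,
      padicValNat.mul (Nat.mul_ne_zero (Nat.mul_ne_zero hne1 (catalan_ne_zero k)) hne2) hne3,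
      padicValNat.mul (Nat.mul_ne_zero hne1 (catalan_ne_zero k)) hne2,
      padicValNat.mul hne1 (catalan_ne_zero k),
      padicValNat.prime_pow, padicValNat.eq_zero_of_not_dvd (not_three_dvd_two_pow k),
      hsym]
  have hki := key_ineq hj1 hjn
  rw [hsym2, show n - (n-k) = k by omega] at hki
  omega

private lemma v_shape {N c kk R : ℕ} (hN : N ≠ 0) (hvN : padicValNat 3 N = c)
    (hR : 3^(c+1) ∣ R) : padicValNat 3 (2*(R + N * 2^kk)) = c := by
  have hNk : N * 2^kk ≠ 0 := Nat.mul_ne_zero hN (pow_ne_zero _ (by norm_num))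
  have hne : 2*(R + N * 2^kk) ≠ 0 := by
    have := Nat.pos_of_ne_zero hNk
    omega
  have h1 : 3^c ∣ 2*(R + N * 2^kk) := by
    have hRN : 3^c ∣ R := dvd_trans (pow_dvd_pow 3 (Nat.le_succ c)) hR
    have hT : 3^c ∣ N * 2^kk := Dvd.dvd.mul_right (hvN ▸ pow_padicValNat_dvd) _
    exact Dvd.dvd.mul_left (Nat.dvd_add hRN hT) 2
  have h2 : ¬ 3^(c+1) ∣ 2*(R + N * 2^kk) := by
    intro hdv
    have h2R : 3^(c+1) ∣ 2*R := Dvd.dvd.mul_left hR 2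
    have he : 2*(R + N * 2^kk) = 2*R + N * 2^(kk+1) := by ring
    rw [he] at hdv
    have hT : 3^(c+1) ∣ N * 2^(kk+1) := by
      have := Nat.dvd_sub hdv h2R
      rwa [Nat.add_sub_cancel_left] at this
    have hcop : Nat.Coprime (3^(c+1)) (2^(kk+1)) :=
      Nat.Coprime.pow _ _ (by decide)
    have hdN : 3^(c+1) ∣ N := hcop.dvd_of_dvd_mul_right hT
    have := pow_succ_padicValNat_not_dvd (p := 3) hN
    rw [hvN] at this
    exact this hdN
  rw [padicValNat_dvd_iff_le hne] at h1
  rw [padicValNat_dvd_iff_le hne] at h2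
  omega


/-- Theorem 4: with `M_n(2,3) = ∑_{k=0}^{⌊n/2⌋} C(n,2k)·Cat_k·2^k·3^{n-2k}` and the
large Schröder number `S_{n+1} = 2·M_n(2,3)`, we have `v_3(S_{2n+1}) = v_3(Cat_n)`
and `v_3(S_{2n+2}) = 1 + v_3(2n+1) + v_3(Cat_n)`. -/
theorem stmt_8 (n : ℕ) :
    padicValNat 3
      (2 * ∑ k ∈ range (n + 1), (2 * n).choose (2 * k) * catalan k * 2 ^ k * 3 ^ (2 * n - 2 * k)) =
      padicValNat 3 (catalan n) ∧
    padicValNat 3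
      (2 * ∑ k ∈ range (n + 1),
        (2 * n + 1).choose (2 * k) * catalan k * 2 ^ k * 3 ^ (2 * n + 1 - 2 * k)) =
      1 + padicValNat 3 (2 * n + 1) + padicValNat 3 (catalan n) := by
  constructor
  · rw [Finset.sum_range_succ]
    simp only [Nat.choose_self, Nat.sub_self, pow_zero, one_mul, mul_one]
    exact v_shape (catalan_ne_zero n) rfl
      (Finset.dvd_sum fun k hk => termA (Finset.mem_range.mp hk))
  · rw [Finset.sum_range_succ]
    have htop : (2*n+1).choose (2*n) * catalan n * 2^n * 3^(2*n+1-2*n)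
        = ((2*n+1) * catalan n * 3) * 2^n := by
      rw [show 2*n+1-2*n = 1 by omega, show (2*n+1).choose (2*n) = 2*n+1 from Nat.choose_succ_self_right (2*n)]
      ring
    rw [htop]
    have hvN : padicValNat 3 ((2*n+1) * catalan n * 3)
        = 1 + padicValNat 3 (2*n+1) + padicValNat 3 (catalan n) := by
      rw [padicValNat.mul (Nat.mul_ne_zero (show (2*n+1) ≠ 0 by omega) (catalan_ne_zero n)) (by norm_num),
          padicValNat.mul (show (2*n+1) ≠ 0 by omega) (catalan_ne_zero n),
          padicValNat.self (by norm_num)]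
      omega
    exact v_shape (Nat.mul_ne_zero (Nat.mul_ne_zero (by omega) (catalan_ne_zero n)) (by norm_num))
      hvN (Finset.dvd_sum fun k hk => by
        have := termB (n := n) (Finset.mem_range.mp hk)
        rwa [show 1 + padicValNat 3 (2*n+1) + padicValNat 3 (catalan n) + 1
          = 1 + padicValNat 3 (2*n+1) + padicValNat 3 (catalan n) + 1 from rfl] at this)
end

section
/- Let n be a natural number and let x be an odd integer with x ≠ ±1, say x = 2m+1 for an integer m. Write P_{2n}(x) = ∑_{k=0}^{2n} (C(2n,k))^2 · (m+1)^k · m^{2n-k} for the value of the Legendre polynomial of degree 2n at x. Then P_{2n}(x) ≠ 0, and the largest natural number e such that x^e divides P_{2n}(x) is equal to the largest natural number e such that x^e divides C(2n,n). -/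
open Finset Polynomial


lemma coeff_one_add_CX_pow (a : ℤ) (N k : ℕ) :
    ((1 + C a * X : ℤ[X]) ^ N).coeff k = N.choose k * a ^ k := by
  rw [add_comm, add_pow]
  rw [Polynomial.finset_sum_coeff]
  have : ∀ j ∈ range (N+1), ((C a * X) ^ j * 1 ^ (N - j) * (N.choose j : ℤ[X])).coeff k
      = if j = k then (N.choose k : ℤ) * a ^ k else 0 := by
    intro j hj
    rw [one_pow, mul_one, mul_pow, ← C_pow, ← C_eq_natCast, mul_comm ((C (a^j))) _, mul_assoc,
      ← C_mul, mul_comm, coeff_C_mul, coeff_X_pow]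
    simp only [mul_ite, mul_one, mul_zero]
    split_ifs with h1 h2
    · subst h2; ring
    · omega
    · omega
    · rfl
  rw [Finset.sum_congr rfl this, Finset.sum_ite_eq' (range (N+1)) k]
  split_ifs with h
  · rfl
  · simp at h
    rw [Nat.choose_eq_zero_of_lt (by omega)]
    simp
lemma lhs_eq (a b : ℤ) (N : ℕ) :
    ∑ k ∈ range (N+1), (N.choose k : ℤ)^2 * a^k * b^(N-k)
      = (((1 + C a * X) * (1 + C b * X) : ℤ[X])^N).coeff N := by
  rw [mul_pow, coeff_mul, Finset.Nat.sum_antidiagonal_eq_sum_range_succ_mk]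
  refine Finset.sum_congr rfl fun k hk => ?_
  rw [coeff_one_add_CX_pow, coeff_one_add_CX_pow,
    Nat.choose_symm (by simp at hk; omega : k ≤ N)]
  ring

lemma trinomial_coeff (s u : ℤ) (n : ℕ) :
    (((1 : ℤ[X]) + C s * X + C u * X^2)^(2*n)).coeff (2*n)
      = ∑ l ∈ range (n+1),
          ((2*n).choose l : ℤ) * ((2*n - l).choose l) * s^(2*(n-l)) * u^l := by
  have h1 : ((1 : ℤ[X]) + C s * X + C u * X^2) = (C s * X + C u * X^2) + 1 := by ring
  rw [h1, add_pow]
  rw [Polynomial.finset_sum_coeff]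
  have h2 : ∀ j ∈ range (2*n+1),
      ((C s * X + C u * X^2) ^ j * 1 ^ (2*n - j) * ((2*n).choose j : ℤ[X])).coeff (2*n)
      = ∑ i ∈ range (j+1), (if 2*n = i + 2*(j-i) then
          s^i * u^(j-i) * (j.choose i : ℤ) * ((2*n).choose j : ℤ) else 0) := by
    intro j hj
    rw [one_pow, mul_one, ← C_eq_natCast, mul_comm, coeff_C_mul, add_pow,
      Polynomial.finset_sum_coeff, Finset.mul_sum]
    refine Finset.sum_congr rfl fun i hi => ?_
    rw [mul_pow, mul_pow, ← C_pow, ← C_pow, ← pow_mul, ← C_eq_natCast]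
    have h3 : C (s^i) * X^i * (C (u^(j-i)) * X^(2*(j-i))) * C ((j.choose i : ℤ))
        = C (s^i * u^(j-i) * (j.choose i : ℤ)) * X^(i + 2*(j-i)) := by
      simp [C_mul]; ring
    rw [h3, coeff_C_mul, coeff_X_pow]
    split_ifs with hc
    · ring
    · ring
  rw [Finset.sum_congr rfl h2, Finset.sum_sigma']
  rw [← Finset.sum_filter]
  refine Finset.sum_nbij' (fun x => 2*n - x.1) (fun l => ⟨2*n - l, 2*n - 2*l⟩)
    ?_ ?_ ?_ ?_ ?_
  · intro x hx
    simp only [Finset.mem_filter, Finset.mem_sigma, Finset.mem_range] at hx ⊢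
    omega
  · intro l hl
    simp only [Finset.mem_filter, Finset.mem_sigma, Finset.mem_range] at hl ⊢
    omega
  · intro x hx
    simp only [Finset.mem_filter, Finset.mem_sigma, Finset.mem_range] at hx
    obtain ⟨⟨hj, hi⟩, hc⟩ := hx
    obtain ⟨j, i⟩ := x
    simp only at *
    have h1 : 2*n - (2*n - j) = j := by omega
    have h2 : 2*n - 2*(2*n - j) = i := by omega
    rw [h1, h2]
  · intro l hl
    simp only [Finset.mem_range] at hl
    simp only
    omega
  · intro x hx
    simp only [Finset.mem_filter, Finset.mem_sigma, Finset.mem_range] at hx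
    obtain ⟨⟨hj, hi⟩, hc⟩ := hx
    obtain ⟨j, i⟩ := x
    simp only at *
    have e1 : 2*n - (2*n - j) = j := by omega
    have e2 : (2*n - (2*n - j)) = j := by omega
    have e3 : j - i = 2*n - j := by omega
    have e4 : i = 2*(n - (2*n - j)) := by omega
    have c1 : (2*n).choose (2*n - j) = (2*n).choose j := Nat.choose_symm (by omega)
    have c2 : j.choose (2*n - j) = j.choose i := by
      rw [← Nat.choose_symm (show 2*n - j ≤ j by omega)]
      congr 1
      omega
    rw [e1, c1, c2]
    have e6 : 2*(n - (2*n - j)) = i := by omega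
    have e7 : j - i = 2*n - j := by omega
    rw [e6, e7]
    ring

lemma choose_identity_s9 (l d : ℕ) :
    (2*(l+d)).choose l * ((2*(l+d) - l).choose l) * ((2*d).choose d)
      = (2*(l+d)).choose (l+d) * ((l+d).choose l)^2 := by
  have e1 : 2*(l+d) - l = l + 2*d := by omega
  rw [e1]
  have hq : ((2*(l+d)).choose l * ((l+2*d).choose l) * ((2*d).choose d) : ℚ)
      = ((2*(l+d)).choose (l+d) * ((l+d).choose l)^2 : ℚ) := by
    rw [Nat.cast_choose ℚ (show l ≤ 2*(l+d) by omega),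
        Nat.cast_choose ℚ (show l ≤ l+2*d by omega),
        Nat.cast_choose ℚ (show d ≤ 2*d by omega),
        Nat.cast_choose ℚ (show l+d ≤ 2*(l+d) by omega),
        Nat.cast_choose ℚ (show l ≤ l+d by omega)]
    have e2 : 2*(l+d) - l = l + 2*d := by omega
    have e3 : l + 2*d - l = 2*d := by omega
    have e4 : 2*d - d = d := by omega
    have e5 : 2*(l+d) - (l+d) = l + d := by omega
    have e6 : l + d - l = d := by omega
    rw [e2, e3, e4, e5, e6]
    have f1 : (Nat.factorial l : ℚ) ≠ 0 := by positivity
    have f2 : (Nat.factorial d : ℚ) ≠ 0 := by positivity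
    have f3 : (Nat.factorial (l+2*d) : ℚ) ≠ 0 := by positivity
    have f4 : (Nat.factorial (2*d) : ℚ) ≠ 0 := by positivity
    have f5 : (Nat.factorial (l+d) : ℚ) ≠ 0 := by positivity
    field_simp
  exact_mod_cast hq
lemma central_le (d : ℕ) : (2*d).choose d ≤ 4^d := by
  have h1 : (2*d).choose d ≤ ∑ k ∈ range (2*d+1), (2*d).choose k :=
    Finset.single_le_sum (fun k _ => Nat.zero_le _) (by simp; omega)
  rw [Nat.sum_range_choose] at h1
  calc (2*d).choose d ≤ 2^(2*d) := h1
    _ = 4^d := by rw [pow_mul]; norm_num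

lemma fact_bound {p : ℕ} (d : ℕ) (hp : p.Prime) (hp3 : 3 ≤ p) (hd : 1 ≤ d) :
    ((2*d).choose d).factorization p ≤ 2*d - 1 := by
  have hne : (2*d).choose d ≠ 0 := (Nat.choose_pos (by omega)).ne'
  have h1 : p ^ (((2*d).choose d).factorization p) ≤ (2*d).choose d :=
    Nat.le_of_dvd (Nat.pos_of_ne_zero hne) (Nat.ordProj_dvd _ _)
  have h2 : (2*d).choose d < p^(2*d) := by
    calc (2*d).choose d ≤ 4^d := central_le d
      _ < 9^d := Nat.pow_lt_pow_left (by norm_num) (by omega)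
      _ = 3^(2*d) := by rw [pow_mul]; norm_num
      _ ≤ p^(2*d) := Nat.pow_le_pow_left hp3 _
  have h3 : ((2*d).choose d).factorization p < 2*d := by
    by_contra hcon
    push_neg at hcon
    have := Nat.pow_le_pow_right (show 1 ≤ p by omega) hcon
    omega
  omega

lemma key_dvd (X n l ω : ℕ) (hX0 : X ≠ 0) (hodd : Odd X) (hln : l < n)
    (hc : X ^ ω ∣ (2*n).choose n) :
    X ^ (ω+1) ∣ (2*n).choose l * ((2*n - l).choose l) * X^(2*(n-l)) := by
  set d := n - l with hd
  have hd1 : 1 ≤ d := by omega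
  by_cases hcase : ω + 1 ≤ 2*d
  · exact dvd_mul_of_dvd_right (pow_dvd_pow X hcase) _
  · push_neg at hcase
    set e := ω + 1 - 2*d with he
    set cl := (2*n).choose l * ((2*n - l).choose l) with hcl
    have hcl0 : cl ≠ 0 := by
      have := Nat.choose_pos (show l ≤ 2*n by omega)
      have := Nat.choose_pos (show l ≤ 2*n - l by omega)
      positivity
    have hcn0 : (2*n).choose n ≠ 0 := (Nat.choose_pos (by omega)).ne'
    have hmain : X ^ e ∣ cl := by
      rw [← Nat.factorization_le_iff_dvd (pow_ne_zero _ hX0) hcl0,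
        Nat.factorization_pow, Finsupp.le_def]
      intro p
      rw [Finsupp.smul_apply, smul_eq_mul]
      by_cases hp0 : X.factorization p = 0
      · simp [hp0]
      · set a := X.factorization p with ha
        have hpf : p ∈ X.primeFactors := by
          rw [← Nat.support_factorization, Finsupp.mem_support_iff]; exact hp0
        have hp : p.Prime := Nat.prime_of_mem_primeFactors hpf
        have hpX : p ∣ X := Nat.dvd_of_mem_primeFactors hpf
        have hp3 : 3 ≤ p := by
          have hp2 : p ≠ 2 := by
            intro h2
            subst h2
            rw [Nat.odd_iff] at hodd
            obtain ⟨t, rfl⟩ := hpX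
            omega
          have := hp.two_le
          omega
        -- identity
        have hid : cl * ((2*d).choose d) = (2*n).choose n * (n.choose l)^2 := by
          have := choose_identity_s9 l d
          have e1 : l + d = n := by omega
          rw [e1] at this
          exact this
        have hvid : cl.factorization p + ((2*d).choose d).factorization p
            = ((2*n).choose n).factorization p + 2 * (n.choose l).factorization p := by
          have h2d0 : (2*d).choose d ≠ 0 := (Nat.choose_pos (by omega)).ne'
          have hnl0 : n.choose l ≠ 0 := (Nat.choose_pos (by omega)).ne'
          have hfe := congrArg Nat.factorization hid
          rw [Nat.factorization_mul hcl0 h2d0,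
            Nat.factorization_mul hcn0 (pow_ne_zero _ hnl0),
            Nat.factorization_pow] at hfe
          have h2 := DFunLike.congr_fun hfe p
          simpa using h2
        have hωa : ω * a ≤ ((2*n).choose n).factorization p := by
          have := (Nat.factorization_le_iff_dvd (pow_ne_zero _ hX0) hcn0).mpr hc
          have h2 := this p
          rwa [Nat.factorization_pow, Finsupp.smul_apply, smul_eq_mul] at h2
        have hbd : ((2*d).choose d).factorization p ≤ 2*d - 1 := fact_bound d hp hp3 hd1
        have ha1 : 1 ≤ a := by omega
        have hsplit : e * a + (2*d - 1) * a = ω * a := by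
          rw [← Nat.add_mul]; congr 1; omega
        have hge : 2*d - 1 ≤ (2*d - 1) * a := Nat.le_mul_of_pos_right _ (by omega)
        have h6 : e * a + (2*d - 1) * a ≤ cl.factorization p + (2*d - 1) * a := by
          rw [hsplit]
          calc ω * a ≤ ((2*n).choose n).factorization p := hωa
            _ ≤ cl.factorization p + (2*d - 1) := by omega
            _ ≤ cl.factorization p + (2*d - 1) * a := by omega
        omega
    calc X^(ω+1) = X^e * X^(2*d) := by rw [← pow_add]; congr 1; omega
      _ ∣ cl * X^(2*d) := mul_dvd_mul_right (hmain) _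


lemma legendre_sum_eq (m : ℤ) (n : ℕ) :
    ∑ k ∈ range (2*n+1), ((2*n).choose k : ℤ)^2 * (m+1)^k * m^(2*n-k)
      = ∑ l ∈ range (n+1), ((2*n).choose l : ℤ) * (((2*n - l).choose l : ℕ) : ℤ)
          * (2*m+1)^(2*(n-l)) * (m*(m+1))^l := by
  rw [lhs_eq (m+1) m (2*n), ← trinomial_coeff (2*m+1) (m*(m+1)) n]
  congr 2
  simp only [C_add, C_mul, C_1, map_ofNat]
  ring

/-- Corollary 3, Eq. (28): for an odd integer `x = 2m+1` with `x ≠ ±1`, the Legendre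
polynomial value `P_{2n}(x) = ∑_{k=0}^{2n} C(2n,k)^2 (m+1)^k m^{2n-k}` is nonzero and
the largest power of `x` dividing it equals the largest power of `x` dividing `C(2n,n)`. -/
theorem stmt_9 (n : ℕ) (m : ℤ) (h1 : 2 * m + 1 ≠ 1) (h2 : 2 * m + 1 ≠ -1) :
    (∑ k ∈ range (2 * n + 1), ((2 * n).choose k : ℤ) ^ 2 * (m + 1) ^ k * m ^ (2 * n - k)) ≠ 0 ∧
    ∃ E : ℕ,
      IsGreatest {e : ℕ | (2 * m + 1) ^ e ∣
        ∑ k ∈ range (2 * n + 1), ((2 * n).choose k : ℤ) ^ 2 * (m + 1) ^ k * m ^ (2 * n - k)} E ∧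
      IsGreatest {e : ℕ | (2 * m + 1) ^ e ∣ ((2 * n).choose n : ℤ)} E := by
  set x : ℤ := 2 * m + 1 with hx
  set X : ℕ := x.natAbs with hXdef
  set P : ℤ := ∑ k ∈ range (2 * n + 1), ((2 * n).choose k : ℤ) ^ 2 * (m + 1) ^ k * m ^ (2 * n - k)
    with hPdef
  have hX3 : 3 ≤ X := by
    rw [hXdef, hx]
    omega
  have hX0 : X ≠ 0 := by omega
  have hXodd : Odd X := by
    rw [Int.natAbs_odd]
    exact ⟨m, by ring⟩
  have hXdvdx : (X : ℤ) ∣ x := Int.natAbs_dvd.mpr dvd_rfl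
  have hxX : ∀ (e : ℕ) (y : ℤ), (x ^ e ∣ y) ↔ ((X : ℤ) ^ e ∣ y) := by
    intro e y
    have h : ((X : ℤ)) ^ e = (((x ^ e).natAbs : ℕ) : ℤ) := by
      rw [Int.natAbs_pow]
      push_cast
      rw [Int.abs_eq_natAbs]
    rw [h, Int.natAbs_dvd]
  set cn : ℕ := (2 * n).choose n with hcn
  have hcn0 : cn ≠ 0 := (Nat.choose_pos (by omega)).ne'
  -- the greatest exponent for cn
  set Pr : ℕ → Prop := fun e => x ^ e ∣ (cn : ℤ) with hPr
  have hdec : DecidablePred Pr := fun e => Int.decidableDvd _ _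
  have hbound : ∀ e, Pr e → e ≤ cn := by
    intro e he
    have he' : x ^ e ∣ (cn : ℤ) := he
    have hXe : X ^ e ∣ cn := by
      rw [hxX] at he'
      exact_mod_cast he'
    have h1 : X ^ e ≤ cn := Nat.le_of_dvd (Nat.pos_of_ne_zero hcn0) hXe
    have h2 : e < 2 ^ e := Nat.lt_two_pow_self
    have h3 : 2 ^ e ≤ X ^ e := Nat.pow_le_pow_left (by omega) e
    omega
  set ω : ℕ := Nat.findGreatest Pr cn with hω
  have hωmem : Pr ω := Nat.findGreatest_spec (Nat.zero_le cn) (by simp [hPr])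
  have hωub : ∀ e, Pr e → e ≤ ω := fun e he => Nat.le_findGreatest (hbound e he) he
  have hcω : X ^ ω ∣ cn := by
    have h' : x ^ ω ∣ (cn : ℤ) := hωmem
    rw [hxX] at h'
    exact_mod_cast h'
  have hnω : ¬ X ^ (ω + 1) ∣ cn := by
    intro hcon
    have : Pr (ω + 1) := by
      show x ^ (ω + 1) ∣ (cn : ℤ)
      rw [hxX]
      exact_mod_cast hcon
    have := hωub _ this
    omega
  -- terms
  set T : ℕ → ℤ := fun l => ((2*n).choose l : ℤ) * (((2*n - l).choose l : ℕ) : ℤ)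
      * (2*m+1)^(2*(n-l)) * (m*(m+1))^l with hT
  have hPsum : P = ∑ l ∈ range (n+1), T l := legendre_sum_eq m n
  have hTl : ∀ l, l < n → (X : ℤ) ^ (ω + 1) ∣ T l := by
    intro l hl
    have hnat : X ^ (ω+1) ∣ (2*n).choose l * ((2*n - l).choose l) * X^(2*(n-l)) :=
      key_dvd X n l ω hX0 hXodd hl hcω
    have d1 : ((X : ℤ)) ^ (ω+1) ∣
        (((2*n).choose l * ((2*n - l).choose l) : ℕ) : ℤ) * (X : ℤ)^(2*(n-l)) := by
      have := Int.natCast_dvd_natCast.mpr hnat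
      push_cast at this
      convert this using 2 <;> push_cast <;> ring
    have d2 : (((2*n).choose l * ((2*n - l).choose l) : ℕ) : ℤ) * (X : ℤ)^(2*(n-l)) ∣ T l := by
      rw [hT]
      simp only
      push_cast
      have hxp : ((X : ℤ))^(2*(n-l)) ∣ (2*m+1)^(2*(n-l)) :=
        pow_dvd_pow_of_dvd hXdvdx _
      have : ((2*n).choose l : ℤ) * (((2*n - l).choose l : ℕ) : ℤ) * (X : ℤ)^(2*(n-l)) ∣
          ((2*n).choose l : ℤ) * (((2*n - l).choose l : ℕ) : ℤ) * (2*m+1)^(2*(n-l)) :=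
        mul_dvd_mul_left _ hxp
      calc ((2*n).choose l : ℤ) * (((2*n - l).choose l : ℕ) : ℤ) * (X : ℤ)^(2*(n-l))
          ∣ ((2*n).choose l : ℤ) * (((2*n - l).choose l : ℕ) : ℤ) * (2*m+1)^(2*(n-l)) := this
        _ ∣ ((2*n).choose l : ℤ) * (((2*n - l).choose l : ℕ) : ℤ) * (2*m+1)^(2*(n-l))
            * (m*(m+1))^l := dvd_mul_right _ _
    exact d1.trans (by
      calc (((2*n).choose l * ((2*n - l).choose l) : ℕ) : ℤ) * (X : ℤ)^(2*(n-l))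
          = ((2*n).choose l : ℤ) * (((2*n - l).choose l : ℕ) : ℤ) * (X : ℤ)^(2*(n-l)) := by
            push_cast; ring
        _ ∣ T l := d2)
  have hTn : T n = (cn : ℤ) * (m*(m+1))^n := by
    rw [hT]
    simp only
    have e1 : 2*n - n = n := by omega
    have e2 : n - n = 0 := by omega
    rw [e1, e2, Nat.choose_self]
    push_cast
    ring
  have hPdvd : (X : ℤ) ^ ω ∣ P := by
    rw [hPsum]
    refine Finset.dvd_sum fun l hl => ?_
    simp only [Finset.mem_range] at hl
    rcases Nat.lt_or_ge l n with h | h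
    · exact (pow_dvd_pow _ (Nat.le_succ ω)).trans (hTl l h)
    · have hln : l = n := by omega
      subst hln
      rw [hTn]
      exact Dvd.dvd.mul_right (by exact_mod_cast Int.natCast_dvd_natCast.mpr hcω) _
  have hPndvd : ¬ (X : ℤ) ^ (ω + 1) ∣ P := by
    intro hcon
    -- find the critical prime
    have hnle : ¬ (X ^ (ω+1)).factorization ≤ cn.factorization := by
      intro hle
      exact hnω ((Nat.factorization_le_iff_dvd (pow_ne_zero _ hX0) hcn0).mp hle)
    rw [Finsupp.le_def] at hnle
    push_neg at hnle
    obtain ⟨p, hp⟩ := hnle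
    rw [Nat.factorization_pow, Finsupp.smul_apply, smul_eq_mul] at hp
    set a : ℕ := X.factorization p with ha
    have ha0 : a ≠ 0 := by
      intro h
      rw [h, Nat.mul_zero] at hp
      omega
    have hpf : p ∈ X.primeFactors := by
      rw [← Nat.support_factorization, Finsupp.mem_support_iff]
      exact ha0
    have hprime : p.Prime := Nat.prime_of_mem_primeFactors hpf
    have hpX : p ∣ X := Nat.dvd_of_mem_primeFactors hpf
    have hpZ : Prime ((p : ℕ) : ℤ) := Nat.prime_iff_prime_int.mp hprime
    have hp3 : 3 ≤ p := by
      have hp2 : p ≠ 2 := by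
        intro h2
        subst h2
        rw [Nat.odd_iff] at hXodd
        obtain ⟨t, ht⟩ := hpX
        omega
      have := hprime.two_le
      omega
    have hpx : ((p : ℕ) : ℤ) ∣ x := (Int.natCast_dvd_natCast.mpr hpX).trans hXdvdx
    -- p does not divide u
    have hpu : ¬ ((p : ℕ) : ℤ) ∣ (m * (m + 1)) := by
      intro hdvd
      rcases (hpZ.dvd_mul).mp hdvd with h | h
      · have hd2 := dvd_sub hpx (Dvd.dvd.mul_left h 2)
        have heq : x - 2 * m = 1 := by rw [hx]; ring
        rw [heq] at hd2
        have := Int.le_of_dvd one_pos hd2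
        have h3 : (3 : ℤ) ≤ (p : ℕ) := by exact_mod_cast hp3
        omega
      · have : ((p : ℕ) : ℤ) ∣ 1 := by
          have hd2 := dvd_sub (Dvd.dvd.mul_left h 2) hpx
          have he : 2 * (m + 1) - x = 1 := by rw [hx]; ring
          rwa [he] at hd2
        have := Int.le_of_dvd one_pos this
        have h3 : (3 : ℤ) ≤ (p : ℕ) := by exact_mod_cast hp3
        omega
    -- p^((ω+1)*a) divides P and all T l for l < n
    have hpa : ((p : ℕ) : ℤ) ^ ((ω+1) * a) ∣ (X : ℤ) ^ (ω + 1) := by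
      have h1 : (p : ℕ) ^ a ∣ X := Nat.ordProj_dvd X p
      have h2 : ((p : ℕ) : ℤ) ^ a ∣ (X : ℤ) := by exact_mod_cast Int.natCast_dvd_natCast.mpr h1
      calc ((p : ℕ) : ℤ) ^ ((ω+1) * a) = (((p : ℕ) : ℤ) ^ a) ^ (ω+1) := by
            rw [← pow_mul, mul_comm]
        _ ∣ (X : ℤ) ^ (ω + 1) := pow_dvd_pow_of_dvd h2 _
    have hq : ((p : ℕ) : ℤ) ^ ((ω+1) * a) ∣ T n := by
      have hsplit : P = (∑ l ∈ range n, T l) + T n := by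
        rw [hPsum, Finset.sum_range_succ]
      have hqP : ((p : ℕ) : ℤ) ^ ((ω+1) * a) ∣ P := hpa.trans hcon
      have hqR : ((p : ℕ) : ℤ) ^ ((ω+1) * a) ∣ ∑ l ∈ range n, T l :=
        Finset.dvd_sum fun l hl =>
          hpa.trans (hTl l (Finset.mem_range.mp hl))
      have : T n = P - ∑ l ∈ range n, T l := by rw [hsplit]; ring
      rw [this]
      exact dvd_sub hqP hqR
    rw [hTn] at hq
    have hcop : IsCoprime (((p : ℕ) : ℤ) ^ ((ω+1) * a)) ((m * (m + 1)) ^ n) :=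
      ((hpZ.coprime_iff_not_dvd.mpr hpu).pow : IsCoprime _ _)
    have hqcn : ((p : ℕ) : ℤ) ^ ((ω+1) * a) ∣ (cn : ℤ) := hcop.dvd_of_dvd_mul_right hq
    have hqcnN : (p : ℕ) ^ ((ω+1) * a) ∣ cn := by exact_mod_cast hqcn
    have hfinal : (p : ℕ) ^ (cn.factorization p + 1) ∣ cn :=
      (pow_dvd_pow _ (by omega)).trans hqcnN
    exact Nat.pow_succ_factorization_not_dvd hcn0 hprime hfinal
  refine ⟨?_, ω, ⟨?_, ?_⟩, hωmem, fun e he => hωub e he⟩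
  · intro h0
    exact hPndvd (h0 ▸ dvd_zero _)
  · show x ^ ω ∣ P
    rw [hxX]
    exact hPdvd
  · intro e he
    by_contra hcon
    push_neg at hcon
    have : x ^ (ω + 1) ∣ P := (pow_dvd_pow x (by omega)).trans he
    rw [hxX] at this
    exact hPndvd this
end

section
/- Let n be a natural number and let x be an odd integer with x ≠ ±1, say x = 2m+1 for an integer m. Write P_{2n+1}(x) = ∑_{k=0}^{2n+1} (C(2n+1,k))^2 · (m+1)^k · m^{2n+1-k} for the value of the Legendre polynomial of degree 2n+1 at x. Then P_{2n+1}(x) ≠ 0, and the largest natural number e such that x^e divides P_{2n+1}(x) is equal to 1 plus the largest natural number e such that x^e divides the integer (2n+1)·C(2n,n). -/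
open Finset


/-- odd double factorial 3·5···(2k+1) -/
def DD (k : ℕ) : ℕ := ∏ j ∈ Finset.range k, (2*j+3)
/-- (2n+3)(2n+5)···(2n+2k+1) -/
def QQ (n k : ℕ) : ℕ := ∏ j ∈ Finset.range k, (2*n+2*j+3)

lemma DD_pos (k : ℕ) : 0 < DD k := Finset.prod_pos (fun j _ => by omega)

lemma choose_two_np : ∀ n : ℕ, (2*n+2).choose (2*n+1) = 2*n+2 := by
  intro n
  have h := Nat.choose_symm (show 2*n+1 ≤ 2*n+2 by omega)
  have e : (2*n+2) - (2*n+1) = 1 := by omega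
  rw [e] at h
  rw [← h, Nat.choose_one_right]

lemma base_id (n : ℕ) : (2*n+1).choose n * (2*n+2) = 2*((2*n+1)*(2*n).choose n) := by
  have h1 := Nat.add_one_mul_choose_eq (2*n) n
  have h2 : (2*n+1).choose ((2*n+1)-(n+1)) = (2*n+1).choose (n+1) :=
    Nat.choose_symm (by omega)
  have h3 : (2*n+1) - (n+1) = n := by omega
  rw [h3] at h2
  rw [h2]
  calc (2*n+1).choose (n+1) * (2*n+2) = (2*n+1).choose (n+1) * (n+1) * 2 := by ring
    _ = (2*n+1) * (2*n).choose n * 2 := by rw [← h1]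
    _ = 2*((2*n+1)*(2*n).choose n) := by ring

lemma step_choose_big (n k : ℕ) :
    (2*k+3)*((2*k+2)*((2*n+2*k+4).choose (2*n+1))) =
    (2*n+2*k+4)*((2*n+2*k+3)*((2*n+2*k+2).choose (2*n+1))) := by
  set M := 2*n+2*k+2 with hM
  have s1 : (M+2).choose ((M+2)-(2*n+1)) = (M+2).choose (2*n+1) := Nat.choose_symm (by omega)
  have e1 : (M+2)-(2*n+1) = 2*k+3 := by omega
  rw [e1] at s1
  have s2 : M.choose (M-(2*n+1)) = M.choose (2*n+1) := Nat.choose_symm (by omega)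
  have e2 : M-(2*n+1) = 2*k+1 := by omega
  rw [e2] at s2
  have h1 := Nat.add_one_mul_choose_eq (M+1) (2*k+2)
  have h2 := Nat.add_one_mul_choose_eq M (2*k+1)
  have hM2 : 2*n+2*k+4 = M+2 := by omega
  have hM3 : 2*n+2*k+3 = M+1 := by omega
  rw [hM2, hM3, ← s1, ← s2]
  calc (2*k+3)*((2*k+2)*((M+2).choose (2*k+3)))
      = ((M+2).choose (2*k+2+1) * (2*k+2+1)) * (2*k+2) := by ring
    _ = ((M+1+1) * (M+1).choose (2*k+2)) * (2*k+2) := by rw [← h1]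
    _ = (M+2) * ((M+1).choose (2*k+1+1) * (2*k+1+1)) := by ring
    _ = (M+2)*((M+1)*(M.choose (2*k+1))) := by rw [← h2]

lemma B_id (n : ℕ) : ∀ k, k ≤ n →
    DD k * ((2*n+1).choose (n-k)) * ((2*n+2*k+2).choose (2*n+1)) =
    2*((2*n+1)*(2*n).choose n) * (n.choose k) * QQ n k := by
  intro k
  induction k with
  | zero =>
    intro _
    have hD : DD 0 = 1 := rfl
    have hQ : QQ n 0 = 1 := rfl
    have e0 : n - 0 = n := rfl
    have e1 : 2*n+2*0+2 = 2*n+2 := by omega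
    rw [hD, hQ, e0, e1, choose_two_np, Nat.choose_zero_right]
    rw [one_mul, mul_one, mul_one, base_id]
  | succ k ih =>
    intro hk
    have hk' : k ≤ n := by omega
    have IH := ih hk'
    have hmul : ((n+k+2)*((2*k+2)*(k+1))) * (DD (k+1) * ((2*n+1).choose (n-(k+1))) * ((2*n+2*(k+1)+2).choose (2*n+1)))
        = ((n+k+2)*((2*k+2)*(k+1))) * (2*((2*n+1)*(2*n).choose n) * (n.choose (k+1)) * QQ n (k+1)) := by
      have hD : DD (k+1) = DD k * (2*(k)+3) := Finset.prod_range_succ _ _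
      have hQ : QQ n (k+1) = QQ n k * (2*n+2*(k)+3) := Finset.prod_range_succ _ _
      have hi : (2*n+1).choose (n-k) * (n-k) = (2*n+1).choose (n-(k+1)) * (n+k+2) := by
        have h := Nat.choose_succ_right_eq (2*n+1) (n-k-1)
        have e1 : n-k-1+1 = n-k := by omega
        have e2 : (2*n+1) - (n-k-1) = n+k+2 := by omega
        rw [e1, e2] at h
        have e3 : n - (k+1) = n-k-1 := by omega
        rw [e3, h]
      have hnk := Nat.choose_succ_right_eq n k
      have hbig := step_choose_big n k
      have e4 : 2*n+2*(k+1)+2 = 2*n+2*k+4 := by omega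
      rw [hD, hQ, e4]
      calc ((n+k+2)*((2*k+2)*(k+1))) * (DD k * (2*k+3) * ((2*n+1).choose (n-(k+1))) * ((2*n+2*k+4).choose (2*n+1)))
          = (k+1) * (DD k * ((2*n+1).choose (n-(k+1)) * (n+k+2)) * ((2*k+3)*((2*k+2)*((2*n+2*k+4).choose (2*n+1))))) := by ring
        _ = (k+1) * (DD k * ((2*n+1).choose (n-k) * (n-k)) * ((2*n+2*k+4)*((2*n+2*k+3)*((2*n+2*k+2).choose (2*n+1))))) := by
            rw [← hi, hbig]
        _ = (DD k * ((2*n+1).choose (n-k)) * ((2*n+2*k+2).choose (2*n+1))) * ((n-k)*((k+1)*((2*n+2*k+4)*(2*n+2*k+3)))) := by ring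
        _ = (2*((2*n+1)*(2*n).choose n) * (n.choose k) * QQ n k) * ((n-k)*((k+1)*((2*n+2*k+4)*(2*n+2*k+3)))) := by rw [IH]
        _ = (2*((2*n+1)*(2*n).choose n)) * (n.choose k * (n-k)) * (QQ n k * ((k+1)*((2*n+2*k+4)*(2*n+2*k+3)))) := by ring
        _ = (2*((2*n+1)*(2*n).choose n)) * (n.choose (k+1) * (k+1)) * (QQ n k * ((k+1)*((2*n+2*k+4)*(2*n+2*k+3)))) := by rw [hnk]
        _ = ((n+k+2)*((2*k+2)*(k+1))) * (2*((2*n+1)*(2*n).choose n) * (n.choose (k+1)) * (QQ n k * (2*n+2*k+3))) := by ring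
    have hpos : 0 < (n+k+2)*((2*k+2)*(k+1)) := by positivity
    exact Nat.eq_of_mul_eq_mul_left hpos hmul

lemma DD_mul_eq : ∀ k : ℕ, DD k * (2^k * k.factorial) = (2*k+1).factorial := by
  intro k
  induction k with
  | zero => rfl
  | succ k ih =>
    have hD : DD (k+1) = DD k * (2*k+3) := Finset.prod_range_succ _ _
    have e1 : 2*(k+1)+1 = (2*k+1) + 2 := by omega
    rw [hD, e1]
    have : ((2*k+1)+2).factorial = ((2*k+1)+2) * (((2*k+1)+1) * (2*k+1).factorial) := by
      rw [Nat.factorial_succ, Nat.factorial_succ]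
    rw [this, ← ih, Nat.factorial_succ]
    ring

lemma vD_le (p k : ℕ) (hp : p.Prime) (hodd : p ≠ 2) : (DD k).factorization p ≤ k := by
  have hdvd : DD k ∣ (2*k+1).factorial := ⟨2^k * k.factorial, (DD_mul_eq k).symm⟩
  have h1 : (DD k).factorization p ≤ ((2*k+1).factorial).factorization p := by
    have := (Nat.factorization_le_iff_dvd ((DD_pos k).ne')
      (Nat.factorial_ne_zero _)).mpr hdvd
    exact this p
  have : Fact p.Prime := ⟨hp⟩
  have h2 : ((2*k+1).factorial).factorization p = padicValNat p ((2*k+1).factorial) :=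
    Nat.factorization_def _ hp
  have h3 := sub_one_mul_padicValNat_factorial (p := p) (2*k+1)
  have hp3 : 3 ≤ p := by
    rcases hp.two_le.lt_or_eq with h | h
    · omega
    · omega
  have h4 : (p-1) * padicValNat p ((2*k+1).factorial) ≤ 2*k+1 := by omega
  have h5 : 2 * padicValNat p ((2*k+1).factorial) ≤ (p-1) * padicValNat p ((2*k+1).factorial) :=
    Nat.mul_le_mul_right _ (by omega)
  omega

lemma pow_dvd_of_forall_prime {a y : ℕ} (e : ℕ) (ha : a ≠ 0) (hy : y ≠ 0)
    (h : ∀ p : ℕ, p.Prime → e * a.factorization p ≤ y.factorization p) : a^e ∣ y := by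
  refine (Nat.factorization_le_iff_dvd (pow_ne_zero e ha) hy).mp ?_
  intro p
  rw [Nat.factorization_pow]
  simp only [Finsupp.smul_apply, smul_eq_mul]
  by_cases hp : p.Prime
  · exact h p hp
  · rw [Nat.factorization_eq_zero_of_not_prime _ hp]
    simp


section APoly
open Polynomial

lemma coeff_lemma (N k : ℕ) (hk : k ≤ N) :
    N.choose k * (N.descFactorial (N-k) * N.descFactorial k) = N.factorial * (N.choose k)^2 := by
  rw [Nat.descFactorial_eq_factorial_mul_choose, Nat.descFactorial_eq_factorial_mul_choose,
    Nat.choose_symm hk]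
  have h := Nat.choose_mul_factorial_mul_factorial hk
  calc N.choose k * ((N-k).factorial * N.choose k * (k.factorial * N.choose k))
      = (N.choose k * k.factorial * (N-k).factorial) * (N.choose k)^2 := by ring
    _ = N.factorial * (N.choose k)^2 := by rw [h]

lemma A_id (n : ℕ) (m : ℤ) :
    (2:ℤ)^(2*n+1) * ∑ k ∈ Finset.range (2*n+1+1), ((2*n+1).choose k : ℤ)^2 * m^k * (m+1)^(2*n+1-k)
    = ∑ k ∈ Finset.range (n+1), (-1:ℤ)^(n-k) * ((2*n+1).choose (n-k) : ℤ)
        * ((2*n+2*k+2).choose (2*n+1) : ℤ) * (2*m+1)^(2*k+1) := by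
  set N := 2*n+1 with hN
  -- the polynomial (X-1)^N (X+1)^N and its N-th derivative, two ways
  have way1 : derivative^[N] (((X:ℤ[X]) - C 1)^N * ((X:ℤ[X]) + C 1)^N)
      = ∑ k ∈ Finset.range (N+1),
          (N.factorial * (N.choose k)^2) • (((X:ℤ[X]) - C 1)^k * ((X:ℤ[X]) + C 1)^(N-k)) := by
    rw [Polynomial.iterate_derivative_mul]
    refine Finset.sum_congr rfl (fun k hk => ?_)
    have hkN : k ≤ N := by
      simp only [Finset.mem_range] at hk; omega
    rw [Polynomial.iterate_derivative_X_sub_pow, Polynomial.iterate_derivative_X_add_pow]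
    have e1 : N - (N - k) = k := by omega
    rw [e1, smul_mul_smul_comm, smul_smul, coeff_lemma N k hkN]
  have way2 : derivative^[N] (((X:ℤ[X]) - C 1)^N * ((X:ℤ[X]) + C 1)^N)
      = ∑ j ∈ Finset.range (N+1),
          ((-1:ℤ)^(N-j) * (N.choose j : ℤ)) •
            (((2*j).descFactorial N : ℤ) • (X:ℤ[X])^(2*j - N)) := by
    have hfac : ((X:ℤ[X]) - C 1)^N * ((X:ℤ[X]) + C 1)^N
        = ∑ j ∈ Finset.range (N+1), ((-1:ℤ)^(N-j) * (N.choose j : ℤ)) • (X:ℤ[X])^(2*j) := by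
      rw [← mul_pow]
      have : ((X:ℤ[X]) - C 1) * ((X:ℤ[X]) + C 1) = (X:ℤ[X])^2 + (-1 : ℤ[X]) := by
        simp only [Polynomial.C_1]; ring
      rw [this, add_pow]
      refine Finset.sum_congr rfl (fun j hj => ?_)
      rw [← pow_mul]
      rw [zsmul_eq_mul]
      push_cast
      ring
    rw [hfac, Polynomial.iterate_derivative_sum]
    refine Finset.sum_congr rfl (fun j hj => ?_)
    rw [Polynomial.iterate_derivative_smul, Polynomial.iterate_derivative_X_pow_eq_smul]
  -- evaluate both ways at 2m+1
  have heval := congrArg (Polynomial.eval (2*m+1)) (way1.symm.trans way2)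
  rw [Polynomial.eval_finset_sum, Polynomial.eval_finset_sum] at heval
  simp only [Polynomial.eval_smul, Polynomial.eval_mul, Polynomial.eval_pow, Polynomial.eval_sub,
    Polynomial.eval_add, Polynomial.eval_X, Polynomial.eval_C, smul_eq_mul, nsmul_eq_mul,
    zsmul_eq_mul, Polynomial.eval_natCast, Polynomial.eval_intCast] at heval
  -- LHS of heval
  have hL : ∑ k ∈ Finset.range (N+1),
        ((N.factorial * (N.choose k)^2 : ℕ) : ℤ) * ((2*m+1 - 1)^k * (2*m+1 + 1)^(N-k))
      = (N.factorial : ℤ) * ((2:ℤ)^N * ∑ k ∈ Finset.range (N+1), ((N.choose k : ℤ))^2 * m^k * (m+1)^(N-k)) := by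
    rw [Finset.mul_sum, Finset.mul_sum]
    refine Finset.sum_congr rfl (fun k hk => ?_)
    have hkN : k ≤ N := by simp only [Finset.mem_range] at hk; omega
    have h2 : (2*m+1-1 : ℤ) = 2*m := by ring
    have h3 : (2*m+1+1 : ℤ) = 2*(m+1) := by ring
    rw [h2, h3, mul_pow, mul_pow]
    have h4 : (2:ℤ)^k * (2:ℤ)^(N-k) = 2^N := by
      rw [← pow_add]; congr 1; omega
    push_cast
    calc ((N.factorial:ℤ) * ((N.choose k:ℤ))^2) * ((2:ℤ)^k * m^k * ((2:ℤ)^(N-k) * (m+1)^(N-k)))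
        = ((2:ℤ)^k * 2^(N-k)) * ((N.factorial:ℤ) * (((N.choose k:ℤ))^2 * m^k * (m+1)^(N-k))) := by ring
      _ = (N.factorial:ℤ) * ((2:ℤ)^N * (((N.choose k:ℤ))^2 * m^k * (m+1)^(N-k))) := by rw [h4]; ring
  -- RHS of heval
  have hR : ∑ j ∈ Finset.range (N+1),
        ((-1:ℤ)^(N-j) * (N.choose j : ℤ)) * (((2*j).descFactorial N : ℤ) * (2*m+1)^(2*j - N))
      = (N.factorial : ℤ) * ∑ k ∈ Finset.range (n+1), (-1:ℤ)^(n-k) * ((2*n+1).choose (n-k) : ℤ)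
          * ((2*n+2*k+2).choose (2*n+1) : ℤ) * (2*m+1)^(2*k+1) := by
    have hsplit : N + 1 = (n+1) + (n+1) := by omega
    rw [hsplit, Finset.sum_range_add]
    have hz : ∑ j ∈ Finset.range (n+1),
        ((-1:ℤ)^(N-j) * (N.choose j : ℤ)) * (((2*j).descFactorial N : ℤ) * (2*m+1)^(2*j - N)) = 0 := by
      refine Finset.sum_eq_zero (fun j hj => ?_)
      have hjn : j ≤ n := by simp only [Finset.mem_range] at hj; omega
      have : (2*j).descFactorial N = 0 := by
        rw [Nat.descFactorial_eq_zero_iff_lt]; omega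
      rw [this]; push_cast; ring
    rw [hz, zero_add, Finset.mul_sum]
    refine Finset.sum_congr rfl (fun k hk => ?_)
    have hkn : k ≤ n := by simp only [Finset.mem_range] at hk; omega
    have e1 : N - (n+1+k) = n - k := by omega
    have e2 : 2*(n+1+k) - N = 2*k+1 := by omega
    have e3 : 2*(n+1+k) = 2*n+2*k+2 := by omega
    have e4 : N.choose (n+1+k) = N.choose (n-k) := by
      rw [← Nat.choose_symm (show n+1+k ≤ N by omega), e1]
    have e5 : (2*n+2*k+2).descFactorial N = N.factorial * (2*n+2*k+2).choose N := by
      rw [Nat.descFactorial_eq_factorial_mul_choose]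
    rw [e1, e2, e3, e4, e5]
    push_cast
    ring
  rw [hL] at heval
  push_cast at heval hR
  rw [hR] at heval
  exact mul_left_cancel₀ (by exact_mod_cast Nat.factorial_ne_zero N) heval

end APoly

-- v_p(c) ≤ k + v_p(C1 * C2)
lemma vc_le (n k : ℕ) (hkn : k ≤ n) (p : ℕ) (hp : p.Prime) (hpodd : p ≠ 2) :
    ((2*n+1) * (2*n).choose n).factorization p
      ≤ k + ((((2*n+1).choose (n-k)) * ((2*n+2*k+2).choose (2*n+1))).factorization p) := by
  set c := (2*n+1) * (2*n).choose n with hc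
  set C1 := (2*n+1).choose (n-k) with hC1
  set C2 := (2*n+2*k+2).choose (2*n+1) with hC2
  have hC1pos : 0 < C1 := Nat.choose_pos (by omega)
  have hC2pos : 0 < C2 := Nat.choose_pos (by omega)
  have hcpos : 0 < c := Nat.mul_pos (by omega) (Nat.choose_pos (by omega))
  have hprod : DD k * (C1 * C2) = c * (2 * n.choose k * QQ n k) := by
    have hB := B_id n k hkn
    calc DD k * (C1 * C2) = DD k * C1 * C2 := by ring
      _ = 2*c * (n.choose k) * QQ n k := hB
      _ = c * (2 * n.choose k * QQ n k) := by ring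
  have hdvd : c ∣ DD k * (C1 * C2) := ⟨_, hprod⟩
  have hDCpos : 0 < DD k * (C1 * C2) := Nat.mul_pos (DD_pos k) (Nat.mul_pos hC1pos hC2pos)
  have h1 : c.factorization p ≤ (DD k * (C1 * C2)).factorization p :=
    (Nat.factorization_le_iff_dvd hcpos.ne' hDCpos.ne').mpr hdvd p
  rw [Nat.factorization_mul (DD_pos k).ne' (Nat.mul_pos hC1pos hC2pos).ne'] at h1
  have h2 := vD_le p k hp hpodd
  simp only [Finsupp.add_apply] at h1
  omega

lemma int_pow_dvd_iff (a : ℤ) (e : ℕ) (y : ℤ) : a^e ∣ y ↔ a.natAbs^e ∣ y.natAbs := by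
  rw [← Int.natAbs_dvd_natAbs, Int.natAbs_pow]

/-- Corollary 3, Eq. (27): for an odd integer `x = 2m+1` with `x ≠ ±1`, the Legendre
polynomial value `P_{2n+1}(x) = ∑_{k=0}^{2n+1} C(2n+1,k)^2 (m+1)^k m^{2n+1-k}` is nonzero
and the largest power of `x` dividing it equals `1` plus the largest power of `x`
dividing `(2n+1)·C(2n,n)`. -/
theorem stmt_10 (n : ℕ) (m : ℤ) (h1 : 2 * m + 1 ≠ 1) (h2 : 2 * m + 1 ≠ -1) :
    (∑ k ∈ range (2 * n + 1 + 1),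
      ((2 * n + 1).choose k : ℤ) ^ 2 * (m + 1) ^ k * m ^ (2 * n + 1 - k)) ≠ 0 ∧
    ∃ E : ℕ,
      IsGreatest {e : ℕ | (2 * m + 1) ^ e ∣ ((2 * n + 1 : ℕ) * (2 * n).choose n : ℤ)} E ∧
      IsGreatest {e : ℕ | (2 * m + 1) ^ e ∣
        ∑ k ∈ range (2 * n + 1 + 1),
          ((2 * n + 1).choose k : ℤ) ^ 2 * (m + 1) ^ k * m ^ (2 * n + 1 - k)} (1 + E) := by
  -- basic facts about x = 2m+1
  have hx3 : 3 ≤ (2*m+1).natAbs := by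
    rcases (show 2*m+1 ≥ 3 ∨ 2*m+1 ≤ -3 by omega) with h | h
    · omega
    · omega
  set a : ℕ := (2*m+1).natAbs with ha
  have ha0 : a ≠ 0 := by omega
  have haodd : Odd a := by
    rw [ha, Int.natAbs_odd]
    exact ⟨m, by ring⟩
  have ha2 : ¬ (2 ∣ a) := by
    intro hdvd
    rcases haodd with ⟨t, ht⟩
    omega
  set c : ℕ := (2*n+1) * (2*n).choose n with hc
  have hcpos : 0 < c := Nat.mul_pos (by omega) (Nat.choose_pos (by omega))
  have hccast : ((2 * n + 1 : ℕ) * (2 * n).choose n : ℤ) = (c : ℤ) := by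
    rw [hc]; push_cast; ring
  -- the greatest exponent E for c
  set E := Nat.findGreatest (fun e => a^e ∣ c) c with hE
  have hEdvd : a^E ∣ c :=
    Nat.findGreatest_spec (P := fun e => a^e ∣ c) (Nat.zero_le c) (by simp)
  have hEmax : ∀ e, a^e ∣ c → e ≤ E := by
    intro e he
    have hec : e ≤ c := by
      have hh1 : a^e ≤ c := Nat.le_of_dvd hcpos he
      have hh2 : e < a^e := Nat.lt_pow_self (by omega : 1 < a)
      omega
    by_contra hlt
    exact Nat.findGreatest_is_greatest (P := fun e => a^e ∣ c) (by omega) hec he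
  have hEnot : ¬ a^(E+1) ∣ c := fun h => by have := hEmax _ h; omega
  -- sums
  set P : ℤ := ∑ k ∈ range (2*n+1+1),
      ((2*n+1).choose k : ℤ)^2 * (m+1)^k * m^(2*n+1-k) with hP
  set f : ℕ → ℤ := fun k => (-1:ℤ)^(n-k) * ((2*n+1).choose (n-k) : ℤ)
        * ((2*n+2*k+2).choose (2*n+1) : ℤ) * (2*m+1)^(2*k+1) with hf
  set S : ℤ := ∑ k ∈ range (n+1), f k with hS
  have hrefl : P = ∑ k ∈ range (2*n+1+1), ((2*n+1).choose k : ℤ)^2 * m^k * (m+1)^(2*n+1-k) := by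
    rw [hP, ← Finset.sum_range_reflect]
    refine Finset.sum_congr rfl (fun j hj => ?_)
    have hjN : j ≤ 2*n+1 := by simp only [Finset.mem_range] at hj; omega
    have e1 : 2*n+1+1-1-j = 2*n+1-j := by omega
    have e2 : (2*n+1) - (2*n+1-j) = j := by omega
    have e3 : (2*n+1).choose (2*n+1-j) = (2*n+1).choose j := Nat.choose_symm hjN
    rw [e1, e2, e3]; ring
  have hSP : (2:ℤ)^(2*n+1) * P = S := by rw [hrefl, hS, hf]; exact A_id n m
  -- natAbs of terms
  have hfabs : ∀ k, (f k).natAbs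
      = ((2*n+1).choose (n-k)) * ((2*n+2*k+2).choose (2*n+1)) * a^(2*k+1) := by
    intro k
    rw [hf]
    simp [Int.natAbs_mul, Int.natAbs_pow, ha]
  -- head value
  have hhead : ((2*n+1).choose (n-0)) * ((2*n+2*0+2).choose (2*n+1)) = 2*c := by
    have e1 : n - 0 = n := rfl
    have e2 : 2*n+2*0+2 = 2*n+2 := by omega
    rw [e1, e2, choose_two_np, hc, base_id]
  -- E*α ≤ v_p c for p prime
  have hvc : ∀ p : ℕ, p.Prime → E * a.factorization p ≤ c.factorization p := by
    intro p hp
    have hh1 : p ^ (a.factorization p) ∣ a := Nat.ordProj_dvd a p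
    have hh2 : (p ^ (a.factorization p))^E ∣ a^E := pow_dvd_pow_of_dvd hh1 E
    rw [← pow_mul] at hh2
    have hh3 : p ^ (a.factorization p * E) ∣ c := hh2.trans hEdvd
    rw [Nat.mul_comm] at hh3
    exact (Nat.Prime.pow_dvd_iff_le_factorization hp hcpos.ne').mp hh3
  have hα2 : a.factorization 2 = 0 := Nat.factorization_eq_zero_of_not_dvd ha2
  -- per-term divisibility for k ≥ 1 (K2)
  have hK2tail : ∀ k, 1 ≤ k → k ≤ n → (2*m+1)^(E+1) ∣ f k := by
    intro k hk1 hkn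
    rw [int_pow_dvd_iff, hfabs k]
    have hC1pos : 0 < (2*n+1).choose (n-k) := Nat.choose_pos (by omega)
    have hC2pos : 0 < (2*n+2*k+2).choose (2*n+1) := Nat.choose_pos (by omega)
    refine pow_dvd_of_forall_prime (E+1) ha0 (by positivity) ?_
    intro p hp
    by_cases hp2 : p = 2
    · rw [hp2, hα2]; simp
    have hkvc := vc_le n k hkn p hp hp2
    rw [← hc] at hkvc
    have hvcp := hvc p hp
    rw [Nat.factorization_mul (Nat.mul_pos hC1pos hC2pos).ne' (pow_ne_zero _ ha0),
      Nat.factorization_pow]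
    simp only [Finsupp.add_apply, Finsupp.smul_apply, smul_eq_mul]
    set α := a.factorization p
    set vC := (((2*n+1).choose (n-k)) * ((2*n+2*k+2).choose (2*n+1))).factorization p
    rcases Nat.eq_zero_or_pos α with hα | hα
    · simp [hα]
    · have h2k : k ≤ 2*k*α := by
        calc k ≤ 2*k*1 := by omega
          _ ≤ 2*k*α := Nat.mul_le_mul_left _ hα
      have e2 : (E+1)*α = E*α + α := by ring
      have e3 : (2*k+1)*α = 2*k*α + α := by ring
      rw [e2, e3]
      have := hvcp.trans hkvc
      omega
  -- K2 head
  have hK2head : (2*m+1)^(E+1) ∣ f 0 := by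
    rw [int_pow_dvd_iff, hfabs 0, hhead]
    obtain ⟨d, hd⟩ := hEdvd
    rw [hd]
    exact ⟨2*d, by rw [pow_succ]; ring⟩
  have hK2S : (2*m+1)^(E+1) ∣ S := by
    rw [hS, Finset.sum_range_succ']
    refine dvd_add (Finset.dvd_sum (fun k hk => ?_)) hK2head
    have hkn : k + 1 ≤ n := by simp only [Finset.mem_range] at hk; omega
    exact hK2tail (k+1) (by omega) hkn
  have hK2P : (2*m+1)^(E+1) ∣ P := by
    have hd : (2*m+1)^(E+1) ∣ 2^(2*n+1) * P := hSP ▸ hK2S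
    rw [int_pow_dvd_iff] at hd ⊢
    rw [Int.natAbs_mul, Int.natAbs_pow] at hd
    have h2n : ((2:ℤ)).natAbs = 2 := rfl
    rw [h2n] at hd
    have hcop : Nat.Coprime (a^(E+1)) (2^(2*n+1)) :=
      (Nat.coprime_two_right.mpr haodd).pow _ _
    exact Nat.Coprime.dvd_of_dvd_mul_left hcop hd
  -- K3 : find bad prime and show non-divisibility one step higher
  have hbad : ∃ p : ℕ, p.Prime ∧ c.factorization p < (E+1) * a.factorization p := by
    by_contra hcon
    push_neg at hcon
    exact hEnot (pow_dvd_of_forall_prime (E+1) ha0 hcpos.ne' (fun p hp => hcon p hp))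
  obtain ⟨p, hp, hplt⟩ := hbad
  have hαpos : 0 < a.factorization p := by
    by_contra hz
    push_neg at hz
    have hz0 : a.factorization p = 0 := by omega
    rw [hz0, Nat.mul_zero] at hplt
    omega
  have hp2 : p ≠ 2 := by
    intro h
    rw [h, hα2] at hαpos
    omega
  have hpP2 : ¬ (p ∣ 2) := by
    intro hdvd
    have := (Nat.prime_dvd_prime_iff_eq hp Nat.prime_two).mp hdvd
    exact hp2 this
  have hv2 : (2:ℕ).factorization p = 0 := Nat.factorization_eq_zero_of_not_dvd hpP2
  have htail : ∀ k, 1 ≤ k → k ≤ n →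
      (p:ℤ)^(c.factorization p + a.factorization p + 1) ∣ f k := by
    intro k hk1 hkn
    rw [int_pow_dvd_iff, hfabs k, Int.natAbs_natCast]
    have hC1pos : 0 < (2*n+1).choose (n-k) := Nat.choose_pos (by omega)
    have hC2pos : 0 < (2*n+2*k+2).choose (2*n+1) := Nat.choose_pos (by omega)
    refine (Nat.Prime.pow_dvd_iff_le_factorization hp (by positivity)).mpr ?_
    rw [Nat.factorization_mul (Nat.mul_pos hC1pos hC2pos).ne' (pow_ne_zero _ ha0),
      Nat.factorization_pow]
    simp only [Finsupp.add_apply, Finsupp.smul_apply, smul_eq_mul]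
    have hkvc := vc_le n k hkn p hp hp2
    rw [← hc] at hkvc
    set α := a.factorization p
    set vC := (((2*n+1).choose (n-k)) * ((2*n+2*k+2).choose (2*n+1))).factorization p
    have h2k : k + 1 ≤ 2*k*α := by
      calc k + 1 ≤ 2*k*1 := by omega
        _ ≤ 2*k*α := Nat.mul_le_mul_left _ hαpos
    have e3 : (2*k+1)*α = 2*k*α + α := by ring
    rw [e3]
    omega
  have hheadnd : ¬ (p:ℤ)^(c.factorization p + a.factorization p + 1) ∣ f 0 := by
    rw [int_pow_dvd_iff, hfabs 0, hhead, Int.natAbs_natCast]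
    intro hdvd
    have hcap : (0:ℕ) < 2*c*a^(2*0+1) := by positivity
    have hle := (Nat.Prime.pow_dvd_iff_le_factorization hp hcap.ne').mp hdvd
    rw [Nat.factorization_mul (by positivity) (pow_ne_zero _ ha0),
      Nat.factorization_mul (by norm_num) hcpos.ne', Nat.factorization_pow] at hle
    simp only [Finsupp.add_apply, Finsupp.smul_apply, smul_eq_mul, hv2] at hle
    omega
  have hSnd : ¬ (p:ℤ)^(c.factorization p + a.factorization p + 1) ∣ S := by
    rw [hS, Finset.sum_range_succ']
    intro hdvd
    have htl : (p:ℤ)^(c.factorization p + a.factorization p + 1) ∣ ∑ k ∈ range n, f (k+1) := by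
      refine Finset.dvd_sum (fun k hk => ?_)
      have hkn : k + 1 ≤ n := by simp only [Finset.mem_range] at hk; omega
      exact htail (k+1) (by omega) hkn
    have hh := dvd_sub hdvd htl
    simp only [add_sub_cancel_left] at hh
    exact hheadnd hh
  have hS0 : S ≠ 0 := fun h => hSnd (h ▸ dvd_zero _)
  have hP0 : P ≠ 0 := by
    intro h
    rw [h, mul_zero] at hSP
    exact hS0 hSP.symm
  have hK3 : ¬ (2*m+1)^(E+2) ∣ P := by
    intro hdvd
    have hdS : (2*m+1)^(E+2) ∣ S := by
      rw [← hSP]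
      exact Dvd.dvd.mul_left hdvd _
    rw [int_pow_dvd_iff] at hdS
    have hh1 : p^((E+2) * a.factorization p) ∣ a^(E+2) := by
      rw [Nat.mul_comm, pow_mul]
      exact pow_dvd_pow_of_dvd (Nat.ordProj_dvd a p) (E+2)
    have hTle : c.factorization p + a.factorization p + 1 ≤ (E+2) * a.factorization p := by
      have e : (E+2)*a.factorization p = (E+1)*a.factorization p + a.factorization p := by ring
      omega
    have hh2 : p^(c.factorization p + a.factorization p + 1) ∣ S.natAbs :=
      (pow_dvd_pow p hTle).trans (hh1.trans hdS)
    refine hSnd ?_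
    rw [int_pow_dvd_iff, Int.natAbs_natCast]
    exact hh2
  -- assembly
  have htrans : ∀ e : ℕ, ((2*m+1)^e ∣ (c:ℤ)) ↔ a^e ∣ c := by
    intro e
    rw [int_pow_dvd_iff, Int.natAbs_natCast]
  constructor
  · exact hP0
  · refine ⟨E, ⟨?_, ?_⟩, ⟨?_, ?_⟩⟩
    · show (2*m+1)^E ∣ _
      rw [hccast, htrans]
      exact hEdvd
    · intro e he
      simp only [Set.mem_setOf_eq, hccast, htrans] at he
      exact hEmax e he
    · show (2*m+1)^(1+E) ∣ P
      rw [show 1+E = E+1 by omega]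
      exact hK2P
    · intro e he
      simp only [Set.mem_setOf_eq] at he
      by_contra hgt
      push_neg at hgt
      have : (2*m+1)^(E+2) ∣ P := (pow_dvd_pow (2*m+1) (by omega)).trans he
      exact hK3 this
end

section
/- Let n be a natural number and let a, b be integers with gcd(a,b) = 1, b ≠ 0, and b ≠ ±1. Define the generalized central trinomial coefficient T_{2n}(a,b) = ∑_{k=0}^{n} C(2n,k) · C(2n-k,k) · a^k · b^{2n-2k}. Then T_{2n}(a,b) ≠ 0, and the largest natural number e such that b^e divides T_{2n}(a,b) is equal to the largest natural number e such that b^e divides C(2n,n). -/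
open Finset

private lemma fact_id1 (n k : ℕ) (hk : k ≤ n) :
    (2*n).choose k * (2*n - k).choose k = (2*n).choose (2*k) * (2*k).choose k := by
  have h1 : k ≤ 2*n := by omega
  have h2 : k ≤ 2*n - k := by omega
  have h3 : 2*k ≤ 2*n := by omega
  have h4 : k ≤ 2*k := by omega
  have e1 : (2*n - k).choose k * k.factorial * (2*(n-k)).factorial = (2*n - k).factorial := by
    have := Nat.choose_mul_factorial_mul_factorial h2
    rwa [show 2*n - k - k = 2*(n-k) by omega] at this
  have e2 : (2*n).choose k * k.factorial * (2*n - k).factorial = (2*n).factorial :=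
    Nat.choose_mul_factorial_mul_factorial h1
  have e3 : (2*k).choose k * k.factorial * k.factorial = (2*k).factorial := by
    have := Nat.choose_mul_factorial_mul_factorial h4
    rwa [show 2*k - k = k by omega] at this
  have e4 : (2*n).choose (2*k) * (2*k).factorial * (2*(n-k)).factorial = (2*n).factorial := by
    have := Nat.choose_mul_factorial_mul_factorial h3
    rwa [show 2*n - 2*k = 2*(n-k) by omega] at this
  have hT : 0 < k.factorial * k.factorial * (2*(n-k)).factorial :=
    Nat.mul_pos (Nat.mul_pos k.factorial_pos k.factorial_pos) (2*(n-k)).factorial_pos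
  apply Nat.eq_of_mul_eq_mul_right hT
  calc (2*n).choose k * (2*n - k).choose k * (k.factorial * k.factorial * (2*(n-k)).factorial)
      = ((2*n).choose k * k.factorial) * ((2*n - k).choose k * k.factorial * (2*(n-k)).factorial) := by
        ring
    _ = (2*n).choose k * k.factorial * (2*n - k).factorial := by rw [e1]
    _ = (2*n).factorial := e2
    _ = (2*n).choose (2*k) * (2*k).factorial * (2*(n-k)).factorial := e4.symm
    _ = (2*n).choose (2*k) * ((2*k).choose k * k.factorial * k.factorial) * (2*(n-k)).factorial := by
        rw [e3]
    _ = (2*n).choose (2*k) * (2*k).choose k * (k.factorial * k.factorial * (2*(n-k)).factorial) := by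
        ring

private lemma fact_id2 (n k : ℕ) (hk : k ≤ n) :
    (2*n).choose (2*k) * (2*k).choose k * (2*(n-k)).choose (n-k)
      = (2*n).choose n * (n.choose k * n.choose k) := by
  have h3 : 2*k ≤ 2*n := by omega
  have h4 : k ≤ 2*k := by omega
  have h5 : n ≤ 2*n := by omega
  have h6 : n - k ≤ 2*(n-k) := by omega
  have e3 : (2*k).choose k * k.factorial * k.factorial = (2*k).factorial := by
    have := Nat.choose_mul_factorial_mul_factorial h4
    rwa [show 2*k - k = k by omega] at this
  have e4 : (2*n).choose (2*k) * (2*k).factorial * (2*(n-k)).factorial = (2*n).factorial := by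
    have := Nat.choose_mul_factorial_mul_factorial h3
    rwa [show 2*n - 2*k = 2*(n-k) by omega] at this
  have e5 : (2*(n-k)).choose (n-k) * (n-k).factorial * (n-k).factorial = (2*(n-k)).factorial := by
    have := Nat.choose_mul_factorial_mul_factorial h6
    rwa [show 2*(n-k) - (n-k) = n-k by omega] at this
  have e6 : n.choose k * k.factorial * (n-k).factorial = n.factorial :=
    Nat.choose_mul_factorial_mul_factorial hk
  have e7 : (2*n).choose n * n.factorial * n.factorial = (2*n).factorial := by
    have := Nat.choose_mul_factorial_mul_factorial h5
    rwa [show 2*n - n = n by omega] at this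
  have hT : 0 < k.factorial * k.factorial * ((n-k).factorial * (n-k).factorial) :=
    Nat.mul_pos (Nat.mul_pos k.factorial_pos k.factorial_pos)
      (Nat.mul_pos (n-k).factorial_pos (n-k).factorial_pos)
  apply Nat.eq_of_mul_eq_mul_right hT
  calc (2*n).choose (2*k) * (2*k).choose k * (2*(n-k)).choose (n-k)
        * (k.factorial * k.factorial * ((n-k).factorial * (n-k).factorial))
      = (2*n).choose (2*k) * ((2*k).choose k * k.factorial * k.factorial)
          * ((2*(n-k)).choose (n-k) * (n-k).factorial * (n-k).factorial) := by ring
    _ = (2*n).choose (2*k) * (2*k).factorial * (2*(n-k)).factorial := by rw [e3, e5]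
    _ = (2*n).factorial := e4
    _ = (2*n).choose n * n.factorial * n.factorial := e7.symm
    _ = (2*n).choose n * (n.choose k * k.factorial * (n-k).factorial)
          * (n.choose k * k.factorial * (n-k).factorial) := by rw [e6]
    _ = (2*n).choose n * (n.choose k * n.choose k)
          * (k.factorial * k.factorial * ((n-k).factorial * (n-k).factorial)) := by ring

private lemma keyN (n k e β : ℕ) (hβ : 2 ≤ β) (hk : k < n)
    (he : β ^ e ∣ (2*n).choose n) :
    β ^ (e+1) ∣ (2*n).choose (2*k) * (2*k).choose k * β ^ (2*(n-k)) := by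
  have hβ0 : β ≠ 0 := by omega
  have hm1 : 1 ≤ n - k := by omega
  have hc1 : (2*n).choose (2*k) ≠ 0 := (Nat.choose_pos (by omega)).ne'
  have hc2 : (2*k).choose k ≠ 0 := (Nat.choose_pos (by omega)).ne'
  have hc : (2*n).choose (2*k) * (2*k).choose k ≠ 0 := mul_ne_zero hc1 hc2
  have hN : (2*n).choose n ≠ 0 := (Nat.choose_pos (by omega)).ne'
  have hcm : (2*(n-k)).choose (n-k) ≠ 0 := (Nat.choose_pos (by omega)).ne'
  rw [← Nat.factorization_le_iff_dvd (pow_ne_zero _ hβ0) (mul_ne_zero hc (pow_ne_zero _ hβ0))]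
  rw [Finsupp.le_def]
  intro p
  rw [Nat.factorization_mul hc (pow_ne_zero _ hβ0), Nat.factorization_pow, Nat.factorization_pow]
  simp only [Finsupp.coe_add, Finsupp.coe_smul, Pi.add_apply, Pi.smul_apply, smul_eq_mul]
  set f := β.factorization p with hfdef
  by_cases hf : f = 0
  · simp [hf]
  · have hf1 : 1 ≤ f := Nat.one_le_iff_ne_zero.mpr hf
    have h1 : e * f ≤ ((2*n).choose n).factorization p := by
      have h := (Nat.factorization_le_iff_dvd (pow_ne_zero _ hβ0) hN).mpr he
      have h' := Finsupp.le_def.mp h p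
      rwa [Nat.factorization_pow, Finsupp.coe_smul, Pi.smul_apply, smul_eq_mul] at h'
    have hdvd : (2*n).choose n ∣ ((2*n).choose (2*k) * (2*k).choose k) * (2*(n-k)).choose (n-k) := by
      rw [fact_id2 n k hk.le]
      exact dvd_mul_right _ _
    have h2 : ((2*n).choose n).factorization p
        ≤ ((2*n).choose (2*k) * (2*k).choose k).factorization p
          + ((2*(n-k)).choose (n-k)).factorization p := by
      have h := (Nat.factorization_le_iff_dvd hN (mul_ne_zero hc hcm)).mpr hdvd
      have h' := Finsupp.le_def.mp h p
      rwa [Nat.factorization_mul hc hcm, Finsupp.coe_add, Pi.add_apply] at h'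
    have h3 : ((2*(n-k)).choose (n-k)).factorization p < 2*(n-k) := by
      by_cases hp : p.Prime
      · have hl1 : ((2*(n-k)).choose (n-k)).factorization p ≤ Nat.log p (2*(n-k)) :=
          Nat.factorization_choose_le_log
        have hl2 : Nat.log p (2*(n-k)) ≤ Nat.log 2 (2*(n-k)) :=
          Nat.log_anti_left (by norm_num) hp.two_le
        have hl3 : Nat.log 2 (2*(n-k)) < 2*(n-k) := by
          apply Nat.log_lt_of_lt_pow (by omega)
          have := Nat.lt_two_pow_self (n := 2*(n-k))
          omega
        omega
      · rw [Nat.factorization_eq_zero_of_not_prime _ hp]; omega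
    have h4 : 2*(n-k) - 1 ≤ (2*(n-k)-1) * f := Nat.le_mul_of_pos_right _ (by omega)
    have h5 : (2*(n-k)-1) * f + f = 2*(n-k)*f := by
      calc (2*(n-k)-1) * f + f = ((2*(n-k)-1) + 1) * f := by ring
        _ = 2*(n-k)*f := by rw [show 2*(n-k)-1+1 = 2*(n-k) by omega]
    calc (e+1)*f = e*f + f := by ring
      _ ≤ (((2*n).choose (2*k) * (2*k).choose k).factorization p
            + ((2*(n-k)).choose (n-k)).factorization p) + f :=
          Nat.add_le_add_right (h1.trans h2) f
      _ ≤ ((2*n).choose (2*k) * (2*k).choose k).factorization p + ((2*(n-k)-1) * f + f) := by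
          omega
      _ = ((2*n).choose (2*k) * (2*k).choose k).factorization p + 2*(n-k)*f := by rw [h5]

private lemma natdvd (b : ℤ) (j : ℕ) (x : ℕ) : b ^ j ∣ (x:ℤ) ↔ b.natAbs ^ j ∣ x := by
  rw [← Int.natAbs_dvd_natAbs, Int.natAbs_pow, Int.natAbs_natCast]

private lemma keyZ (n k e : ℕ) (b : ℤ) (hβ : 2 ≤ b.natAbs) (hk : k < n)
    (he : b ^ e ∣ ((2*n).choose n : ℤ)) :
    b ^ (e+1) ∣ (((2*n).choose k : ℤ) * ((2*n - k).choose k : ℤ)) * b ^ (2*n - 2*k) := by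
  have hN : b.natAbs ^ e ∣ (2*n).choose n := (natdvd b e _).mp he
  have h := keyN n k e b.natAbs hβ hk hN
  rw [← Int.natAbs_dvd_natAbs, Int.natAbs_pow, Int.natAbs_mul, Int.natAbs_mul,
    Int.natAbs_pow, Int.natAbs_natCast, Int.natAbs_natCast,
    show 2*n - 2*k = 2*(n-k) by omega, fact_id1 n k hk.le]
  exact h

/-- Theorem 5, Eq. (28.1): for coprime `a b` with `b ∉ {0, 1, -1}`, the generalized
central trinomial coefficient `T_{2n}(a,b) = ∑_{k=0}^{n} C(2n,k) C(2n-k,k) a^k b^{2n-2k}`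
is nonzero, and the largest power of `b` dividing it equals the largest power of `b`
dividing `C(2n,n)`. -/
theorem stmt_11 (n : ℕ) (a b : ℤ) (hab : Int.gcd a b = 1)
    (h0 : b ≠ 0) (h1 : b ≠ 1) (h2 : b ≠ -1) :
    (∑ k ∈ range (n + 1),
      ((2 * n).choose k : ℤ) * ((2 * n - k).choose k : ℤ) * a ^ k * b ^ (2 * n - 2 * k)) ≠ 0 ∧
    ∃ E : ℕ,
      IsGreatest {e : ℕ | b ^ e ∣
        ∑ k ∈ range (n + 1),
          ((2 * n).choose k : ℤ) * ((2 * n - k).choose k : ℤ) * a ^ k * b ^ (2 * n - 2 * k)} E ∧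
      IsGreatest {e : ℕ | b ^ e ∣ ((2 * n).choose n : ℤ)} E := by
  classical
  have hβ : 2 ≤ b.natAbs := by omega
  set N := (2 * n).choose n with hNdef
  have hNpos : 0 < N := Nat.choose_pos (by omega)
  set S := ∑ k ∈ range (n + 1),
      ((2 * n).choose k : ℤ) * ((2 * n - k).choose k : ℤ) * a ^ k * b ^ (2 * n - 2 * k) with hS
  have hcop : IsCoprime a b := Int.isCoprime_iff_gcd_eq_one.mpr hab
  have htermn : ((2*n).choose n : ℤ) * ((2*n - n).choose n : ℤ) * a^n * b^(2*n-2*n)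
      = (N:ℤ) * a^n := by
    rw [show 2*n - n = n by omega, show 2*n - 2*n = 0 by omega, Nat.choose_self]
    push_cast; ring
  have hsplit : S = (∑ k ∈ range n,
      ((2 * n).choose k : ℤ) * ((2 * n - k).choose k : ℤ) * a ^ k * b ^ (2 * n - 2 * k))
      + (N:ℤ) * a^n := by
    rw [hS, Finset.sum_range_succ, htermn]
  have hterm : ∀ e : ℕ, b^e ∣ (N:ℤ) → ∀ k ∈ range n,
      b^(e+1) ∣ ((2 * n).choose k : ℤ) * ((2 * n - k).choose k : ℤ) * a ^ k * b ^ (2 * n - 2 * k) := by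
    intro e he k hk
    have h := keyZ n k e b hβ (mem_range.mp hk) he
    have hre : ((2 * n).choose k : ℤ) * ((2 * n - k).choose k : ℤ) * a ^ k * b ^ (2 * n - 2 * k)
        = ((((2*n).choose k : ℤ) * ((2*n - k).choose k : ℤ)) * b ^ (2*n - 2*k)) * a ^ k := by
      ring
    rw [hre]
    exact h.mul_right _
  have hiff : ∀ e : ℕ, b^e ∣ S ↔ b^e ∣ (N:ℤ) := by
    intro e
    constructor
    · induction e with
      | zero => intro _; simp
      | succ e ih =>
        intro hS1
        have he : b^e ∣ (N:ℤ) := ih (dvd_trans (pow_dvd_pow b (Nat.le_succ e)) hS1)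
        have hsum : b^(e+1) ∣ ∑ k ∈ range n,
            ((2 * n).choose k : ℤ) * ((2 * n - k).choose k : ℤ) * a ^ k * b ^ (2 * n - 2 * k) :=
          Finset.dvd_sum (hterm e he)
        have hNa : b^(e+1) ∣ (N:ℤ) * a^n := by
          have h' := dvd_sub hS1 hsum
          rwa [hsplit, add_sub_cancel_left] at h'
        exact (hcop.symm.pow).dvd_of_dvd_mul_right hNa
    · intro he
      rw [hsplit]
      exact dvd_add
        (Finset.dvd_sum fun k hk =>
          dvd_trans (pow_dvd_pow b (Nat.le_succ e)) (hterm e he k hk))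
        (he.mul_right _)
  have hbound : ∀ e : ℕ, b^e ∣ (N:ℤ) → e ≤ N := by
    intro e he
    have h' : b.natAbs ^ e ∣ N := (natdvd b e N).mp he
    have h1 : b.natAbs ^ e ≤ N := Nat.le_of_dvd hNpos h'
    have h2 : 2^e ≤ b.natAbs^e := Nat.pow_le_pow_left hβ e
    have h3 : e < 2^e := Nat.lt_two_pow_self (n := e)
    omega
  set P : ℕ → Prop := fun e => b^e ∣ (N:ℤ) with hP
  set E := Nat.findGreatest P N with hE
  have hE1 : P E := Nat.findGreatest_spec (m := 0) (Nat.zero_le N) (by simp [hP])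
  have hE2 : ∀ e, P e → e ≤ E := fun e h => Nat.le_findGreatest (hbound e h) h
  refine ⟨?_, E, ⟨?_, ?_⟩, ⟨?_, ?_⟩⟩
  · intro h
    have hp : P (N+1) := (hiff (N+1)).mp (by rw [h]; exact dvd_zero _)
    have h' := hE2 _ hp
    have h'' : E ≤ N := Nat.findGreatest_le N
    omega
  · exact (hiff E).mpr hE1
  · intro x hx
    exact hE2 x ((hiff x).mp hx)
  · exact hE1
  · intro x hx
    exact hE2 x hx
end

section
/- Let n be a natural number and let a, b be integers with gcd(a,b) = 1, b ≠ 0, and b ≠ ±1. Define the generalized central trinomial coefficient T_{2n+1}(a,b) = ∑_{k=0}^{n} C(2n+1,k) · C(2n+1-k,k) · a^k · b^{2n+1-2k}. Then T_{2n+1}(a,b) ≠ 0, and the largest natural number e such that b^e divides T_{2n+1}(a,b) is equal to 1 plus the largest natural number e such that b^e divides the integer (2n+1)·C(2n,n). -/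
open Nat Finset

lemma key_id (k m : ℕ) :
    ((2*(k+m)+1).choose (k+m) * ((k+m)+1).choose (k+m)) * ((k+m).choose m)^2
      = ((2*(k+m)+1).choose k * (k+2*m+1).choose k) * ((2*m+1) * (2*m).choose m) := by
  have hQ : (((2*(k+m)+1).choose (k+m) * ((k+m)+1).choose (k+m)) * ((k+m).choose m)^2 : ℚ)
      = (((2*(k+m)+1).choose k * (k+2*m+1).choose k) * ((2*m+1) * (2*m).choose m) : ℚ) := by
    have c1 : (((2*(k+m)+1).choose (k+m) : ℕ) : ℚ)
        = (2*(k+m)+1) ! / ((k+m) ! * (k+m+1) !) := by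
      rw [Nat.cast_choose ℚ (by omega), show 2*(k+m)+1-(k+m) = k+m+1 by omega]
    have c2 : ((((k+m)+1).choose (k+m) : ℕ) : ℚ) = (k+m+1) ! / ((k+m) ! * 1 !) := by
      rw [Nat.cast_choose ℚ (by omega), show k+m+1-(k+m) = 1 by omega]
    have c3 : (((k+m).choose m : ℕ) : ℚ) = (k+m) ! / (m ! * k !) := by
      rw [Nat.cast_choose ℚ (by omega), show k+m-m = k by omega]
    have c4 : (((2*(k+m)+1).choose k : ℕ) : ℚ) = (2*(k+m)+1) ! / (k ! * (k+2*m+1) !) := by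
      rw [Nat.cast_choose ℚ (by omega), show 2*(k+m)+1-k = k+2*m+1 by omega]
    have c5 : (((k+2*m+1).choose k : ℕ) : ℚ) = (k+2*m+1) ! / (k ! * (2*m+1) !) := by
      rw [Nat.cast_choose ℚ (by omega), show k+2*m+1-k = 2*m+1 by omega]
    have c6 : (((2*m).choose m : ℕ) : ℚ) = (2*m) ! / (m ! * m !) := by
      rw [Nat.cast_choose ℚ (by omega), show 2*m-m = m by omega]
    have f1 : ((2*m+1) ! : ℚ) = (2*m+1) * (2*m) ! := by
      rw [show (2*m+1) = (2*m)+1 from rfl, Nat.factorial_succ]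
      push_cast
      ring
    rw [c1, c2, c3, c4, c5, c6, f1]
    have h1 : ((2*(k+m)+1) ! : ℚ) ≠ 0 := by positivity
    have h2 : ((k+m) ! : ℚ) ≠ 0 := by positivity
    have h3 : ((k+m+1) ! : ℚ) ≠ 0 := by positivity
    have h4 : (m ! : ℚ) ≠ 0 := by positivity
    have h5 : (k ! : ℚ) ≠ 0 := by positivity
    have h6 : ((k+2*m+1) ! : ℚ) ≠ 0 := by positivity
    have h7 : ((2*m) ! : ℚ) ≠ 0 := by positivity
    have h8 : ((1:ℕ) ! : ℚ) ≠ 0 := by positivity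
    have h9 : ((2*m+1:ℚ)) ≠ 0 := by positivity
    field_simp
    ring
  exact_mod_cast hQ

lemma three_pow (M : ℕ) (h : 2 ≤ M) : 2*M+1 < 3^M := by
  induction M with
  | zero => omega
  | succ j ih =>
    rcases Nat.lt_or_ge j 2 with hj | hj
    · interval_cases j
      · omega
      · norm_num
    · have h1 := ih hj
      have h2 : (3:ℕ)^(j+1) = 3 * 3^j := by ring
      omega

lemma six_fact (p : ℕ) (hp : p.Prime) : (6 : ℕ).factorization p ≤ 1 := by
  by_contra hcon
  push_neg at hcon
  have hd : p ^ 2 ∣ 6 :=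
    (pow_dvd_pow _ hcon).trans (Nat.ordProj_dvd 6 p)
  have hle : p ^ 2 ≤ 6 := Nat.le_of_dvd (by norm_num) hd
  have hp2 : p = 2 := by nlinarith [hp.two_le]
  subst hp2
  omega

-- v_p((2M+1) * C(2M,M)) ≤ 2M-1 for M = m+1 ≥ 1
lemma val_bound (m p : ℕ) (hp : p.Prime) :
    ((2*(m+1)+1) * (2*(m+1)).choose (m+1)).factorization p ≤ 2*m+1 := by
  rcases Nat.eq_zero_or_pos m with rfl | hm
  · have : (2*(0+1)+1) * (2*(0+1)).choose (0+1) = 6 := by norm_num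
    rw [this]
    exact six_fact p hp
  set M := m + 1 with hM
  have hodd : (2*M+1) ≠ 0 := by omega
  have hC : (2*M).choose M ≠ 0 := (Nat.choose_pos (by omega)).ne'
  rw [Nat.factorization_mul hodd hC]
  simp only [Finsupp.add_apply]
  have hCb : ((2*M).choose M).factorization p ≤ Nat.log p (2*M) :=
    Nat.factorization_choose_le_log
  have hOb : (2*M+1).factorization p ≤ Nat.log p (2*M+1) := by
    have hd : p ^ ((2*M+1).factorization p) ∣ 2*M+1 := Nat.ordProj_dvd _ _
    exact (Nat.le_log_iff_pow_le hp.one_lt hodd).mpr (Nat.le_of_dvd (by omega) hd)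
  rcases eq_or_ne p 2 with rfl | hp2
  · have h2 : (2*M+1).factorization 2 = 0 :=
      Nat.factorization_eq_zero_of_not_dvd (by omega)
    have : Nat.log 2 (2*M) < 2*M := by
      rw [Nat.log_lt_iff_lt_pow one_lt_two (by omega)]
      exact Nat.lt_two_pow_self
    omega
  · have hp3 : 3 ≤ p := by
      have := hp.two_le
      omega
    have hpow : 2*M+1 < p ^ M :=
      lt_of_lt_of_le (three_pow M (by omega)) (Nat.pow_le_pow_left hp3 M)
    have hlog : Nat.log p (2*M+1) < M := Nat.log_lt_of_lt_pow (by omega) hpow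
    have hlog2 : Nat.log p (2*M) ≤ Nat.log p (2*M+1) :=
      Nat.log_mono_right (by omega)
    omega

lemma dvd_step (B E k m : ℕ) (hB : B ≠ 0)
    (hE : B ^ E ∣ (2*(k+(m+1))+1).choose (k+(m+1)) * ((k+(m+1))+1).choose (k+(m+1))) :
    B ^ (E+1) ∣ ((2*(k+(m+1))+1).choose k * (k+2*(m+1)+1).choose k) * B ^ (2*(m+1)) := by
  have hdn : (2*(k+(m+1))+1).choose (k+(m+1)) * ((k+(m+1))+1).choose (k+(m+1)) ≠ 0 :=
    mul_ne_zero (Nat.choose_pos (by omega)).ne' (Nat.choose_pos (by omega)).ne'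
  have hdk : (2*(k+(m+1))+1).choose k * (k+2*(m+1)+1).choose k ≠ 0 :=
    mul_ne_zero (Nat.choose_pos (by omega)).ne' (Nat.choose_pos (by omega)).ne'
  have hcnm : (k+(m+1)).choose (m+1) ≠ 0 := (Nat.choose_pos (by omega)).ne'
  have hprod : ((2*(m+1)+1) * (2*(m+1)).choose (m+1)) ≠ 0 :=
    mul_ne_zero (by omega) (Nat.choose_pos (by omega)).ne'
  rw [← Nat.factorization_le_iff_dvd (pow_ne_zero _ hB)
    (mul_ne_zero hdk (pow_ne_zero _ hB))]
  have hEf := (Nat.factorization_le_iff_dvd (pow_ne_zero _ hB) hdn).mpr hE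
  intro p
  rcases em p.Prime with hp | hp
  · have hid := congrArg (fun x => x.factorization p) (key_id k (m+1))
    simp only [Nat.factorization_mul hdn (pow_ne_zero _ hcnm),
      Nat.factorization_mul hdk hprod, Nat.factorization_pow,
      Finsupp.add_apply, Finsupp.coe_smul, Pi.smul_apply, smul_eq_mul] at hid
    have hvb := val_bound m p hp
    have hEp : E * B.factorization p
        ≤ ((2*(k+(m+1))+1).choose (k+(m+1)) * ((k+(m+1))+1).choose (k+(m+1))).factorization p := by
      have := hEf p
      simpa [Nat.factorization_pow] using this
    have hBp := B.factorization p
    simp only [Nat.factorization_mul hdk (pow_ne_zero _ hB), Nat.factorization_pow,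
      Finsupp.add_apply, Finsupp.coe_smul, Pi.smul_apply, smul_eq_mul]
    rcases Nat.eq_zero_or_pos (B.factorization p) with h0 | h0
    · simp [h0]
    · nlinarith [hid, hvb, hEp, h0]
  · simp [Nat.factorization_eq_zero_of_not_prime _ hp]

/-- Theorem 5, Eq. (28.2): for coprime `a b` with `b ∉ {0, 1, -1}`, the generalized
central trinomial coefficient
`T_{2n+1}(a,b) = ∑_{k=0}^{n} C(2n+1,k) C(2n+1-k,k) a^k b^{2n+1-2k}` is nonzero, and the
largest power of `b` dividing it equals `1` plus the largest power of `b` dividing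
`(2n+1)·C(2n,n)`. -/
theorem stmt_12 (n : ℕ) (a b : ℤ) (hab : Int.gcd a b = 1)
    (h0 : b ≠ 0) (h1 : b ≠ 1) (h2 : b ≠ -1) :
    (∑ k ∈ range (n + 1),
      ((2 * n + 1).choose k : ℤ) * ((2 * n + 1 - k).choose k : ℤ) * a ^ k *
        b ^ (2 * n + 1 - 2 * k)) ≠ 0 ∧
    ∃ E : ℕ,
      IsGreatest {e : ℕ | b ^ e ∣ ((2 * n + 1 : ℕ) * (2 * n).choose n : ℤ)} E ∧
      IsGreatest {e : ℕ | b ^ e ∣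
        ∑ k ∈ range (n + 1),
          ((2 * n + 1).choose k : ℤ) * ((2 * n + 1 - k).choose k : ℤ) * a ^ k *
            b ^ (2 * n + 1 - 2 * k)} (1 + E) := by
  set B := b.natAbs with hBdef
  have hB2 : 2 ≤ B := by omega
  have hB0 : B ≠ 0 := by omega
  set D : ℕ := (2 * n + 1) * (2 * n).choose n with hDdef
  have hD0 : D ≠ 0 := mul_ne_zero (by omega) (Nat.choose_pos (by omega)).ne'
  -- translation between ℤ and ℕ divisibility
  have htr : ∀ (e : ℕ) (N : ℕ), (b ^ e ∣ (N : ℤ)) ↔ B ^ e ∣ N := by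
    intro e N
    rw [← Int.natAbs_dvd_natAbs, Int.natAbs_pow, Int.natAbs_natCast]
  -- D equals the k = n coefficient
  have hDn : (2 * n + 1).choose n * (n + 1).choose n = D := by
    rw [Nat.choose_succ_self_right]
    rw [hDdef, Nat.add_one_mul_choose_eq]
    congr 1
    rw [← Nat.choose_symm (show n ≤ 2*n+1 by omega), show 2*n+1-n = n+1 by omega]
  -- the greatest exponent E
  set E : ℕ := Nat.findGreatest (fun e => B ^ e ∣ D) D with hEdef
  have hbound : ∀ e : ℕ, B ^ e ∣ D → e ≤ D := by
    intro e he
    have h1' : B ^ e ≤ D := Nat.le_of_dvd (by omega) he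
    have h2' : 2 ^ e ≤ B ^ e := Nat.pow_le_pow_left hB2 e
    have h3' : e < 2 ^ e := Nat.lt_two_pow_self
    omega
  have hE0 : B ^ E ∣ D := Nat.findGreatest_spec (P := fun e => B ^ e ∣ D) (Nat.zero_le D) (by simp)
  have hEub : ∀ e : ℕ, B ^ e ∣ D → e ≤ E := fun e he =>
    Nat.le_findGreatest (hbound e he) he
  have hE0' : B ^ E ∣ (2 * n + 1).choose n * (n + 1).choose n := hDn ▸ hE0
  -- key divisibility for terms with k < n
  have hterm : ∀ k, k < n →
      ((2 * n + 1).choose k : ℤ) * ((2 * n + 1 - k).choose k : ℤ) * a ^ k *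
        b ^ (2 * n + 1 - 2 * k)
      = (((2 * n + 1).choose k * (2 * n + 1 - k).choose k : ℕ) : ℤ)
          * b ^ (2 * (n - k - 1 + 1)) * (a ^ k * b) ∧
      b ^ (E + 1) ∣ (((2 * n + 1).choose k * (2 * n + 1 - k).choose k : ℕ) : ℤ)
          * b ^ (2 * (n - k - 1 + 1)) := by
    intro k hk
    set m : ℕ := n - k - 1 with hmdef
    have hn : n = k + (m + 1) := by omega
    constructor
    · rw [show 2 * n + 1 - 2 * k = 2 * (m + 1) + 1 by omega]
      push_cast
      ring
    · have hstep := dvd_step B E k m hB0 (by rw [show k + (m+1) = n by omega]; exact hE0')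
      have hEZ : b ^ (E + 1) ∣
          (((2*(k+(m+1))+1).choose k * (k+2*(m+1)+1).choose k : ℕ) : ℤ) * b ^ (2*(m+1)) := by
        rw [← Int.natAbs_dvd_natAbs, Int.natAbs_mul, Int.natAbs_pow, Int.natAbs_pow,
          Int.natAbs_natCast]
        exact hstep
      have heq : (2*(k+(m+1))+1).choose k * (k+2*(m+1)+1).choose k
          = (2 * n + 1).choose k * (2 * n + 1 - k).choose k := by
        rw [show 2*(k+(m+1))+1 = 2*n+1 by omega, show k+2*(m+1)+1 = 2*n+1-k by omega]
      rw [heq] at hEZ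
      exact hEZ
  -- the last term
  have hlast : ((2 * n + 1).choose n : ℤ) * ((2 * n + 1 - n).choose n : ℤ) * a ^ n *
      b ^ (2 * n + 1 - 2 * n) = (D : ℤ) * a ^ n * b := by
    rw [show 2 * n + 1 - n = n + 1 by omega, show 2 * n + 1 - 2 * n = 1 by omega]
    rw [← hDn]
    push_cast
    ring
  have hbE : b ^ E ∣ (D : ℤ) := (htr E D).mpr hE0
  -- Part A : b ^ (1 + E) divides the sum
  have hA : b ^ (1 + E) ∣ ∑ k ∈ range (n + 1),
      ((2 * n + 1).choose k : ℤ) * ((2 * n + 1 - k).choose k : ℤ) * a ^ k *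
        b ^ (2 * n + 1 - 2 * k) := by
    apply Finset.dvd_sum
    intro k hk
    rw [Finset.mem_range] at hk
    rcases eq_or_lt_of_le (Nat.lt_succ_iff.mp hk) with rfl | hlt
    · rw [hlast, show (1 + E) = E + 1 by omega, pow_succ]
      exact mul_dvd_mul (hbE.mul_right _) dvd_rfl
    · obtain ⟨he, hd⟩ := hterm k hlt
      rw [he, show (1 + E) = E + 1 by omega]
      exact hd.mul_right _
  -- Part B : b ^ (E + 2) does not divide the sum
  have hBnd : ¬ b ^ (E + 2) ∣ ∑ k ∈ range (n + 1),
      ((2 * n + 1).choose k : ℤ) * ((2 * n + 1 - k).choose k : ℤ) * a ^ k *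
        b ^ (2 * n + 1 - 2 * k) := by
    intro hdvd
    rw [Finset.sum_range_succ, hlast] at hdvd
    have hS : b ^ (E + 2) ∣ ∑ k ∈ range n,
        ((2 * n + 1).choose k : ℤ) * ((2 * n + 1 - k).choose k : ℤ) * a ^ k *
          b ^ (2 * n + 1 - 2 * k) := by
      apply Finset.dvd_sum
      intro k hk
      rw [Finset.mem_range] at hk
      obtain ⟨he, hd⟩ := hterm k hk
      rw [he, pow_succ]
      exact mul_dvd_mul hd (dvd_mul_left b _)
    have hlastdvd : b ^ (E + 2) ∣ (D : ℤ) * a ^ n * b := (dvd_add_right hS).mp hdvd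
    have hcan : b ^ (E + 1) ∣ (D : ℤ) * a ^ n := by
      have : b ^ (E + 1) * b ∣ ((D : ℤ) * a ^ n) * b := by
        rw [← pow_succ]
        exact hlastdvd
      exact (mul_dvd_mul_iff_right h0).mp this
    have hco : IsCoprime (b ^ (E + 1)) (a ^ n) :=
      ((Int.isCoprime_iff_gcd_eq_one.mpr hab).symm).pow
    have hdD : b ^ (E + 1) ∣ (D : ℤ) := hco.dvd_of_dvd_mul_right hcan
    have : E + 1 ≤ E := hEub (E + 1) ((htr (E + 1) D).mp hdD)
    omega
  refine ⟨?_, E, ⟨(htr E D).mpr hE0, fun e he => hEub e ((htr e D).mp he)⟩,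
    hA, fun e he => ?_⟩
  · intro hzero
    exact hBnd (hzero ▸ dvd_zero _)
  · by_contra hgt
    push_neg at hgt
    exact hBnd ((pow_dvd_pow b (show E + 2 ≤ e by omega)).trans he)
end
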